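/- arXiv:math/0111036 — 7 statements merged into one kernel-verified Lean document; each statement's English description precedes it below -/
import Mathlib

section
/- Lemma 3.1. Assume condition (a). Then there exists a positive constant c_1 such that x ≤ G(G^{-1}(x)) ≤ x/c_1 for all x ∈ (0,1). Moreover, G(G^{-1}(x)) ~ x as x → 0 (i.e., G(G^{-1}(x))/x → 1). -/
open MeasureTheory Filter Set

/-- The left-continuous inverse `G⁻¹(x) = sup{y : G(y) < x}`. -/
noncomputable def leftInv (G : ℝ → ℝ) (x : ℝ) : ℝ := sSup {y | G y < x}

/-- Lemma 3.1: if `G` is the distribution function of a strictly positive random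
variable and satisfies condition (a), then there is a constant `c₁ > 0` with
`x ≤ G(G⁻¹(x)) ≤ x/c₁` for all `x ∈ (0,1)`, and moreover `G(G⁻¹(x)) ~ x` as `x → 0⁺`. -/
theorem G_of_Ginv_bounds
    (μ : Measure ℝ) [IsProbabilityMeasure μ]
    (G : ℝ → ℝ) (hG : ∀ x, G x = (μ (Set.Iic x)).toReal)
    (hpos : μ (Set.Iic 0) = 0)
    -- condition (a): G(x) ~ G(y) whenever x, y → 0 with x ~ y
    (condA : ∀ x y : ℕ → ℝ, (∀ k, 0 < x k) → (∀ k, 0 < y k) →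
      Tendsto x atTop (nhds 0) → Tendsto y atTop (nhds 0) →
      Tendsto (fun k => x k / y k) atTop (nhds 1) →
      Tendsto (fun k => G (x k) / G (y k)) atTop (nhds 1)) :
    (∃ c₁ > (0:ℝ), ∀ x ∈ Set.Ioo (0:ℝ) 1,
        x ≤ G (leftInv G x) ∧ G (leftInv G x) ≤ x / c₁) ∧
    Tendsto (fun x => G (leftInv G x) / x) (nhdsWithin 0 (Set.Ioi 0)) (nhds 1) := by
  classical
  have hfe : G = fun x => ProbabilityTheory.cdf μ x := by
    funext x; rw [hG, ProbabilityTheory.cdf_eq_real, measureReal_def]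
  have hmono : Monotone G := by rw [hfe]; exact fun a b hab => (ProbabilityTheory.cdf μ).mono hab
  have hrc : ∀ a : ℝ, ContinuousWithinAt G (Ici a) a := by
    rw [hfe]; exact fun a => (ProbabilityTheory.cdf μ).right_continuous a
  have htop : Tendsto G atTop (nhds 1) := by
    rw [hfe]; exact ProbabilityTheory.tendsto_cdf_atTop μ
  have hG0 : G 0 = 0 := by rw [hG, hpos]; simp
  have hGnn : ∀ x, 0 ≤ G x := fun x => by rw [hG]; positivity
  have hGle1 : ∀ x, G x ≤ 1 := by
    intro x
    rw [hG]
    have h1 : μ (Iic x) ≤ μ univ := measure_mono (subset_univ _)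
    have h2 : μ univ = 1 := measure_univ
    calc (μ (Iic x)).toReal ≤ (μ univ).toReal :=
          ENNReal.toReal_mono (by rw [h2]; exact ENNReal.one_ne_top) h1
      _ = 1 := by rw [h2]; simp
  -- G is strictly positive on (0, ∞), thanks to condition (a)
  have hGpos : ∀ t : ℝ, 0 < t → 0 < G t := by
    intro t ht
    by_contra h
    push_neg at h
    have hGt : G t = 0 := le_antisymm h (hGnn t)
    set w : ℕ → ℝ := fun k => t * (1 / ((k : ℝ) + 1)) with hw
    have hwpos : ∀ k, 0 < w k := fun k => by rw [hw]; positivity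
    have hwle : ∀ k, w k ≤ t := by
      intro k
      rw [hw]
      have h1 : (1 : ℝ) / ((k : ℝ) + 1) ≤ 1 := by
        rw [div_le_one (by positivity)]; linarith [Nat.cast_nonneg (α := ℝ) k]
      nlinarith
    have hwz : ∀ k, G (w k) = 0 :=
      fun k => le_antisymm ((hmono (hwle k)).trans hGt.le) (hGnn _)
    have hw0 : Tendsto w atTop (nhds 0) := by
      have h1 : Tendsto (fun k : ℕ => (1 : ℝ) / ((k : ℝ) + 1)) atTop (nhds 0) :=
        tendsto_one_div_add_atTop_nhds_zero_nat
      have := h1.const_mul t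
      simpa [hw] using this
    have hratio : Tendsto (fun k => w k / w k) atTop (nhds 1) := by
      have : (fun k => w k / w k) = fun _ => (1 : ℝ) :=
        funext fun k => div_self (hwpos k).ne'
      rw [this]; exact tendsto_const_nhds
    have hr := condA w w hwpos hwpos hw0 hw0 hratio
    have hzero : (fun k => G (w k) / G (w k)) = fun _ => (0 : ℝ) :=
      funext fun k => by rw [hwz k]; simp
    rw [hzero] at hr
    exact one_ne_zero (tendsto_nhds_unique hr tendsto_const_nhds)
  -- basic facts about the set {y | G y < x}
  have hne : ∀ x : ℝ, 0 < x → {y | G y < x}.Nonempty :=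
    fun x hx => ⟨0, by simpa [hG0] using hx⟩
  have hbdd : ∀ x : ℝ, x < 1 → BddAbove {y | G y < x} := by
    intro x hx1
    obtain ⟨t, ht⟩ := (htop.eventually (eventually_gt_nhds hx1)).exists
    refine ⟨t, fun y hy => ?_⟩
    by_contra hc
    push_neg at hc
    exact absurd (ht.trans_le (hmono hc.le)) (not_lt.2 hy.le)
  have hlt_mem : ∀ x : ℝ, 0 < x → ∀ y, y < leftInv G x → G y < x := by
    intro x hx y hy
    obtain ⟨z, hz, hyz⟩ := exists_lt_of_lt_csSup (hne x hx) hy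
    exact lt_of_le_of_lt (hmono hyz.le) hz
  have hxle : ∀ x : ℝ, 0 < x → x < 1 → x ≤ G (leftInv G x) := by
    intro x hx hx1
    set s := leftInv G x with hs
    have hev : ∀ᶠ y in nhdsWithin s (Ioi s), x ≤ G y := by
      filter_upwards [eventually_mem_nhdsWithin] with y hy
      by_contra hc
      push_neg at hc
      exact absurd (le_csSup (hbdd x hx1) hc) (not_le.2 hy)
    have ht : Tendsto G (nhdsWithin s (Ioi s)) (nhds (G s)) :=
      (hrc s).mono_left (nhdsWithin_mono s Ioi_subset_Ici_self)
    exact ge_of_tendsto ht hev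
  have hspos : ∀ x : ℝ, 0 < x → x < 1 → 0 < leftInv G x := by
    intro x hx hx1
    have h0 : Tendsto G (nhdsWithin 0 (Ioi 0)) (nhds 0) := by
      have := (hrc 0).mono_left (nhdsWithin_mono 0 Ioi_subset_Ici_self)
      rwa [hG0] at this
    obtain ⟨y, hylt, hy0⟩ :=
      ((h0.eventually (eventually_lt_nhds hx)).and eventually_mem_nhdsWithin).exists
    exact lt_of_lt_of_le hy0 (le_csSup (hbdd x hx1) hylt)
  have hsle : ∀ x t : ℝ, 0 < x → x ≤ G t → leftInv G x ≤ t := by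
    intro x t hx hxt
    refine csSup_le (hne x hx) fun y hy => ?_
    by_contra hc
    push_neg at hc
    exact (hxt.trans (hmono hc.le)).not_gt hy
  -- main asymptotic statement
  have key : Tendsto (fun x => G (leftInv G x) / x) (nhdsWithin 0 (Set.Ioi 0)) (nhds 1) := by
    rw [tendsto_iff_seq_tendsto]
    intro u hu
    have hu0 : Tendsto u atTop (nhds 0) := hu.mono_right nhdsWithin_le_nhds
    have hugood : ∀ᶠ k in atTop, 0 < u k ∧ u k < 1 := by
      filter_upwards [hu.eventually eventually_mem_nhdsWithin,
        hu0.eventually (eventually_lt_nhds one_pos)] with k h1 h2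
      exact ⟨h1, h2⟩
    set s' : ℕ → ℝ := fun k => if h : 0 < u k ∧ u k < 1 then leftInv G (u k)
      else 1 / ((k : ℝ) + 1) with hs'
    have hs'pos : ∀ k, 0 < s' k := by
      intro k
      rw [hs']
      dsimp only
      split
      · exact hspos _ (by assumption : 0 < u k ∧ u k < 1).1
          (by assumption : 0 < u k ∧ u k < 1).2
      · positivity
    have hs'eq : ∀ᶠ k in atTop, s' k = leftInv G (u k) := by
      filter_upwards [hugood] with k hk
      rw [hs']; simp [hk]
    have hs'0 : Tendsto s' atTop (nhds 0) := by
      rw [tendsto_order]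
      constructor
      · intro a ha
        filter_upwards with k
        exact ha.trans (hs'pos k)
      · intro b hb
        have h1 : ∀ᶠ k in atTop, u k < G (b / 2) :=
          hu0.eventually (eventually_lt_nhds (hGpos _ (half_pos hb)))
        filter_upwards [hugood, h1] with k hk hk1
        rw [hs']
        dsimp only
        rw [dif_pos hk]
        exact lt_of_le_of_lt (hsle _ _ hk.1 hk1.le) (half_lt_self hb)
    have hcoef : ∀ k : ℕ, 0 < 1 - 1 / ((k : ℝ) + 2) := by
      intro k
      have hk2 : (0 : ℝ) < (k : ℝ) + 2 := by positivity
      rw [sub_pos, div_lt_one hk2]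
      linarith [Nat.cast_nonneg (α := ℝ) k]
    set y : ℕ → ℝ := fun k => s' k * (1 - 1 / ((k : ℝ) + 2)) with hy
    have hypos : ∀ k, 0 < y k := fun k => mul_pos (hs'pos k) (hcoef k)
    have hylts : ∀ k, y k < s' k := by
      intro k
      rw [hy]
      dsimp only
      have h1 : 1 - 1 / ((k : ℝ) + 2) < 1 := by
        have : (0:ℝ) < 1 / ((k : ℝ) + 2) := by positivity
        linarith
      exact mul_lt_of_lt_one_right (hs'pos k) h1
    have hcoeft : Tendsto (fun k : ℕ => 1 - 1 / ((k : ℝ) + 2)) atTop (nhds 1) := by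
      have h1 : Tendsto (fun k : ℕ => ((k : ℝ) + 2)) atTop atTop :=
        tendsto_atTop_add_const_right _ 2 tendsto_natCast_atTop_atTop
      have h2 : Tendsto (fun k : ℕ => 1 / ((k : ℝ) + 2)) atTop (nhds 0) := by
        simpa [one_div, Pi.inv_def] using h1.inv_tendsto_atTop
      have h3 := (tendsto_const_nhds (x := (1:ℝ)) (f := atTop (α := ℕ))).sub h2
      simpa using h3
    have hy0 : Tendsto y atTop (nhds 0) := by
      have := hs'0.mul hcoeft
      simpa [hy] using this
    have hratio : Tendsto (fun k => s' k / y k) atTop (nhds 1) := by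
      have heq : (fun k => s' k / y k) = fun k : ℕ => (1 - 1 / ((k : ℝ) + 2))⁻¹ := by
        funext k
        rw [hy]
        dsimp only
        rw [div_mul_eq_div_div, div_self (hs'pos k).ne', one_div]
      rw [heq]
      have := hcoeft.inv₀ one_ne_zero
      simpa using this
    have hr := condA s' y hs'pos hypos hs'0 hy0 hratio
    refine tendsto_of_tendsto_of_tendsto_of_le_of_le' tendsto_const_nhds hr ?_ ?_
    · filter_upwards [hugood] with k hk
      exact (one_le_div hk.1).2 (hxle _ hk.1 hk.2)
    · filter_upwards [hugood, hs'eq] with k hk hkeq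
      show G (leftInv G (u k)) / u k ≤ G (s' k) / G (y k)
      rw [hkeq]
      have hylt2 : y k < leftInv G (u k) := by rw [← hkeq]; exact hylts k
      have hGyk : G (y k) < u k := hlt_mem _ hk.1 _ hylt2
      exact div_le_div_of_nonneg_left (hGnn _) (hGpos _ (hypos k)) hGyk.le
  -- extract the constant from the asymptotics
  have h2 : ∀ᶠ x in nhdsWithin 0 (Set.Ioi 0), G (leftInv G x) / x < 2 :=
    key.eventually (eventually_lt_nhds one_lt_two)
  obtain ⟨δ, hδ0, hδ⟩ : ∃ δ > (0:ℝ), ∀ x ∈ Ioc (0:ℝ) δ, G (leftInv G x) / x < 2 := by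
    rcases mem_nhdsGT_iff_exists_Ioc_subset.1 h2 with ⟨δ, hδmem, hsub⟩
    exact ⟨δ, hδmem, fun x hx => hsub hx⟩
  refine ⟨⟨min (1/2) δ, lt_min (by norm_num) hδ0, ?_⟩, key⟩
  intro x hx
  refine ⟨hxle x hx.1 hx.2, ?_⟩
  have hc0 : (0:ℝ) < min (1/2) δ := lt_min (by norm_num) hδ0
  by_cases hxd : x ≤ δ
  · have hlt := hδ x ⟨hx.1, hxd⟩
    rw [div_lt_iff₀ hx.1] at hlt
    calc G (leftInv G x) ≤ 2 * x := hlt.le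
      _ = x / (1/2) := by ring
      _ ≤ x / min (1/2) δ :=
          div_le_div_of_nonneg_left hx.1.le hc0 (min_le_left _ _)
  · push_neg at hxd
    have h1 : (1:ℝ) ≤ x / min (1/2) δ :=
      (one_le_div hc0).2 ((min_le_right _ _).trans hxd.le)
    linarith [hGle1 (leftInv G x)]
end

section
/- Lemma 3.2. Let c_1 ∈ (0,1] be a constant such that G(G^{-1}(x)) ≤ x/c_1 for all x ∈ (0,1) and G(G^{-1}(x)) ≥ x for all x ∈ (0,1). Then for every η ∈ (0,1) and every j with 2 ≤ j ≤ n, P( G(q_1) > η·G(q_j) ) ≤ (1 − c_1·η)^{j−1}. -/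
open MeasureTheory ProbabilityTheory Filter Set
open scoped ENNReal

namespace OrderStatAux

variable {N : ℕ}

open Classical in
noncomputable def rankAt (x : Fin N → ℝ) (k : Fin N) : ℕ :=
  (Finset.univ.filter fun i => x i < x k ∨ (x i = x k ∧ i < k)).card

lemma lex_sort_iff (x : Fin N → ℝ) (a b : Fin N) :
    (x (Tuple.sort x a) < x (Tuple.sort x b) ∨
      (x (Tuple.sort x a) = x (Tuple.sort x b) ∧ Tuple.sort x a < Tuple.sort x b)) ↔ a < b := by
  have hmono := Tuple.monotone_sort x
  have htie := ((Tuple.eq_sort_iff (f := x) (σ := Tuple.sort x)).mp rfl).2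
  constructor
  · intro h
    by_contra hab
    push_neg at hab
    rcases eq_or_lt_of_le hab with heq | hba
    · subst heq
      rcases h with h | ⟨_, h⟩ <;> exact absurd h (lt_irrefl _)
    · have h1 : x (Tuple.sort x b) ≤ x (Tuple.sort x a) := hmono hba.le
      rcases h with h | ⟨he, hlt⟩
      · exact absurd h (not_lt.mpr h1)
      · exact absurd hlt (not_lt.mpr (htie b a hba he.symm).le)
  · intro hab
    rcases eq_or_lt_of_le (hmono hab.le : x (Tuple.sort x a) ≤ x (Tuple.sort x b)) with he | hlt
    · exact Or.inr ⟨he, htie a b hab he⟩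
    · exact Or.inl hlt

open Classical in
lemma rank_sort (x : Fin N → ℝ) (a : Fin N) : rankAt x (Tuple.sort x a) = a := by
  rw [rankAt]
  have hfil : (Finset.univ.filter fun i =>
      x i < x (Tuple.sort x a) ∨ (x i = x (Tuple.sort x a) ∧ i < Tuple.sort x a))
      = (Finset.Iio a).image (Tuple.sort x) := by
    ext i
    simp only [Finset.mem_filter, Finset.mem_univ, true_and, Finset.mem_image, Finset.mem_Iio]
    constructor
    · intro h
      refine ⟨(Tuple.sort x).symm i, ?_, by simp⟩
      have hi : i = Tuple.sort x ((Tuple.sort x).symm i) := by simp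
      rw [← lex_sort_iff x ((Tuple.sort x).symm i) a]
      rw [← hi]
      exact h
    · rintro ⟨b, hb, rfl⟩
      exact (lex_sort_iff x b a).mpr hb
  rw [hfil, Finset.card_image_of_injective _ (Tuple.sort x).injective, Fin.card_Iio]

open Classical in
lemma rank_eq_iff (x : Fin N → ℝ) (k : Fin N) (a : Fin N) :
    rankAt x k = (a : ℕ) ↔ k = Tuple.sort x a := by
  constructor
  · intro h
    have hk : k = Tuple.sort x ((Tuple.sort x).symm k) := by simp
    rw [hk] at h
    rw [rank_sort] at h
    rw [hk]
    congr 1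
    exact Fin.ext h
  · rintro rfl
    exact rank_sort x a

open Classical in
lemma measurable_rankAt (k : Fin N) : Measurable fun x : Fin N → ℝ => rankAt x k := by
  have h : (fun x : Fin N → ℝ => rankAt x k)
      = fun x => ∑ i : Fin N, if x i < x k ∨ (x i = x k ∧ i < k) then 1 else 0 := by
    funext x
    rw [rankAt, Finset.card_filter]
  rw [h]
  refine Finset.measurable_sum _ fun i _ => Measurable.ite ?_ measurable_const measurable_const
  refine MeasurableSet.union (measurableSet_lt (measurable_pi_apply i) (measurable_pi_apply k)) ?_
  show MeasurableSet {x : Fin N → ℝ | x i = x k ∧ i < k}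
  by_cases hik : i < k
  · have he : {x : Fin N → ℝ | x i = x k ∧ i < k} = {x : Fin N → ℝ | x i = x k} := by
      ext x; simp [hik]
    rw [he]
    exact measurableSet_eq_fun (f := fun x : Fin N → ℝ => x i) (g := fun x : Fin N → ℝ => x k)
      (measurable_pi_apply i) (measurable_pi_apply k)
  · have he : {x : Fin N → ℝ | x i = x k ∧ i < k} = (∅ : Set (Fin N → ℝ)) := by
      ext x; simp [hik]
    rw [he]
    exact MeasurableSet.empty


open Classical in
lemma rankAt_eq_card {m : ℕ} (x : Fin (m + 1) → ℝ) (k : Fin (m + 1)) :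
    rankAt x k = (Finset.univ.filter fun i : Fin m =>
      x (k.succAbove i) ∈ (if k.succAbove i < k then Iic (x k) else Iio (x k))).card := by
  rw [rankAt, Finset.card_filter, Finset.card_filter,
    Fin.sum_univ_succAbove (fun i => if x i < x k ∨ (x i = x k ∧ i < k) then 1 else 0) k]
  have h0 : (if x k < x k ∨ (x k = x k ∧ k < k) then 1 else 0) = 0 := by simp
  rw [h0, zero_add]
  refine Finset.sum_congr rfl fun i _ => ?_
  refine if_congr ?_ rfl rfl
  by_cases hlt : k.succAbove i < k
  · simp only [hlt, if_true, mem_Iic]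
    constructor
    · rintro (h | ⟨h, _⟩)
      · exact h.le
      · exact h.le
    · intro h
      rcases eq_or_lt_of_le h with he | hl
      · exact Or.inr ⟨he, trivial⟩
      · exact Or.inl hl
  · simp only [hlt, if_false, mem_Iio]
    constructor
    · rintro (h | ⟨_, h⟩)
      · exact h
      · exact h.elim
    · exact Or.inl


open Classical in
lemma core {m : ℕ} (μ : Measure ℝ) [IsProbabilityMeasure μ] (k : Fin (m + 1)) (j : ℕ)
    (H : ℝ → Set ℝ) (hH : MeasurableSet {p : ℝ × ℝ | p.2 ∈ H p.1})
    (c : ℝ≥0∞) (hc : c ≤ 1)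
    (hIic : ∀ t, μ (Iic t ∩ H t) ≤ c * μ (Iic t))
    (hIio : ∀ t, μ (Iio t ∩ H t) ≤ c * μ (Iio t)) :
    Measure.pi (fun _ : Fin (m + 1) => μ) {x | rankAt x k = j ∧ ∀ i, i ≠ k → x i ∈ H (x k)}
      ≤ c ^ j * Measure.pi (fun _ : Fin (m + 1) => μ) {x | rankAt x k = j} := by
  set π := Measure.pi (fun _ : Fin (m + 1) => μ) with hπ
  set π' := Measure.pi (fun _ : Fin m => μ) with hπ'
  set β : Fin m → ℝ → Set ℝ := fun i t => if k.succAbove i < k then Iic t else Iio t with hβ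
  set C : Finset (Fin m) → Fin m → ℝ → Set ℝ :=
    fun S i t => if i ∈ S then β i t else (β i t)ᶜ with hC
  set P := Finset.powersetCard j (Finset.univ : Finset (Fin m)) with hP
  set W : Set (ℝ × (Fin m → ℝ)) :=
    ⋃ S ∈ P, {p | ∀ i, p.2 i ∈ C S i p.1 ∩ H p.1} with hW
  set W₀ : Set (ℝ × (Fin m → ℝ)) :=
    ⋃ S ∈ P, {p | ∀ i, p.2 i ∈ C S i p.1} with hW₀
  set e := MeasurableEquiv.piFinSuccAbove (fun _ : Fin (m + 1) => ℝ) k with he'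
  have he : ∀ x : Fin (m + 1) → ℝ, e x = (x k, fun i => x (k.succAbove i)) := fun x => rfl
  -- the card ↔ exists-S equivalence
  have hcardiff : ∀ (t : ℝ) (y : Fin m → ℝ),
      ((Finset.univ.filter fun i : Fin m => y i ∈ β i t).card = j
        ↔ ∃ S ∈ P, ∀ i, y i ∈ C S i t) := by
    intro t y
    constructor
    · intro hcard
      refine ⟨Finset.univ.filter fun i : Fin m => y i ∈ β i t,
        Finset.mem_powersetCard.mpr ⟨Finset.subset_univ _, hcard⟩, fun i => ?_⟩
      rw [hC]
      by_cases hmem : y i ∈ β i t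
      · simp [hmem]
      · simp [hmem]
    · rintro ⟨S, hS, h⟩
      have hfil : (Finset.univ.filter fun i : Fin m => y i ∈ β i t) = S := by
        ext i
        simp only [Finset.mem_filter, Finset.mem_univ, true_and]
        constructor
        · intro hmem
          by_contra hiS
          have := h i
          rw [hC] at this
          simp only [hiS, if_false] at this
          exact this hmem
        · intro hiS
          have := h i
          rw [hC] at this
          simpa only [hiS, if_true] using this
      rw [hfil]
      exact (Finset.mem_powersetCard.mp hS).2
  -- set identities
  have hTW₀ : {x : Fin (m + 1) → ℝ | rankAt x k = j} = e ⁻¹' W₀ := by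
    ext x
    simp only [mem_setOf_eq, mem_preimage, he, hW₀, mem_iUnion, exists_prop, mem_setOf_eq]
    rw [rankAt_eq_card]
    exact hcardiff (x k) (fun i => x (k.succAbove i))
  have hTW : {x : Fin (m + 1) → ℝ | rankAt x k = j ∧ ∀ i, i ≠ k → x i ∈ H (x k)}
      = e ⁻¹' W := by
    ext x
    simp only [mem_setOf_eq, mem_preimage, he, hW, mem_iUnion, exists_prop, mem_setOf_eq,
      mem_inter_iff]
    rw [rankAt_eq_card]
    rw [hcardiff (x k) (fun i => x (k.succAbove i))]
    constructor
    · rintro ⟨⟨S, hS, h⟩, hHall⟩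
      exact ⟨S, hS, fun i => ⟨h i, hHall _ (Fin.succAbove_ne k i)⟩⟩
    · rintro ⟨S, hS, h⟩
      refine ⟨⟨S, hS, fun i => (h i).1⟩, fun i hik => ?_⟩
      obtain ⟨i', rfl⟩ := Fin.exists_succAbove_eq hik
      exact (h i').2
  -- measurability
  have hβm : ∀ i : Fin m, MeasurableSet {p : ℝ × (Fin m → ℝ) | p.2 i ∈ β i p.1} := by
    intro i
    rw [hβ]
    by_cases hlt : k.succAbove i < k
    · simp only [hlt, if_true, mem_Iic]
      exact measurableSet_le (measurable_snd.eval) measurable_fst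
    · simp only [hlt, if_false, mem_Iio]
      exact measurableSet_lt (measurable_snd.eval) measurable_fst
  have hHm : ∀ i : Fin m, MeasurableSet {p : ℝ × (Fin m → ℝ) | p.2 i ∈ H p.1} := by
    intro i
    have hmap : Measurable fun p : ℝ × (Fin m → ℝ) => (p.1, p.2 i) :=
      measurable_fst.prodMk ((measurable_pi_apply i).comp measurable_snd)
    exact hmap hH
  have hCm : ∀ (S : Finset (Fin m)) (i : Fin m),
      MeasurableSet {p : ℝ × (Fin m → ℝ) | p.2 i ∈ C S i p.1} := by
    intro S i
    rw [hC]
    by_cases hiS : i ∈ S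
    · simpa only [hiS, if_true] using hβm i
    · simp only [hiS, if_false]
      exact (hβm i).compl
  have hWm : MeasurableSet W := by
    refine MeasurableSet.biUnion P.countable_toSet fun S _ => ?_
    have : {p : ℝ × (Fin m → ℝ) | ∀ i, p.2 i ∈ C S i p.1 ∩ H p.1}
        = ⋂ i, ({p : ℝ × (Fin m → ℝ) | p.2 i ∈ C S i p.1} ∩ {p | p.2 i ∈ H p.1}) := by
      ext p
      simp [mem_iInter, mem_inter_iff, forall_and]
    rw [this]
    exact MeasurableSet.iInter fun i => (hCm S i).inter (hHm i)
  have hW₀m : MeasurableSet W₀ := by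
    refine MeasurableSet.biUnion P.countable_toSet fun S _ => ?_
    have : {p : ℝ × (Fin m → ℝ) | ∀ i, p.2 i ∈ C S i p.1}
        = ⋂ i, {p : ℝ × (Fin m → ℝ) | p.2 i ∈ C S i p.1} := by
      ext p; simp [mem_iInter]
    rw [this]
    exact MeasurableSet.iInter fun i => hCm S i
  -- measure preserving
  have hmp := measurePreserving_piFinSuccAbove (fun _ : Fin (m + 1) => μ) k
  have hπeq : ∀ (V : Set (ℝ × (Fin m → ℝ))), MeasurableSet V → π (e ⁻¹' V) = (μ.prod π') V := by
    intro V hV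
    rw [← Measure.map_apply e.measurable hV, hmp.map_eq]
  -- slices
  have hsliceW : ∀ t, Prod.mk t ⁻¹' W = ⋃ S ∈ P, univ.pi fun i => C S i t ∩ H t := by
    intro t
    ext y
    simp [hW, Set.mem_pi, mem_iUnion]
  have hsliceW₀ : ∀ t, Prod.mk t ⁻¹' W₀ = ⋃ S ∈ P, univ.pi fun i => C S i t := by
    intro t
    ext y
    simp [hW₀, Set.mem_pi, mem_iUnion]
  have hCsm : ∀ (S : Finset (Fin m)) (i : Fin m) (t : ℝ), MeasurableSet (C S i t) := by
    intro S i t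
    rw [hC, hβ]
    by_cases hiS : i ∈ S <;> by_cases hlt : k.succAbove i < k <;>
      simp [hiS, hlt, measurableSet_Iic, measurableSet_Iio]
  have hdisj : ∀ t, Set.PairwiseDisjoint (↑P) fun S => univ.pi fun i => C S i t := by
    intro t S₁ h₁ S₂ h₂ hne
    refine Set.disjoint_left.mpr fun y hy₁ hy₂ => hne ?_
    ext i
    have e₁ := hy₁ i (mem_univ i)
    have e₂ := hy₂ i (mem_univ i)
    rw [hC] at e₁ e₂
    constructor
    · intro hi₁
      by_contra hi₂
      simp only [hi₁, if_true] at e₁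
      simp only [hi₂, if_false] at e₂
      exact e₂ e₁
    · intro hi₂
      by_contra hi₁
      simp only [hi₂, if_true] at e₂
      simp only [hi₁, if_false] at e₁
      exact e₁ e₂
  -- pointwise slice bound
  have hslice : ∀ t, π' (Prod.mk t ⁻¹' W) ≤ c ^ j * π' (Prod.mk t ⁻¹' W₀) := by
    intro t
    rw [hsliceW t, hsliceW₀ t]
    have hW₀val : π' (⋃ S ∈ P, univ.pi fun i => C S i t) = ∑ S ∈ P, ∏ i, μ (C S i t) := by
      rw [measure_biUnion_finset (hdisj t) fun S _ => MeasurableSet.univ_pi fun i => hCsm S i t]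
      exact Finset.sum_congr rfl fun S _ => Measure.pi_pi _ _
    rw [hW₀val]
    calc π' (⋃ S ∈ P, univ.pi fun i => C S i t ∩ H t)
        ≤ ∑ S ∈ P, π' (univ.pi fun i => C S i t ∩ H t) := measure_biUnion_finset_le P _
      _ ≤ ∑ S ∈ P, c ^ j * ∏ i, μ (C S i t) := by
          refine Finset.sum_le_sum fun S hS => ?_
          rw [Measure.pi_pi]
          have hfac : ∀ i : Fin m, μ (C S i t ∩ H t) ≤ (if i ∈ S then c else 1) * μ (C S i t) := by
            intro i
            by_cases hiS : i ∈ S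
            · simp only [hiS, if_true]
              rw [hC]
              simp only [hiS, if_true]
              rw [hβ]
              by_cases hlt : k.succAbove i < k
              · simpa only [hlt, if_true] using hIic t
              · simpa only [hlt, if_false] using hIio t
            · simp only [hiS, if_false, one_mul]
              exact measure_mono inter_subset_left
          calc ∏ i, μ (C S i t ∩ H t)
              ≤ ∏ i, ((if i ∈ S then c else 1) * μ (C S i t)) :=
                Finset.prod_le_prod' fun i _ => hfac i
            _ = (∏ i, if i ∈ S then c else 1) * ∏ i, μ (C S i t) := Finset.prod_mul_distrib
            _ = c ^ j * ∏ i, μ (C S i t) := by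
                rw [Finset.prod_ite_mem, Finset.univ_inter, Finset.prod_const,
                  (Finset.mem_powersetCard.mp hS).2]
      _ = c ^ j * ∑ S ∈ P, ∏ i, μ (C S i t) := by rw [Finset.mul_sum]
  -- put it together
  rw [hTW, hTW₀, hπeq W hWm, hπeq W₀ hW₀m, Measure.prod_apply hWm, Measure.prod_apply hW₀m]
  calc ∫⁻ t, π' (Prod.mk t ⁻¹' W) ∂μ
      ≤ ∫⁻ t, c ^ j * π' (Prod.mk t ⁻¹' W₀) ∂μ := lintegral_mono fun t => hslice t
    _ = c ^ j * ∫⁻ t, π' (Prod.mk t ⁻¹' W₀) ∂μ :=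
        lintegral_const_mul' _ _ (ENNReal.pow_ne_top (ne_top_of_le_ne_top ENNReal.one_ne_top hc))

end OrderStatAux

/-- Lemma 3.2: if `c₁ ∈ (0,1]` satisfies `x ≤ G(G⁻¹(x)) ≤ x/c₁` on `(0,1)`, and
`q 0 ≤ q 1 ≤ … ≤ q (n-1)` are the increasing order statistics (0-based) of `n`
i.i.d. samples from `G`, then for `2 ≤ j ≤ n` (i.e. 0-based index `j` with
`1 ≤ j < n`), `P(G(q_1) > η G(q_j)) ≤ (1 − c₁ η)^{j-1}`. -/
theorem order_stat_ratio_bound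
    {Ω : Type*} [MeasureSpace Ω] [IsProbabilityMeasure (ℙ : Measure Ω)]
    (μ : Measure ℝ) [IsProbabilityMeasure μ]
    (G : ℝ → ℝ) (hG : ∀ x, G x = (μ (Set.Iic x)).toReal)
    (hpos : μ (Set.Iic 0) = 0)
    (c₁ : ℝ) (hc₁ : c₁ ∈ Set.Ioc (0:ℝ) 1)
    (hc₁bound : ∀ x ∈ Set.Ioo (0:ℝ) 1, x ≤ G (leftInv G x) ∧ G (leftInv G x) ≤ x / c₁)
    (n : ℕ) (X : ℕ → Ω → ℝ)
    (hXmeas : ∀ i, Measurable (X i))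
    (hXindep : iIndepFun X ℙ)
    (hXlaw : ∀ i, Measure.map (X i) ℙ = μ)
    (q : ℕ → Ω → ℝ)
    (hperm : ∀ ω, ∃ σ : Equiv.Perm (Fin n), ∀ j : Fin n, q (j : ℕ) ω = X ((σ j : Fin n) : ℕ) ω)
    (hmono : ∀ ω, MonotoneOn (fun j => q j ω) (Set.Iio n))
    (η : ℝ) (hη : η ∈ Set.Ioo (0:ℝ) 1)
    (j : ℕ) (hj1 : 1 ≤ j) (hjn : j < n) :
    ℙ {ω | G (q 0 ω) > η * G (q j ω)} ≤ ENNReal.ofReal ((1 - c₁ * η) ^ j) := by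
  obtain ⟨m, rfl⟩ : ∃ m, n = m + 1 := ⟨n - 1, by omega⟩
  obtain ⟨hc₁pos, hc₁le⟩ := hc₁
  obtain ⟨hηpos, hηlt⟩ := hη
  -- basic facts about G
  have hμIic : ∀ t, μ (Set.Iic t) = ENNReal.ofReal (G t) := fun t => by
    rw [hG t, ENNReal.ofReal_toReal (measure_ne_top μ _)]
  have hGmono : Monotone G := by
    intro a b hab
    rw [hG a, hG b]
    exact ENNReal.toReal_mono (measure_ne_top μ _) (measure_mono (Iic_subset_Iic.mpr hab))
  have hGnn : ∀ t, 0 ≤ G t := fun t => by rw [hG t]; exact ENNReal.toReal_nonneg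
  have hGle1 : ∀ t, G t ≤ 1 := fun t => by
    rw [hG t]
    calc (μ (Set.Iic t)).toReal ≤ (1 : ℝ≥0∞).toReal :=
          ENNReal.toReal_mono ENNReal.one_ne_top prob_le_one
      _ = 1 := ENNReal.toReal_one
  have hGmeas : Measurable G := hGmono.measurable
  have hcη1 : c₁ * η < 1 := by nlinarith
  have hcη0 : 0 < c₁ * η := mul_pos hc₁pos hηpos
  set c : ℝ≥0∞ := ENNReal.ofReal (1 - c₁ * η) with hcdef
  have hcle1 : c ≤ 1 := by rw [hcdef]; exact ENNReal.ofReal_le_one.mpr (by linarith)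
  set H : ℝ → Set ℝ := fun t => {s | η * G t < G s} with hHdef
  have hHmeas : MeasurableSet {p : ℝ × ℝ | p.2 ∈ H p.1} :=
    measurableSet_lt (measurable_const.mul (hGmeas.comp measurable_fst))
      (hGmeas.comp measurable_snd)
  -- the key analytic bound
  have hkey : ∀ (t : ℝ) (B : Set ℝ), B = Set.Iic t ∨ B = Set.Iio t →
      μ (B ∩ H t) ≤ c * μ B := by
    intro t B hB
    rcases le_or_gt (G t) 0 with hGt | hGt
    · have hGt0 : G t = 0 := le_antisymm hGt (hGnn t)
      have hB0 : μ B = 0 := by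
        have h0 : μ (Set.Iic t) = 0 := by rw [hμIic, hGt0]; simp
        rcases hB with rfl | rfl
        · exact h0
        · exact measure_mono_null Iio_subset_Iic_self h0
      have : μ (B ∩ H t) = 0 := measure_mono_null inter_subset_left hB0
      simp [this]
    · set x := c₁ * η * G t with hx
      have hx0 : 0 < x := mul_pos hcη0 hGt
      have hxle : x ≤ c₁ * η := by nlinarith [hGle1 t]
      have hx1 : x < 1 := lt_of_le_of_lt hxle hcη1
      obtain ⟨hxlow, hxhigh⟩ := hc₁bound x ⟨hx0, hx1⟩
      set w := leftInv G x with hw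
      have hxleG : x ≤ G t := by nlinarith
      have hG0 : G 0 = 0 := by rw [hG 0, hpos]; simp
      have htpos : 0 < t := by
        by_contra hcon
        push_neg at hcon
        have := hGmono hcon
        rw [hG0] at this
        linarith
      have hsetle : ∀ y ∈ {y | G y < x}, y ≤ t := by
        intro y hy
        by_contra hyt
        push_neg at hyt
        have h1 : G t ≤ G y := hGmono hyt.le
        have h2 : G y < x := hy
        linarith
      have hwt : w ≤ t := Real.sSup_le hsetle htpos.le
      have hGw_le : G w ≤ η * G t := by
        have hηGt : x / c₁ = η * G t := by field_simp; ring
        rw [← hηGt]; exact hxhigh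
      have hsub : ∀ B' : Set ℝ, Set.Iic w ⊆ B' → B' ⊆ Set.Iic t →
          μ (B' ∩ H t) ≤ c * μ B' := by
        intro B' hwB hBt
        have hdisj : Disjoint (B' ∩ H t) (Set.Iic w) := by
          refine Set.disjoint_left.mpr fun s hs hsw => ?_
          have h1 : G s ≤ G w := hGmono hsw
          have h2 : η * G t < G s := hs.2
          linarith
        have hadd : μ (B' ∩ H t) + μ (Set.Iic w) ≤ μ B' := by
          rw [← measure_union hdisj measurableSet_Iic]
          exact measure_mono (union_subset inter_subset_left hwB)
        have hfin1 : μ (B' ∩ H t) ≠ ⊤ := measure_ne_top μ _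
        have hfin2 : μ B' ≠ ⊤ := measure_ne_top μ _
        have hab : (μ (B' ∩ H t)).toReal + G w ≤ (μ B').toReal := by
          have h1 := ENNReal.toReal_mono hfin2 hadd
          rwa [ENNReal.toReal_add hfin1 (measure_ne_top μ _), ← hG w] at h1
        have hbt : (μ B').toReal ≤ G t := by
          rw [hG t]
          exact ENNReal.toReal_mono (measure_ne_top μ _) (measure_mono hBt)
        have hares : (μ (B' ∩ H t)).toReal ≤ (1 - c₁ * η) * (μ B').toReal := by
          have h3 : x ≤ G w := hxlow
          nlinarith [ENNReal.toReal_nonneg (a := μ (B' ∩ H t))]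
        calc μ (B' ∩ H t) = ENNReal.ofReal (μ (B' ∩ H t)).toReal :=
              (ENNReal.ofReal_toReal hfin1).symm
          _ ≤ ENNReal.ofReal ((1 - c₁ * η) * (μ B').toReal) :=
              ENNReal.ofReal_le_ofReal hares
          _ = c * ENNReal.ofReal (μ B').toReal := by
              rw [ENNReal.ofReal_mul (by linarith)]
          _ = c * μ B' := by rw [ENNReal.ofReal_toReal hfin2]
      rcases hB with rfl | rfl
      · exact hsub _ (Iic_subset_Iic.mpr hwt) subset_rfl
      · rcases lt_or_eq_of_le hwt with hwlt | hweq
        · exact hsub _ (fun s hs => lt_of_le_of_lt hs hwlt) Iio_subset_Iic_self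
        · have hne : {y | G y < x}.Nonempty := by
            by_contra hcon
            rw [Set.not_nonempty_iff_eq_empty] at hcon
            have h0 : w = 0 := by
              rw [hw, leftInv, hcon]; exact Real.sSup_empty
            rw [h0] at hweq; linarith
          have hempty : Set.Iio t ∩ H t = ∅ := by
            ext s
            simp only [Set.mem_inter_iff, Set.mem_Iio, Set.mem_empty_iff_false, iff_false,
              not_and, hHdef, Set.mem_setOf_eq]
            intro hst
            have hs : s < sSup {y | G y < x} := by
              rw [show sSup {y | G y < x} = w from rfl, hweq]; exact hst
            obtain ⟨y, hy, hsy⟩ := exists_lt_of_lt_csSup hne hs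
            have h1 : G s ≤ G y := hGmono hsy.le
            have h2 : G y < x := hy
            have hxη : x ≤ η * G t := by nlinarith [hGnn t]
            intro hcon
            linarith
          rw [hempty]
          simp
  have hIic : ∀ t, μ (Set.Iic t ∩ H t) ≤ c * μ (Set.Iic t) := fun t => hkey t _ (Or.inl rfl)
  have hIio : ∀ t, μ (Set.Iio t ∩ H t) ≤ c * μ (Set.Iio t) := fun t => hkey t _ (Or.inr rfl)
  -- the vector map and its law
  set V : Ω → (Fin (m + 1) → ℝ) := fun ω i => X i ω with hV
  have hVmeas : Measurable V := measurable_pi_lambda _ fun i => hXmeas i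
  set π := Measure.pi (fun _ : Fin (m + 1) => μ) with hπ
  have hmap : π = Measure.map V ℙ := by
    refine Measure.pi_eq fun s hs => ?_
    rw [Measure.map_apply hVmeas (MeasurableSet.univ_pi hs)]
    classical
    set sets : ℕ → Set ℝ := fun i => if h : i < m + 1 then s ⟨i, h⟩ else Set.univ with hsets
    have hpre : V ⁻¹' (Set.univ.pi s) = ⋂ i ∈ Finset.range (m + 1), X i ⁻¹' sets i := by
      ext ω
      simp only [Set.mem_preimage, Set.mem_pi, Set.mem_univ, true_implies, Set.mem_iInter,
        Finset.mem_range, hsets, hV]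
      constructor
      · intro h i hi
        simp only [dif_pos hi]
        exact h ⟨i, hi⟩
      · intro h i
        have h2 := h i i.isLt
        simpa only [dif_pos i.isLt] using h2
    have hsetsmeas : ∀ i, i ∈ Finset.range (m + 1) → MeasurableSet (sets i) := by
      intro i _
      rw [hsets]
      by_cases hi : i < m + 1
      · simp only [dif_pos hi]; exact hs _
      · simp only [dif_neg hi]; exact MeasurableSet.univ
    rw [hpre, hXindep.measure_inter_preimage_eq_mul (Finset.range (m + 1)) hsetsmeas]
    have hfac : ∀ i : ℕ, ℙ (X i ⁻¹' sets i) = μ (sets i) := by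
      intro i
      rw [← hXlaw i, Measure.map_apply (hXmeas i)]
      rw [hsets]
      by_cases hi : i < m + 1
      · simp only [dif_pos hi]; exact hs _
      · simp only [dif_neg hi]; exact MeasurableSet.univ
    calc ∏ i ∈ Finset.range (m + 1), ℙ (X i ⁻¹' sets i)
        = ∏ i ∈ Finset.range (m + 1), μ (sets i) := Finset.prod_congr rfl fun i _ => hfac i
      _ = ∏ i : Fin (m + 1), μ (sets (i : ℕ)) :=
          (Fin.prod_univ_eq_prod_range (fun i => μ (sets i)) (m + 1)).symm
      _ = ∏ i : Fin (m + 1), μ (s i) := by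
          refine Finset.prod_congr rfl fun i _ => ?_
          rw [hsets]
          simp only [dif_pos i.isLt]
  -- the event as a preimage
  set A : Set (Fin (m + 1) → ℝ) :=
    ⋃ k, {x | OrderStatAux.rankAt x k = j ∧ ∀ i, x i ∈ H (x k)} with hA
  have hjF : (⟨j, hjn⟩ : Fin (m + 1)) = (⟨j, hjn⟩ : Fin (m + 1)) := rfl
  have hEvent : {ω | G (q 0 ω) > η * G (q j ω)} = V ⁻¹' A := by
    ext ω
    obtain ⟨σ, hσ⟩ := hperm ω
    have hqmono : Monotone (V ω ∘ σ) := by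
      intro a b hab
      have h1 : q (a : ℕ) ω ≤ q (b : ℕ) ω := hmono ω a.isLt b.isLt hab
      rwa [hσ a, hσ b] at h1
    have hsorted : V ω ∘ σ = V ω ∘ Tuple.sort (V ω) :=
      Tuple.comp_sort_eq_comp_iff_monotone.mpr hqmono
    have hqj : ∀ a : Fin (m + 1), q (a : ℕ) ω = V ω (Tuple.sort (V ω) a) := by
      intro a
      rw [hσ a]
      have := congrFun hsorted a
      exact this
    simp only [Set.mem_setOf_eq, Set.mem_preimage, hA, Set.mem_iUnion]
    constructor
    · intro hgt
      refine ⟨Tuple.sort (V ω) ⟨j, hjn⟩, ?_, ?_⟩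
      · have := OrderStatAux.rank_sort (V ω) (⟨j, hjn⟩ : Fin (m + 1))
        exact this
      · intro i
        have hq0 : q 0 ω = V ω (Tuple.sort (V ω) ⟨0, Nat.succ_pos m⟩) := hqj ⟨0, Nat.succ_pos m⟩
        have hmin : V ω (Tuple.sort (V ω) ⟨0, Nat.succ_pos m⟩) ≤ V ω i := by
          have hi : i = Tuple.sort (V ω) ((Tuple.sort (V ω)).symm i) := by simp
          rw [hi]
          exact Tuple.monotone_sort (V ω) (Fin.zero_le _)
        have hGi : G (V ω (Tuple.sort (V ω) ⟨0, Nat.succ_pos m⟩)) ≤ G (V ω i) := hGmono hmin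
        have hqjj : q j ω = V ω (Tuple.sort (V ω) ⟨j, hjn⟩) := hqj ⟨j, hjn⟩
        show η * G (V ω (Tuple.sort (V ω) ⟨j, hjn⟩)) < G (V ω i)
        rw [← hqjj]
        calc η * G (q j ω) < G (q 0 ω) := hgt
          _ = G (V ω (Tuple.sort (V ω) ⟨0, Nat.succ_pos m⟩)) := by rw [hq0]
          _ ≤ G (V ω i) := hGi
    · rintro ⟨k, hrank, hall⟩
      have hk : k = Tuple.sort (V ω) ⟨j, hjn⟩ :=
        (OrderStatAux.rank_eq_iff (V ω) k ⟨j, hjn⟩).mp hrank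
      have hqjj : q j ω = V ω k := by rw [hk]; exact hqj ⟨j, hjn⟩
      have hq0 : q 0 ω = V ω (Tuple.sort (V ω) ⟨0, Nat.succ_pos m⟩) := hqj ⟨0, Nat.succ_pos m⟩
      have := hall (Tuple.sort (V ω) ⟨0, Nat.succ_pos m⟩)
      show η * G (q j ω) < G (q 0 ω)
      rw [hqjj, hq0]
      exact this
  -- measurability of the pieces
  have hrankmeas : ∀ k : Fin (m + 1), MeasurableSet {x : Fin (m + 1) → ℝ | OrderStatAux.rankAt x k = j} := by
    intro k
    have : {x : Fin (m + 1) → ℝ | OrderStatAux.rankAt x k = j} = (fun x => OrderStatAux.rankAt x k) ⁻¹' {j} := rfl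
    rw [this]
    exact OrderStatAux.measurable_rankAt k (measurableSet_singleton j)
  have hHallmeas : ∀ k : Fin (m + 1),
      MeasurableSet {x : Fin (m + 1) → ℝ | ∀ i, x i ∈ H (x k)} := by
    intro k
    have : {x : Fin (m + 1) → ℝ | ∀ i, x i ∈ H (x k)}
        = ⋂ i, {x : Fin (m + 1) → ℝ | η * G (x k) < G (x i)} := by
      ext x; simp [hHdef]
    rw [this]
    refine MeasurableSet.iInter fun i => ?_
    exact measurableSet_lt (measurable_const.mul (hGmeas.comp (measurable_pi_apply k)))
      (hGmeas.comp (measurable_pi_apply i))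
  -- final computation
  rw [hEvent, ← Measure.map_apply hVmeas, ← hmap]
  · have hAsub : π A ≤ ∑' k : Fin (m + 1), π {x | OrderStatAux.rankAt x k = j ∧ ∀ i, x i ∈ H (x k)} :=
      measure_iUnion_le _
    have hterm : ∀ k : Fin (m + 1), π {x | OrderStatAux.rankAt x k = j ∧ ∀ i, x i ∈ H (x k)}
        ≤ c ^ j * π {x | OrderStatAux.rankAt x k = j} := by
      intro k
      refine le_trans (measure_mono ?_) (OrderStatAux.core μ k j H hHmeas c hcle1 hIic hIio)
      intro x hx
      exact ⟨hx.1, fun i _ => hx.2 i⟩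
    have hsum1 : ∑' k : Fin (m + 1), π {x | OrderStatAux.rankAt x k = j} = 1 := by
      rw [← measure_iUnion ?_ fun k => hrankmeas k]
      · have huniv : (⋃ k, {x : Fin (m + 1) → ℝ | OrderStatAux.rankAt x k = j}) = Set.univ := by
          ext x
          simp only [Set.mem_iUnion, Set.mem_setOf_eq, Set.mem_univ, iff_true]
          exact ⟨Tuple.sort x ⟨j, hjn⟩, OrderStatAux.rank_sort x ⟨j, hjn⟩⟩
        rw [huniv]
        exact measure_univ
      · intro k k' hkk'
        simp only [Function.onFun]
        refine Set.disjoint_left.mpr fun x hx hx' => hkk' ?_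
        have h1 : k = Tuple.sort x ⟨j, hjn⟩ := (OrderStatAux.rank_eq_iff x k ⟨j, hjn⟩).mp hx
        have h2 : k' = Tuple.sort x ⟨j, hjn⟩ := (OrderStatAux.rank_eq_iff x k' ⟨j, hjn⟩).mp hx'
        rw [h1, h2]
      
    calc π A ≤ ∑' k : Fin (m + 1), π {x | OrderStatAux.rankAt x k = j ∧ ∀ i, x i ∈ H (x k)} := hAsub
      _ ≤ ∑' k : Fin (m + 1), c ^ j * π {x | OrderStatAux.rankAt x k = j} := ENNReal.tsum_le_tsum hterm
      _ = c ^ j * ∑' k : Fin (m + 1), π {x | OrderStatAux.rankAt x k = j} := ENNReal.tsum_mul_left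
      _ = c ^ j := by rw [hsum1, mul_one]
      _ = ENNReal.ofReal ((1 - c₁ * η) ^ j) := by
          rw [hcdef, ← ENNReal.ofReal_pow (by linarith)]
  · -- measurability of A
    refine MeasurableSet.iUnion fun k => ?_
    have : {x : Fin (m + 1) → ℝ | OrderStatAux.rankAt x k = j ∧ ∀ i, x i ∈ H (x k)}
        = {x | OrderStatAux.rankAt x k = j} ∩ {x | ∀ i, x i ∈ H (x k)} := rfl
    rw [this]
    exact (hrankmeas k).inter (hHallmeas k)
end

section
/- Lemma 3.3. Assume condition (a). Then for every fixed s > 0, lim_{n→∞} P( q_1 ≤ G^{-1}(s/n) ) = 1 − e^{-s}, where q_1 is the minimum of n i.i.d. samples from G. -/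
open MeasureTheory ProbabilityTheory Filter Set

set_option linter.unusedSectionVars false
section Helpers
variable {μ : Measure ℝ} [IsProbabilityMeasure μ] {G : ℝ → ℝ}

lemma mosel_mono (hG : ∀ x, G x = (μ (Set.Iic x)).toReal) : Monotone G := by
  intro a b hab
  rw [hG, hG]
  exact ENNReal.toReal_mono (measure_ne_top μ _) (measure_mono (Iic_subset_Iic.2 hab))

lemma mosel_nonneg (hG : ∀ x, G x = (μ (Set.Iic x)).toReal) (x : ℝ) : 0 ≤ G x := by
  rw [hG]; exact ENNReal.toReal_nonneg

lemma mosel_le_one (hG : ∀ x, G x = (μ (Set.Iic x)).toReal) (x : ℝ) : G x ≤ 1 := by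
  rw [hG]
  exact ENNReal.toReal_le_of_le_ofReal one_pos.le (by simpa using prob_le_one)

lemma mosel_right (hG : ∀ x, G x = (μ (Set.Iic x)).toReal) (x c : ℝ)
    (h : ∀ k : ℕ, c ≤ G (x + 1/(k+1))) : c ≤ G x := by
  have hiInter : (⋂ k : ℕ, Set.Iic (x + 1/((k:ℝ)+1))) = Set.Iic x := by
    ext y
    simp only [mem_iInter, mem_Iic]
    constructor
    · intro h'
      rw [le_iff_forall_pos_le_add]
      intro ε hε
      obtain ⟨k, hk⟩ := exists_nat_one_div_lt hε
      exact (h' k).trans (by linarith)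
    · intro h' k
      have : (0:ℝ) < 1/((k:ℝ)+1) := by positivity
      linarith
  have htend : Tendsto (fun k : ℕ => μ (Set.Iic (x + 1/((k:ℝ)+1)))) atTop (nhds (μ (Set.Iic x))) := by
    have := MeasureTheory.tendsto_measure_iInter_atTop (μ := μ)
      (s := fun k : ℕ => Set.Iic (x + 1/((k:ℝ)+1)))
      (fun k => measurableSet_Iic.nullMeasurableSet)
      (fun i j hij => Iic_subset_Iic.2 (by
        have hc : ((i:ℝ)+1) ≤ (j:ℝ)+1 := by exact_mod_cast Nat.succ_le_succ hij
        have : 1/((j:ℝ)+1) ≤ 1/((i:ℝ)+1) := one_div_le_one_div_of_le (by positivity) hc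
        linarith))
      ⟨0, measure_ne_top μ _⟩
    rwa [hiInter] at this
  have hb : ENNReal.ofReal c ≤ μ (Set.Iic x) := by
    refine ge_of_tendsto' htend (fun k => ?_)
    exact ENNReal.ofReal_le_of_le_toReal (by rw [← hG]; exact h k)
  rw [hG]
  exact (ENNReal.ofReal_le_iff_le_toReal (measure_ne_top μ _)).1 hb

lemma mosel_rc0 (hG : ∀ x, G x = (μ (Set.Iic x)).toReal) (hpos : μ (Set.Iic 0) = 0)
    {u : ℝ} (hu : 0 < u) : ∃ y : ℝ, 0 < y ∧ G y < u := by
  have hiInter : (⋂ k : ℕ, Set.Iic (1/((k:ℝ)+1))) = Set.Iic 0 := by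
    ext y
    simp only [mem_iInter, mem_Iic]
    constructor
    · intro h'
      rw [le_iff_forall_pos_le_add]
      intro ε hε
      obtain ⟨k, hk⟩ := exists_nat_one_div_lt hε
      exact (h' k).trans (by linarith)
    · intro h' k
      have : (0:ℝ) < 1/((k:ℝ)+1) := by positivity
      linarith
  have htend : Tendsto (fun k : ℕ => μ (Set.Iic (1/((k:ℝ)+1)))) atTop (nhds 0) := by
    have := MeasureTheory.tendsto_measure_iInter_atTop (μ := μ)
      (s := fun k : ℕ => Set.Iic (1/((k:ℝ)+1)))
      (fun k => measurableSet_Iic.nullMeasurableSet)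
      (fun i j hij => Iic_subset_Iic.2 (by
        have hc : ((i:ℝ)+1) ≤ (j:ℝ)+1 := by exact_mod_cast Nat.succ_le_succ hij
        exact one_div_le_one_div_of_le (by positivity) hc))
      ⟨0, measure_ne_top μ _⟩
    rwa [hiInter, hpos] at this
  have := htend.eventually_lt_const (by simpa using hu : (0:ENNReal) < ENNReal.ofReal u)
  obtain ⟨k, hk⟩ := this.exists
  exact ⟨1/((k:ℝ)+1), by positivity, by rw [hG]; exact ENNReal.toReal_lt_of_lt_ofReal hk⟩

lemma mosel_top (hG : ∀ x, G x = (μ (Set.Iic x)).toReal) {u : ℝ} (hu0 : 0 ≤ u) (hu : u < 1) :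
    ∃ M : ℝ, u < G M := by
  have htend : Tendsto (fun k : ℕ => μ (Set.Iic (k:ℝ))) atTop (nhds 1) := by
    have := MeasureTheory.tendsto_measure_iUnion_atTop (μ := μ)
      (s := fun k : ℕ => Set.Iic (k:ℝ))
      (fun i j hij => Iic_subset_Iic.2 (Nat.cast_le.2 hij))
    have huniv : (⋃ k : ℕ, Set.Iic ((k:ℝ))) = Set.univ := by
      ext y; simp only [mem_iUnion, mem_Iic, mem_univ, iff_true]
      exact exists_nat_ge y
    rwa [huniv, measure_univ] at this
  have := htend.eventually_const_lt (ENNReal.ofReal_lt_one.2 hu)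
  obtain ⟨k, hk⟩ := this.exists
  refine ⟨(k:ℝ), ?_⟩
  rw [hG]
  exact (ENNReal.ofReal_lt_iff_lt_toReal hu0 (measure_ne_top μ _)).1 hk

end Helpers

/-- Lemma 3.3: under condition (a), for every fixed `s > 0`,
`P(q_1 ≤ G⁻¹(s/n)) → 1 − e^{−s}` as `n → ∞`, where `q_1 = q n 0` is the
minimum of the first `n` samples of an i.i.d. sequence with distribution
function `G` (the distribution function of a strictly positive random variable). -/
theorem min_order_stat_extremal_law
    {Ω : Type*} [MeasureSpace Ω] [IsProbabilityMeasure (ℙ : Measure Ω)]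
    (μ : Measure ℝ) [IsProbabilityMeasure μ]
    (G : ℝ → ℝ) (hG : ∀ x, G x = (μ (Set.Iic x)).toReal)
    (hpos : μ (Set.Iic 0) = 0)
    -- condition (a)
    (condA : ∀ x y : ℕ → ℝ, (∀ k, 0 < x k) → (∀ k, 0 < y k) →
      Tendsto x atTop (nhds 0) → Tendsto y atTop (nhds 0) →
      Tendsto (fun k => x k / y k) atTop (nhds 1) →
      Tendsto (fun k => G (x k) / G (y k)) atTop (nhds 1))
    (X : ℕ → Ω → ℝ)
    (hXmeas : ∀ i, Measurable (X i))
    (hXindep : iIndepFun X ℙ)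
    (hXlaw : ∀ i, Measure.map (X i) ℙ = μ)
    (q : ℕ → ℕ → Ω → ℝ)
    (hperm : ∀ n ω, ∃ σ : Equiv.Perm (Fin n), ∀ j : Fin n, q n (j : ℕ) ω = X ((σ j : Fin n) : ℕ) ω)
    (hmono : ∀ n ω, MonotoneOn (fun j => q n j ω) (Set.Iio n))
    (s : ℝ) (hs : 0 < s) :
    Tendsto (fun n : ℕ => ℙ {ω | q n 0 ω ≤ leftInv G (s / n)}) atTop
      (nhds (ENNReal.ofReal (1 - Real.exp (-s)))) := by
  have Gmono : Monotone G := mosel_mono hG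
  have Gnn : ∀ x, 0 ≤ G x := mosel_nonneg hG
  have Gle1 : ∀ x, G x ≤ 1 := mosel_le_one hG
  have G0 : G 0 = 0 := by rw [hG 0, hpos]; simp
  -- G is positive on positive reals
  have Gpos : ∀ y : ℝ, 0 < y → 0 < G y := by
    have h1 := condA (fun k => 1/((k:ℝ)+1)) (fun k => 1/((k:ℝ)+1))
      (fun k => by positivity) (fun k => by positivity)
      tendsto_one_div_add_atTop_nhds_zero_nat tendsto_one_div_add_atTop_nhds_zero_nat
      (tendsto_const_nhds.congr (fun k => (div_self (by positivity : (1/((k:ℝ)+1)) ≠ 0)).symm))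
    have h1' : Tendsto (fun k : ℕ => G (1/((k:ℝ)+1)) / G (1/((k:ℝ)+1))) atTop (nhds 1) := h1
    have h2 : ∀ᶠ k : ℕ in atTop, (0:ℝ) < G (1/((k:ℝ)+1)) := by
      filter_upwards [h1'.eventually_const_lt (by norm_num : (0:ℝ) < 1)] with k hk
      rcases lt_or_ge 0 (G (1/((k:ℝ)+1))) with h | h
      · exact h
      · have : G (1/((k:ℝ)+1)) = 0 := le_antisymm h (Gnn _)
        rw [this] at hk; simp at hk
    obtain ⟨K, hK⟩ := eventually_atTop.1 h2
    intro y hy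
    obtain ⟨m, hm⟩ := exists_nat_one_div_lt hy
    refine lt_of_lt_of_le (hK (max K m) (le_max_left _ _)) (Gmono ?_)
    have hmle : (m:ℝ) ≤ ((max K m : ℕ):ℝ) := Nat.cast_le.2 (le_max_right _ _)
    have h3 : 1/(((max K m : ℕ):ℝ)+1) ≤ 1/((m:ℝ)+1) := by
      apply one_div_le_one_div_of_le (by positivity)
      linarith
    linarith
  -- notation
  set t : ℕ → ℝ := fun n => leftInv G (s / n) with ht
  -- key facts for n with s < n
  have key : ∀ n : ℕ, s < (n:ℝ) →
      0 < t n ∧ (∀ y : ℝ, y < t n → G y < s/n) ∧ s/n ≤ G (t n) := by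
    intro n hn
    have hn0 : (0:ℝ) < n := hs.trans hn
    have hu0 : 0 < s/n := div_pos hs hn0
    have hu1 : s/n < 1 := (div_lt_one hn0).2 hn
    have hSne : {y | G y < s/n}.Nonempty := ⟨0, by simpa [G0] using hu0⟩
    obtain ⟨M, hM⟩ := mosel_top hG hu0.le hu1
    have hSbdd : BddAbove {y | G y < s/n} := by
      refine ⟨M, fun y hy => ?_⟩
      by_contra h
      push_neg at h
      exact absurd (Gmono h.le) (not_le.2 (lt_trans hy hM))
    have ht_pos : 0 < t n := by
      obtain ⟨y, hy0, hyu⟩ := mosel_rc0 hG hpos hu0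
      exact lt_of_lt_of_le hy0 (le_csSup hSbdd hyu)
    have hlt : ∀ y : ℝ, y < t n → G y < s/n := by
      intro y hy
      obtain ⟨z, hz, hyz⟩ := exists_lt_of_lt_csSup hSne hy
      exact lt_of_le_of_lt (Gmono hyz.le) hz
    have hts : s/n ≤ G (t n) := by
      apply mosel_right hG
      intro k
      by_contra h
      push_neg at h
      have : t n + 1/((k:ℝ)+1) ≤ t n := le_csSup hSbdd h
      have : (0:ℝ) < 1/((k:ℝ)+1) := by positivity
      linarith
    exact ⟨ht_pos, hlt, hts⟩
  have hev : ∀ᶠ n : ℕ in atTop, s < (n:ℝ) :=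
    (tendsto_natCast_atTop_atTop (R := ℝ)).eventually_gt_atTop s
  -- t n → 0
  have htendsto0 : Tendsto t atTop (nhds 0) := by
    rw [tendsto_order]
    constructor
    · intro c hc
      filter_upwards [hev] with n hn
      exact hc.trans (key n hn).1
    · intro c hc
      have hGc : 0 < G (c/2) := Gpos _ (by linarith)
      have hdiv : Tendsto (fun n : ℕ => s/(n:ℝ)) atTop (nhds 0) :=
        tendsto_const_div_atTop_nhds_zero_nat s
      filter_upwards [hev, hdiv.eventually_lt_const hGc] with n hn hn2
      have hn0 : (0:ℝ) < n := hs.trans hn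
      have hSne : {y | G y < s/n}.Nonempty := ⟨0, by simpa [G0] using div_pos hs hn0⟩
      have : t n ≤ c/2 := by
        apply csSup_le hSne
        intro y hy
        by_contra h
        push_neg at h
        exact absurd (Gmono h.le) (not_le.2 (hy.trans hn2))
      linarith
  -- main analytic step : n * G (t n) → s
  set a : ℕ → ℝ := fun n => n * G (t n) with ha
  have haS : ∀ᶠ n : ℕ in atTop, s ≤ a n := by
    filter_upwards [hev] with n hn
    have hn0 : (0:ℝ) < n := hs.trans hn
    have := (key n hn).2.2
    rw [div_le_iff₀ hn0] at this
    show s ≤ (n:ℝ) * G (t n)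
    linarith [this]
  have hup : ∀ ε : ℝ, 0 < ε → ∀ᶠ n : ℕ in atTop, a n < s * (1 + ε) := by
    intro ε hε
    by_contra hcon
    rw [not_eventually] at hcon
    have hcon2 : ∃ᶠ n : ℕ in atTop, s * (1+ε) ≤ a n ∧ s < (n:ℝ) := by
      apply ((hcon.mono (fun n h => not_lt.1 h)).and_eventually hev)
    obtain ⟨φ, hφmono, hφ⟩ := extraction_of_frequently_atTop hcon2
    set x : ℕ → ℝ := fun k => t (φ k) with hx
    set y : ℕ → ℝ := fun k => x k * (((k:ℝ)+1)/((k:ℝ)+2)) with hy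
    have hxpos : ∀ k, 0 < x k := fun k => (key (φ k) (hφ k).2).1
    have hypos : ∀ k, 0 < y k := fun k => mul_pos (hxpos k) (by positivity)
    have hden2 : Tendsto (fun k : ℕ => (k:ℝ)+2) atTop atTop :=
      tendsto_atTop_add_const_right _ 2 tendsto_natCast_atTop_atTop
    have hden1 : Tendsto (fun k : ℕ => (k:ℝ)+1) atTop atTop :=
      tendsto_atTop_add_const_right _ 1 tendsto_natCast_atTop_atTop
    have base2 : Tendsto (fun k : ℕ => ((k:ℝ)+2)⁻¹) atTop (nhds 0) :=
      tendsto_inv_atTop_zero.comp hden2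
    have base1 : Tendsto (fun k : ℕ => ((k:ℝ)+1)⁻¹) atTop (nhds 0) :=
      tendsto_inv_atTop_zero.comp hden1
    have hcf : Tendsto (fun k : ℕ => ((k:ℝ)+1)/((k:ℝ)+2)) atTop (nhds 1) := by
      have h1 : Tendsto (fun k : ℕ => 1 - ((k:ℝ)+2)⁻¹) atTop (nhds 1) := by
        simpa using tendsto_const_nhds.sub base2
      apply h1.congr
      intro k
      have hk2 : ((k:ℝ)+2) ≠ 0 := by positivity
      field_simp
      ring
    have hxlim : Tendsto x atTop (nhds 0) := htendsto0.comp hφmono.tendsto_atTop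
    have hylim : Tendsto y atTop (nhds 0) := by
      have := hxlim.mul hcf
      simpa using this
    have hratio : Tendsto (fun k => x k / y k) atTop (nhds 1) := by
      have h2 : Tendsto (fun k : ℕ => ((k:ℝ)+2)/((k:ℝ)+1)) atTop (nhds 1) := by
        have h1 : Tendsto (fun k : ℕ => 1 + ((k:ℝ)+1)⁻¹) atTop (nhds 1) := by
          simpa using tendsto_const_nhds.add base1
        apply h1.congr
        intro k
        have hk1 : ((k:ℝ)+1) ≠ 0 := by positivity
        field_simp
        ring
      apply h2.congr
      intro k
      rw [hy]
      have hx0 : x k ≠ 0 := (hxpos k).ne'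
      field_simp
    have hGrat := condA x y hxpos hypos hxlim hylim hratio
    have := (hGrat.eventually_lt_const (by linarith : (1:ℝ) < 1 + ε)).exists
    obtain ⟨k, hk⟩ := this
    -- but the ratio is at least 1 + ε
    have hyx : y k < x k := by
      have : ((k:ℝ)+1)/((k:ℝ)+2) < 1 := by
        rw [div_lt_one (by positivity)]; linarith
      calc y k = x k * (((k:ℝ)+1)/((k:ℝ)+2)) := rfl
        _ < x k * 1 := by apply mul_lt_mul_of_pos_left this (hxpos k)
        _ = x k := mul_one _
    have hGy : G (y k) < s/(φ k) := (key (φ k) (hφ k).2).2.1 _ hyx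
    have hGypos : 0 < G (y k) := Gpos _ (hypos k)
    have hφpos : (0:ℝ) < (φ k : ℝ) := hs.trans (hφ k).2
    have hGx : (1+ε) * (s/(φ k)) ≤ G (x k) := by
      have h1 : s * (1+ε) ≤ ((φ k):ℝ) * G (x k) := (hφ k).1
      rw [← mul_div_assoc, div_le_iff₀ hφpos]
      nlinarith [h1]
    have : 1 + ε < G (x k) / G (y k) := by
      rw [lt_div_iff₀ hGypos]
      calc (1+ε) * G (y k) < (1+ε) * (s/(φ k)) := by
            apply mul_lt_mul_of_pos_left hGy (by linarith)
        _ ≤ G (x k) := hGx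
    linarith
  have haTendsto : Tendsto a atTop (nhds s) := by
    rw [tendsto_order]
    constructor
    · intro c hc
      filter_upwards [haS] with n hn
      exact hc.trans_le hn
    · intro c hc
      have hε : 0 < (c - s)/s := div_pos (by linarith) hs
      filter_upwards [hup _ hε] with n hn
      have he : s * (1 + (c-s)/s) = c := by field_simp; ring
      rw [he] at hn
      exact hn
  -- g n := G (t n) tends to 0, is eventually in (0,1)
  set g : ℕ → ℝ := fun n => G (t n) with hgdef
  have hgn0 : ∀ᶠ n : ℕ in atTop, 0 < g n := by
    filter_upwards [hev] with n hn
    have hn0 : (0:ℝ) < n := hs.trans hn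
    exact lt_of_lt_of_le (div_pos hs hn0) (key n hn).2.2
  have hg0 : Tendsto g atTop (nhds 0) := by
    have hub : ∀ᶠ n : ℕ in atTop, g n ≤ (2*s)/n := by
      filter_upwards [hev, haS.and (hup 1 one_pos)] with n hn hn2
      have hn0 : (0:ℝ) < n := hs.trans hn
      have h2 : (n:ℝ) * G (t n) < s * (1+1) := hn2.2
      show G (t n) ≤ (2*s)/n
      rw [le_div_iff₀ hn0]
      nlinarith [h2]
    have hlb : ∀ᶠ n : ℕ in atTop, (0:ℝ) ≤ g n := hgn0.mono (fun n h => h.le)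
    have hd : Tendsto (fun n : ℕ => (2*s)/(n:ℝ)) atTop (nhds 0) :=
      tendsto_const_div_atTop_nhds_zero_nat (2*s)
    exact tendsto_of_tendsto_of_tendsto_of_le_of_le' tendsto_const_nhds hd hlb hub
  have hgn1 : ∀ᶠ n : ℕ in atTop, g n < 1 := hg0.eventually_lt_const (by norm_num : (0:ℝ) < 1)
  -- log slope limit
  have hslope : Tendsto (fun n : ℕ => Real.log (1 - g n) / (-(g n))) atTop (nhds 1) := by
    have hderiv : HasDerivAt Real.log 1 (1:ℝ) := by
      simpa using Real.hasDerivAt_log one_ne_zero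
    have hslope1 := hasDerivAt_iff_tendsto_slope.1 hderiv
    have hz : Tendsto (fun n : ℕ => 1 - g n) atTop (nhdsWithin 1 {(1:ℝ)}ᶜ) := by
      rw [tendsto_nhdsWithin_iff]
      constructor
      · simpa using tendsto_const_nhds.sub hg0
      · filter_upwards [hgn0] with n hn
        simp only [mem_compl_iff, mem_singleton_iff]
        intro h
        nlinarith [h]
    have := hslope1.comp hz
    apply this.congr
    intro n
    simp only [Function.comp_apply, slope_def_field]
    rw [Real.log_one]
    congr 1 <;> ring
  -- n log(1 - g n) → -s
  have hnlog : Tendsto (fun n : ℕ => (n:ℝ) * Real.log (1 - g n)) atTop (nhds (-s)) := by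
    have hmul : Tendsto (fun n : ℕ => (Real.log (1 - g n) / (-(g n))) * (-(a n))) atTop
        (nhds (-s)) := by
      have := hslope.mul haTendsto.neg
      simpa using this
    apply hmul.congr'
    filter_upwards [hgn0] with n hn
    have hg_ne : g n ≠ 0 := hn.ne'
    show Real.log (1 - g n) / (-(g n)) * (-(a n)) = (n:ℝ) * Real.log (1 - g n)
    show Real.log (1 - g n) / (-(g n)) * (-((n:ℝ) * G (t n))) = (n:ℝ) * Real.log (1 - g n)
    have : G (t n) = g n := rfl
    rw [this]
    field_simp
  -- (1 - g n)^n → exp (-s)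
  have hpow : Tendsto (fun n : ℕ => (1 - g n)^n) atTop (nhds (Real.exp (-s))) := by
    have hexp := (Real.continuous_exp.tendsto _).comp hnlog
    apply hexp.congr'
    filter_upwards [hgn0, hgn1] with n hn0 hn1
    show Real.exp ((n:ℝ) * Real.log (1 - g n)) = (1 - g n)^n
    rw [Real.exp_nat_mul, Real.exp_log (by linarith)]
  have hreal : Tendsto (fun n : ℕ => 1 - (1 - g n)^n) atTop (nhds (1 - Real.exp (-s))) := by
    simpa using tendsto_const_nhds.sub hpow
  -- probability identity
  have hprob : ∀ n : ℕ, 0 < n → ∀ τ : ℝ,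
      ℙ {ω | q n 0 ω ≤ τ} = ENNReal.ofReal (1 - (1 - G τ)^n) := by
    intro n hn τ
    have hset : {ω | q n 0 ω ≤ τ} = (⋂ j ∈ Finset.range n, X j ⁻¹' Set.Ioi τ)ᶜ := by
      ext ω
      simp only [mem_setOf_eq, mem_compl_iff, mem_iInter, Finset.mem_range, mem_preimage,
        mem_Ioi, not_forall, not_lt]
      constructor
      · intro h
        obtain ⟨σ, hσ⟩ := hperm n ω
        refine ⟨((σ ⟨0, hn⟩ : Fin n) : ℕ), (σ ⟨0, hn⟩).2, ?_⟩
        rw [← hσ ⟨0, hn⟩]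
        exact h
      · rintro ⟨j, hj, hXj⟩
        obtain ⟨σ, hσ⟩ := hperm n ω
        have h0 : (0:ℕ) ∈ Set.Iio n := hn
        have hj' : ((σ.symm ⟨j, hj⟩ : Fin n) : ℕ) ∈ Set.Iio n := (σ.symm ⟨j, hj⟩).2
        have hle := hmono n ω h0 hj' (Nat.zero_le _)
        have heq : q n ((σ.symm ⟨j, hj⟩ : Fin n) : ℕ) ω = X j ω := by
          rw [hσ (σ.symm ⟨j, hj⟩)]
          simp
        calc q n 0 ω ≤ q n ((σ.symm ⟨j, hj⟩ : Fin n) : ℕ) ω := hle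
          _ = X j ω := heq
          _ ≤ τ := hXj
    have hmeasInter : MeasurableSet (⋂ j ∈ Finset.range n, X j ⁻¹' Set.Ioi τ) := by
      exact MeasurableSet.biInter (Finset.range n).countable_toSet
        (fun j _ => (hXmeas j) measurableSet_Ioi)
    have hindep := (iIndepFun_iff_measure_inter_preimage_eq_mul.1 hXindep)
      (Finset.range n) (sets := fun _ => Set.Ioi τ) (fun i _ => measurableSet_Ioi)
    have hXj : ∀ j : ℕ, ℙ (X j ⁻¹' Set.Ioi τ) = μ (Set.Ioi τ) := by
      intro j
      rw [← hXlaw j, Measure.map_apply (hXmeas j) measurableSet_Ioi]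
    have hIoi : μ (Set.Ioi τ) = ENNReal.ofReal (1 - G τ) := by
      have h1 : Set.Ioi τ = (Set.Iic τ)ᶜ := (Set.compl_Iic (a := τ)).symm
      have h2 : μ (Set.Iic τ) = ENNReal.ofReal (G τ) := by
        rw [hG τ, ENNReal.ofReal_toReal (measure_ne_top μ _)]
      rw [h1, prob_compl_eq_one_sub measurableSet_Iic, h2,
        ENNReal.ofReal_sub 1 (Gnn τ), ENNReal.ofReal_one]
    rw [hset, prob_compl_eq_one_sub hmeasInter, hindep]
    have hprod : (∏ i ∈ Finset.range n, ℙ (X i ⁻¹' Set.Ioi τ)) = (ENNReal.ofReal (1 - G τ))^n := by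
      rw [Finset.prod_congr rfl (fun i _ => (hXj i).trans hIoi), Finset.prod_const,
        Finset.card_range]
    rw [hprod, ← ENNReal.ofReal_pow (by linarith [Gle1 τ]),
      ← ENNReal.ofReal_one, ← ENNReal.ofReal_sub _ (pow_nonneg (by linarith [Gle1 τ]) n)]
  -- assemble
  have hfinal := (ENNReal.continuous_ofReal.tendsto _).comp hreal
  apply hfinal.congr'
  filter_upwards [eventually_gt_atTop 0] with n hn
  exact (hprob n hn (t n)).symm
end

section
/- Lemma 3.4. Assume condition (a). Then the ratio q_1/q_2 is with high probability bounded away from 1 as n → ∞: for every η > 0 there is a δ > 0 such that P( q_1 ≤ (1−δ)·q_2 ) ≥ 1 − η for all sufficiently large n. -/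
open MeasureTheory ProbabilityTheory Filter Set

lemma auxR_Gmono (μ : Measure ℝ) [IsProbabilityMeasure μ] (G : ℝ → ℝ)
    (hG : ∀ x, G x = (μ (Set.Iic x)).toReal) : Monotone G := by
  intro a b hab
  rw [hG, hG]
  exact ENNReal.toReal_mono (measure_ne_top μ _) (measure_mono (Set.Iic_subset_Iic.2 hab))

lemma auxR_Gpos (μ : Measure ℝ) [IsProbabilityMeasure μ] (G : ℝ → ℝ)
    (hG : ∀ x, G x = (μ (Set.Iic x)).toReal)
    (condA : ∀ x y : ℕ → ℝ, (∀ k, 0 < x k) → (∀ k, 0 < y k) →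
      Tendsto x atTop (nhds 0) → Tendsto y atTop (nhds 0) →
      Tendsto (fun k => x k / y k) atTop (nhds 1) →
      Tendsto (fun k => G (x k) / G (y k)) atTop (nhds 1)) :
    ∀ x : ℝ, 0 < x → 0 < G x := by
  intro x hx
  by_contra hGx
  push_neg at hGx
  have Gnonneg : ∀ y, 0 ≤ G y := fun y => by rw [hG]; exact ENNReal.toReal_nonneg
  have hGx0 : G x = 0 := le_antisymm hGx (Gnonneg x)
  set b : ℕ → ℝ := fun k => x / (k + 1) with hb
  have hbpos : ∀ k, 0 < b k := fun k => by positivity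
  have hble : ∀ k, b k ≤ x := by
    intro k
    rw [hb]
    rw [div_le_iff₀ (by positivity)]
    nlinarith [Nat.cast_nonneg (α := ℝ) k, hx]
  have hb0 : Tendsto b atTop (nhds 0) := by
    have : Tendsto (fun k : ℕ => x * (1 / (k + 1))) atTop (nhds (x * 0)) :=
      (tendsto_one_div_add_atTop_nhds_zero_nat).const_mul x
    simpa [hb, div_eq_mul_inv, one_div] using this
  have hGb : ∀ k, G (b k) = 0 := by
    intro k
    have h1 : G (b k) ≤ G x := auxR_Gmono μ G hG (hble k)
    have h2 : 0 ≤ G (b k) := Gnonneg _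
    linarith [hGx0 ▸ h1]
  have hdiv : Tendsto (fun k => b k / b k) atTop (nhds 1) := by
    have : (fun k => b k / b k) = fun _ : ℕ => (1:ℝ) := by
      funext k; exact div_self (ne_of_gt (hbpos k))
    rw [this]; exact tendsto_const_nhds
  have hrat := condA b b hbpos hbpos hb0 hb0 hdiv
  have h0 : Tendsto (fun _ : ℕ => (0:ℝ)) atTop (nhds 1) := by
    refine hrat.congr fun k => ?_
    simp [hGb k]
  have h1 := h0.eventually (eventually_gt_nhds (by norm_num : (0:ℝ) < 1))
  simp at h1
  obtain ⟨a, ha⟩ := h1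
  exact lt_irrefl a (ha a)


lemma auxR_unif (μ : Measure ℝ) [IsProbabilityMeasure μ] (G : ℝ → ℝ)
    (hG : ∀ x, G x = (μ (Set.Iic x)).toReal)
    (condA : ∀ x y : ℕ → ℝ, (∀ k, 0 < x k) → (∀ k, 0 < y k) →
      Tendsto x atTop (nhds 0) → Tendsto y atTop (nhds 0) →
      Tendsto (fun k => x k / y k) atTop (nhds 1) →
      Tendsto (fun k => G (x k) / G (y k)) atTop (nhds 1))
    (ε : ℝ) (hε0 : 0 < ε) (hε1 : ε < 1) :
    ∃ δ : ℝ, 0 < δ ∧ δ < 1 ∧ ∃ x0 : ℝ, 0 < x0 ∧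
      ∀ x : ℝ, 0 < x → x ≤ x0 → G x - G ((1 - δ) * x) ≤ ε * G x := by
  have Gnonneg : ∀ y, 0 ≤ G y := fun y => by rw [hG]; exact ENNReal.toReal_nonneg
  by_contra hcon
  push_neg at hcon
  -- for each k, use δ = 1/(k+2), x0 = 1/(k+1)
  have hex : ∀ k : ℕ, ∃ x : ℝ, 0 < x ∧ x ≤ 1 / (k + 1) ∧
      ε * G x < G x - G ((1 - 1 / (k + 2)) * x) := by
    intro k
    have h1 : (0:ℝ) < 1 / (k + 2) := by positivity
    have h2 : (1:ℝ) / (k + 2) < 1 := by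
      rw [div_lt_one (by positivity)]
      nlinarith [Nat.cast_nonneg (α := ℝ) k]
    have h3 : (0:ℝ) < 1 / (k + 1) := by positivity
    obtain ⟨x, hx1, hx2, hx3⟩ := hcon (1 / (k + 2)) h1 h2 (1 / (k + 1)) h3
    exact ⟨x, hx1, hx2, hx3⟩
  choose xs hxs1 hxs2 hxs3 using hex
  set a : ℕ → ℝ := fun k => (1 - 1 / (k + 2)) * xs k with ha
  have hfacpos : ∀ k : ℕ, (0:ℝ) < 1 - 1 / (k + 2) := by
    intro k
    have : (1:ℝ) / (k + 2) < 1 := by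
      rw [div_lt_one (by positivity)]
      nlinarith [Nat.cast_nonneg (α := ℝ) k]
    linarith
  have hapos : ∀ k, 0 < a k := fun k => mul_pos (hfacpos k) (hxs1 k)
  have hale : ∀ k, a k ≤ xs k := by
    intro k
    simp only [ha]
    nlinarith [hxs1 k, (by positivity : (0:ℝ) < 1 / ((k:ℝ) + 2))]
  have hb0 : Tendsto xs atTop (nhds 0) := by
    apply squeeze_zero (fun k => (hxs1 k).le) hxs2
    exact tendsto_one_div_add_atTop_nhds_zero_nat
  have ha0 : Tendsto a atTop (nhds 0) :=
    squeeze_zero (fun k => (hapos k).le) (fun k => le_trans (hale k) (hxs2 k))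
      tendsto_one_div_add_atTop_nhds_zero_nat
  have hdiv : Tendsto (fun k => a k / xs k) atTop (nhds 1) := by
    have heq : (fun k => a k / xs k) = fun k : ℕ => 1 - 1 / ((k:ℝ) + 2) := by
      funext k
      simp only [ha]
      rw [mul_div_assoc, div_self (ne_of_gt (hxs1 k)), mul_one]
    rw [heq]
    have h2 : Tendsto (fun k : ℕ => 1 / ((k:ℝ) + 2)) atTop (nhds 0) := by
      apply squeeze_zero (fun k => by positivity)
        (g := fun k : ℕ => 1 / ((k:ℝ) + 1)) (fun k => ?_)
        tendsto_one_div_add_atTop_nhds_zero_nat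
      apply one_div_le_one_div_of_le (by positivity)
      linarith
    simpa using tendsto_const_nhds.sub h2
  have hrat := condA a xs hapos hxs1 ha0 hb0 hdiv
  -- but ratio < 1 - ε always
  have hGpos : ∀ k, 0 < G (xs k) := by
    intro k
    rcases lt_or_ge 0 (G (xs k)) with h | h
    · exact h
    · exfalso
      have h0 : G (xs k) = 0 := le_antisymm h (Gnonneg _)
      have := hxs3 k
      rw [h0] at this
      simp at this
      exact absurd this (not_lt.2 (Gnonneg _))
  have hlt : ∀ k, G (a k) / G (xs k) < 1 - ε := by
    intro k
    rw [div_lt_iff₀ (hGpos k)]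
    have := hxs3 k
    nlinarith [hGpos k]
  have hev := hrat.eventually (eventually_gt_nhds (by linarith : 1 - ε < 1))
  obtain ⟨k, hk⟩ := hev.exists
  exact absurd hk (not_lt.2 (hlt k).le)


lemma auxR_const (η : ℝ) (hη : 0 < η) :
    ∃ c : ℝ, 1 ≤ c ∧ (1 + 2 * c) * Real.exp (-c / 2) ≤ η / 3 := by
  have h2 : Tendsto (fun c : ℝ => c / 2) atTop atTop :=
    tendsto_id.atTop_div_const two_pos
  have hA : Tendsto (fun c : ℝ => Real.exp (-(c / 2))) atTop (nhds 0) :=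
    Real.tendsto_exp_neg_atTop_nhds_zero.comp h2
  have hB : Tendsto (fun c : ℝ => (c / 2) ^ 1 * Real.exp (-(c / 2))) atTop (nhds 0) :=
    (Real.tendsto_pow_mul_exp_neg_atTop_nhds_zero 1).comp h2
  have hsum : Tendsto (fun c : ℝ => Real.exp (-(c / 2)) + 4 * ((c / 2) ^ 1 * Real.exp (-(c / 2))))
      atTop (nhds 0) := by
    have := hA.add (hB.const_mul 4)
    simpa using this
  have heq : ∀ c : ℝ, (1 + 2 * c) * Real.exp (-c / 2)
      = Real.exp (-(c / 2)) + 4 * ((c / 2) ^ 1 * Real.exp (-(c / 2))) := by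
    intro c
    rw [neg_div]
    ring
  have hev : ∀ᶠ c : ℝ in atTop, (1 + 2 * c) * Real.exp (-c / 2) ≤ η / 3 := by
    have := hsum.eventually (eventually_le_nhds (by positivity : (0:ℝ) < η / 3))
    filter_upwards [this] with c hc
    rw [heq c]; exact hc
  obtain ⟨c, hc1, hc2⟩ := (hev.and (eventually_ge_atTop (1:ℝ))).exists
  exact ⟨c, hc2, hc1⟩


set_option maxHeartbeats 4000000 in
/-- Lemma 3.4: under condition (a), the ratio `q_1/q_2` of the two smallest of `n`
i.i.d. samples from `G` is with high probability bounded away from 1 as `n → ∞`: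
for every `η > 0` there is `δ > 0` with `P(q_1 ≤ (1−δ) q_2) ≥ 1 − η` for all large `n`. -/
theorem min_ratio_bounded_away_from_one
    {Ω : Type*} [MeasureSpace Ω] [IsProbabilityMeasure (ℙ : Measure Ω)]
    (μ : Measure ℝ) [IsProbabilityMeasure μ]
    (G : ℝ → ℝ) (hG : ∀ x, G x = (μ (Set.Iic x)).toReal)
    (hpos : μ (Set.Iic 0) = 0)
    -- condition (a)
    (condA : ∀ x y : ℕ → ℝ, (∀ k, 0 < x k) → (∀ k, 0 < y k) →
      Tendsto x atTop (nhds 0) → Tendsto y atTop (nhds 0) →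
      Tendsto (fun k => x k / y k) atTop (nhds 1) →
      Tendsto (fun k => G (x k) / G (y k)) atTop (nhds 1))
    (X : ℕ → Ω → ℝ)
    (hXmeas : ∀ i, Measurable (X i))
    (hXindep : iIndepFun X ℙ)
    (hXlaw : ∀ i, Measure.map (X i) ℙ = μ)
    (q : ℕ → ℕ → Ω → ℝ)
    (hperm : ∀ n ω, ∃ σ : Equiv.Perm (Fin n), ∀ j : Fin n, q n (j : ℕ) ω = X ((σ j : Fin n) : ℕ) ω)
    (hmono : ∀ n ω, MonotoneOn (fun j => q n j ω) (Set.Iio n)) :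
    ∀ η > (0:ℝ), ∃ δ > (0:ℝ), ∀ᶠ n : ℕ in atTop,
      ENNReal.ofReal (1 - η) ≤ ℙ {ω | q n 0 ω ≤ (1 - δ) * q n 1 ω} := by
  intro η hη
  have Gmono := auxR_Gmono μ G hG
  have Gnonneg : ∀ x, 0 ≤ G x := fun x => by rw [hG]; exact ENNReal.toReal_nonneg
  have Gle1 : ∀ x, G x ≤ 1 := by
    intro x
    rw [hG]
    have h := prob_le_one (μ := μ) (s := Set.Iic x)
    simpa using ENNReal.toReal_mono ENNReal.one_ne_top h
  have G0 : G 0 = 0 := by rw [hG, hpos]; simp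
  have Gpos := auxR_Gpos μ G hG condA
  obtain ⟨c, hc1, hc⟩ := auxR_const η hη
  have hc0 : (0:ℝ) < c := lt_of_lt_of_le one_pos hc1
  set ε : ℝ := min (1/2) (η / (12 * c ^ 2)) with hεdef
  have hε0 : 0 < ε := lt_min (by norm_num) (by positivity)
  have hεhalf : ε ≤ 1/2 := min_le_left _ _
  have hε1 : ε < 1 := lt_of_le_of_lt hεhalf (by norm_num)
  have hε2 : 4 * c ^ 2 * ε ≤ η / 3 := by
    have h := min_le_right (1/2 : ℝ) (η / (12 * c ^ 2))
    have h2 : 4 * c ^ 2 * ε ≤ 4 * c ^ 2 * (η / (12 * c ^ 2)) :=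
      mul_le_mul_of_nonneg_left h (by positivity)
    calc 4 * c ^ 2 * ε ≤ 4 * c ^ 2 * (η / (12 * c ^ 2)) := h2
    _ = η / 3 := by field_simp; ring
  obtain ⟨δ, hδ0, hδ1, x0, hx00, hunif⟩ := auxR_unif μ G hG condA ε hε0 hε1
  refine ⟨δ, hδ0, ?_⟩
  have hGx0 : 0 < G x0 := Gpos x0 hx00
  have hev2 : ∀ᶠ n : ℕ in atTop, 2 * c ≤ (n:ℝ) :=
    (tendsto_natCast_atTop_atTop (R := ℝ)).eventually_ge_atTop (2 * c)
  have hev3 : ∀ᶠ n : ℕ in atTop, c / G x0 ≤ (n:ℝ) :=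
    (tendsto_natCast_atTop_atTop (R := ℝ)).eventually_ge_atTop (c / G x0)
  filter_upwards [eventually_ge_atTop 2, hev2, hev3] with n hn2 hnc hng
  -- basic n facts
  have hn0 : 0 < n := lt_of_lt_of_le two_pos hn2
  have h1n : 1 < n := lt_of_lt_of_le one_lt_two hn2
  have hnR : (0:ℝ) < (n:ℝ) := by exact_mod_cast hn0
  -- the threshold t
  set S : Set ℝ := {x | 0 < x ∧ c / n ≤ G x} with hSdef
  have hx0S : x0 ∈ S := by
    refine ⟨hx00, ?_⟩
    rw [div_le_iff₀ hnR]
    rw [div_le_iff₀ hGx0] at hng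
    nlinarith
  have hSne : S.Nonempty := ⟨x0, hx0S⟩
  have hbdd : BddBelow S := ⟨0, fun x hx => hx.1.le⟩
  set t : ℝ := sInf S with htdef
  have ht_le : t ≤ x0 := csInf_le hbdd hx0S
  have ht0 : 0 ≤ t := le_csInf hSne fun x hx => hx.1.le
  have hGtlow : c / n ≤ G t := by
    have key : ∀ z : ℝ, t < z → ENNReal.ofReal (c / n) ≤ μ (Set.Iic z) := by
      intro z hz
      obtain ⟨x, hxS, hxz⟩ := exists_lt_of_csInf_lt hSne (htdef ▸ hz)
      have h1 : ENNReal.ofReal (c / n) ≤ μ (Set.Iic x) := by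
        have h2 := hxS.2
        rw [hG] at h2
        exact ENNReal.ofReal_le_of_le_toReal h2
      exact le_trans h1 (measure_mono (Set.Iic_subset_Iic.2 hxz.le))
    have hIic : Set.Iic t = ⋂ k : ℕ, Set.Iic (t + 1 / ((k:ℝ) + 1)) := by
      ext x
      simp only [Set.mem_Iic, Set.mem_iInter]
      constructor
      · intro h k
        have : (0:ℝ) < 1 / ((k:ℝ) + 1) := by positivity
        linarith
      · intro h
        by_contra hlt
        push_neg at hlt
        obtain ⟨k, hk⟩ := exists_nat_one_div_lt (by linarith : (0:ℝ) < x - t)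
        have := h k
        linarith
    have hanti : Antitone (fun k : ℕ => Set.Iic (t + 1 / ((k:ℝ) + 1))) := by
      intro k m hkm
      apply Set.Iic_subset_Iic.2
      have hkm' : ((k:ℝ) + 1) ≤ ((m:ℝ) + 1) := by
        have : (k:ℝ) ≤ (m:ℝ) := by exact_mod_cast hkm
        linarith
      have := one_div_le_one_div_of_le (by positivity : (0:ℝ) < (k:ℝ) + 1) hkm'
      linarith
    have hint := Directed.measure_iInter (μ := μ)
      (fun k : ℕ => (measurableSet_Iic
        (a := t + 1 / ((k:ℝ) + 1))).nullMeasurableSet)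
      hanti.directed_ge ⟨0, measure_ne_top μ _⟩
    have hlow : ENNReal.ofReal (c / n) ≤ μ (Set.Iic t) := by
      rw [hIic, hint]
      refine le_iInf fun k => key _ ?_
      have : (0:ℝ) < 1 / ((k:ℝ) + 1) := by positivity
      linarith
    have := ENNReal.toReal_mono (measure_ne_top μ _) hlow
    rw [ENNReal.toReal_ofReal (by positivity)] at this
    rw [hG]
    exact this
  have ht_pos : 0 < t := by
    rcases eq_or_lt_of_le ht0 with h | h
    · exfalso
      have hGt0 : G t = 0 := by rw [← h]; exact G0
      rw [hGt0] at hGtlow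
      have : (0:ℝ) < c / n := by positivity
      linarith
    · exact h
  have hult : (1 - δ) * t < t := by nlinarith
  have hupos : 0 < (1 - δ) * t := mul_pos (by linarith) ht_pos
  have hGu : G ((1 - δ) * t) < c / n := by
    by_contra hge
    push_neg at hge
    have hmem : (1 - δ) * t ∈ S := ⟨hupos, hge⟩
    have := csInf_le hbdd hmem
    rw [← htdef] at this
    linarith
  have hGthigh : G t ≤ 2 * c / n := by
    have h1 := hunif t ht_pos ht_le
    have h2 : ε * G t ≤ (1/2) * G t := mul_le_mul_of_nonneg_right hεhalf (Gnonneg t)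
    rw [div_le_iff₀ hnR] at hGtlow
    have h3 : G t - G ((1 - δ) * t) ≤ (1/2) * G t := le_trans h1 h2
    have h4 : G ((1 - δ) * t) < c / n := hGu
    have h6 : 2 * (c / (n:ℝ)) = 2 * c / (n:ℝ) := by ring
    linarith
  -- probability notation
  set p : ℝ := G t with hpdef
  have hp0 : 0 ≤ p := Gnonneg t
  have hp1 : p ≤ 1 := Gle1 t
  have hplow : c / n ≤ p := hGtlow
  have hphigh : p ≤ 2 * c / n := hGthigh
  set Pm : ENNReal := μ (Set.Iic t) with hPmdef
  set r : ENNReal := μ (Set.Ioi t) with hrdef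
  have hPmval : Pm = ENNReal.ofReal p := by
    rw [hPmdef, hpdef, hG, ENNReal.ofReal_toReal (measure_ne_top μ _)]
  have hrval : r = ENNReal.ofReal (1 - p) := by
    have h1 : μ (Set.Iic t)ᶜ = 1 - μ (Set.Iic t) := prob_compl_eq_one_sub measurableSet_Iic
    rw [Set.compl_Iic] at h1
    rw [hrdef, h1, ← hPmdef, hPmval, ← ENNReal.ofReal_one, ← ENNReal.ofReal_sub _ hp0]
  -- events
  set Sprod : Set (ℝ × ℝ) :=
    {pr : ℝ × ℝ | 0 < pr.1 ∧ pr.1 ≤ t ∧ (1 - δ) * pr.1 < pr.2 ∧ pr.2 ≤ pr.1} with hSprod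
  have hSprodMeas : MeasurableSet Sprod := by
    rw [hSprod]
    simp only [Set.setOf_and]
    exact (measurableSet_lt measurable_const measurable_fst).inter
      ((measurableSet_le measurable_fst measurable_const).inter
        ((measurableSet_lt (measurable_fst.const_mul _) measurable_snd).inter
          (measurableSet_le measurable_snd measurable_fst)))
  set A0 : Set Ω := ⋂ i ∈ Finset.range n, X i ⁻¹' (Set.Ioi t) with hA0
  set As : ℕ → Set Ω :=
    fun j => ⋂ i ∈ Finset.range n, X i ⁻¹' (if i = j then Set.Iic t else Set.Ioi t) with hAs
  set W : ℕ → ℕ → Set Ω := fun i j => (fun ω => (X j ω, X i ω)) ⁻¹' Sprod with hW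
  set Nn : Set Ω := ⋃ i ∈ Finset.range n, X i ⁻¹' (Set.Iic 0) with hNn
  set B1 : Set Ω := A0 ∪ ⋃ j ∈ Finset.range n, As j with hB1
  set B2 : Set Ω := (⋃ j ∈ Finset.range n, ⋃ i ∈ (Finset.range n).erase j, W i j) ∪ Nn with hB2
  set B : Set Ω := B1 ∪ B2 with hB
  have hWmeas : ∀ i j : ℕ, MeasurableSet (W i j) := fun i j =>
    ((hXmeas j).prodMk (hXmeas i)) hSprodMeas
  have hBmeas : MeasurableSet B := by
    refine MeasurableSet.union (MeasurableSet.union ?_ ?_) (MeasurableSet.union ?_ ?_)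
    · exact (Finset.range n).measurableSet_biInter fun i _ => (hXmeas i) measurableSet_Ioi
    · refine (Finset.range n).measurableSet_biUnion fun j _ => ?_
      refine (Finset.range n).measurableSet_biInter fun i _ => ?_
      refine (hXmeas i) ?_
      split_ifs
      · exact measurableSet_Iic
      · exact measurableSet_Ioi
    · exact (Finset.range n).measurableSet_biUnion fun j _ =>
        ((Finset.range n).erase j).measurableSet_biUnion fun i _ => hWmeas i j
    · exact (Finset.range n).measurableSet_biUnion fun i _ => (hXmeas i) measurableSet_Iic
  have hlawset : ∀ (i : ℕ) (s : Set ℝ), MeasurableSet s → ℙ (X i ⁻¹' s) = μ s := by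
    intro i s hs
    rw [← hXlaw i, Measure.map_apply (hXmeas i) hs]
  have hA0prob : ℙ A0 = r ^ n := by
    rw [hA0, hXindep.meas_biInter (fun i _ => ⟨Set.Ioi t, measurableSet_Ioi, rfl⟩)]
    rw [Finset.prod_congr rfl fun i _ => hlawset i (Set.Ioi t) measurableSet_Ioi]
    rw [Finset.prod_const, Finset.card_range]
  have hAsprob : ∀ j ∈ Finset.range n, ℙ (As j) = Pm * r ^ (n - 1) := by
    intro j hj
    have hmb := hXindep.meas_biInter (S := Finset.range n)
      (s := fun i => X i ⁻¹' (if i = j then Set.Iic t else Set.Ioi t))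
      (fun i _ => ⟨(if i = j then Set.Iic t else Set.Ioi t), by
        split_ifs
        · exact measurableSet_Iic
        · exact measurableSet_Ioi, rfl⟩)
    simp only [hAs]
    rw [hmb]
    have hterm : ∀ i ∈ Finset.range n,
        ℙ (X i ⁻¹' (if i = j then Set.Iic t else Set.Ioi t)) = (if i = j then Pm else r) := by
      intro i _
      split_ifs with h
      · rw [hPmdef]; exact hlawset i _ measurableSet_Iic
      · rw [hrdef]; exact hlawset i _ measurableSet_Ioi
    rw [Finset.prod_congr rfl hterm, ← Finset.prod_erase_mul _ _ hj, if_pos rfl]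
    rw [Finset.prod_congr rfl (fun i hi => if_neg (Finset.ne_of_mem_erase hi))]
    rw [Finset.prod_const, Finset.card_erase_of_mem hj, Finset.card_range]
    exact mul_comm _ _
  have hNnprob : ℙ Nn = 0 := by
    rw [hNn]
    refine le_antisymm (le_trans (measure_biUnion_finset_le _ _) ?_) (zero_le)
    refine le_of_eq (Finset.sum_eq_zero fun i _ => ?_)
    rw [hlawset i _ measurableSet_Iic, hpos]
  have hWprob : ∀ i j : ℕ, i ≠ j → ℙ (W i j) ≤ ENNReal.ofReal (ε * p * p) := by
    intro i j hij
    have hindep : IndepFun (X j) (X i) ℙ := hXindep.indepFun (Ne.symm hij)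
    have hmap : Measure.map (fun ω => (X j ω, X i ω)) ℙ = μ.prod μ := by
      rw [(indepFun_iff_map_prod_eq_prod_map_map (hXmeas j).aemeasurable
        (hXmeas i).aemeasurable).mp hindep, hXlaw j, hXlaw i]
    have hWeq : ℙ (W i j) = (μ.prod μ) Sprod := by
      rw [hW, ← Measure.map_apply ((hXmeas j).prodMk (hXmeas i)) hSprodMeas, hmap]
    rw [hWeq, Measure.prod_apply hSprodMeas]
    have hslice : ∀ y : ℝ, μ (Prod.mk y ⁻¹' Sprod) ≤
        (Set.Ioc (0:ℝ) t).indicator (fun _ => ENNReal.ofReal (ε * p)) y := by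
      intro y
      by_cases hy : y ∈ Set.Ioc (0:ℝ) t
      · rw [Set.indicator_of_mem hy]
        have hy1 : Prod.mk y ⁻¹' Sprod ⊆ Set.Ioc ((1 - δ) * y) y := by
          intro x hx
          exact ⟨hx.2.2.1, hx.2.2.2⟩
        refine le_trans (measure_mono hy1) ?_
        have hIocEq : Set.Ioc ((1 - δ) * y) y = Set.Iic y \ Set.Iic ((1 - δ) * y) :=
          (Set.Iic_sdiff_Iic).symm
        have hsub : Set.Iic ((1 - δ) * y) ⊆ Set.Iic y := by
          apply Set.Iic_subset_Iic.2
          exact mul_le_of_le_one_left hy.1.le (by linarith : (1-δ:ℝ) ≤ 1)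
        rw [hIocEq, measure_diff hsub measurableSet_Iic.nullMeasurableSet (measure_ne_top μ _)]
        rw [tsub_le_iff_right]
        have hIicy : μ (Set.Iic y) = ENNReal.ofReal (G y) := by
          rw [hG, ENNReal.ofReal_toReal (measure_ne_top μ _)]
        have hIicy2 : μ (Set.Iic ((1 - δ) * y)) = ENNReal.ofReal (G ((1 - δ) * y)) := by
          rw [hG, ENNReal.ofReal_toReal (measure_ne_top μ _)]
        rw [hIicy, hIicy2, ← ENNReal.ofReal_add (mul_nonneg hε0.le hp0) (Gnonneg _)]
        apply ENNReal.ofReal_le_ofReal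
        have hyx0 : y ≤ x0 := le_trans hy.2 ht_le
        have h1 := hunif y hy.1 hyx0
        have h2 : G y ≤ p := Gmono hy.2
        have h3 : ε * G y ≤ ε * p := mul_le_mul_of_nonneg_left h2 hε0.le
        linarith
      · rw [Set.indicator_of_notMem hy]
        have : Prod.mk y ⁻¹' Sprod = ∅ := by
          ext x
          simp only [Set.mem_preimage, Set.mem_empty_iff_false, iff_false, hSprod,
            Set.mem_setOf_eq, not_and]
          intro h1 h2
          exact absurd ⟨h1, h2⟩ hy
        rw [this]
        simp
    calc ∫⁻ y, μ (Prod.mk y ⁻¹' Sprod) ∂μ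
        ≤ ∫⁻ y, (Set.Ioc (0:ℝ) t).indicator (fun _ => ENNReal.ofReal (ε * p)) y ∂μ :=
          lintegral_mono hslice
    _ = ENNReal.ofReal (ε * p) * μ (Set.Ioc (0:ℝ) t) := by
        rw [lintegral_indicator measurableSet_Ioc]
        simp [Measure.restrict_apply]
    _ ≤ ENNReal.ofReal (ε * p) * ENNReal.ofReal p := by
        apply mul_le_mul_right
        have h1 : μ (Set.Ioc (0:ℝ) t) ≤ μ (Set.Iic t) := measure_mono Set.Ioc_subset_Iic_self
        rw [← hPmval]
        exact h1
    _ = ENNReal.ofReal (ε * p * p) := by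
        rw [← ENNReal.ofReal_mul (mul_nonneg hε0.le hp0)]
  have hincl : {ω | q n 0 ω ≤ (1 - δ) * q n 1 ω}ᶜ ⊆ B := by
    intro ω hω
    simp only [Set.mem_compl_iff, Set.mem_setOf_eq, not_le] at hω
    obtain ⟨σ, hσ⟩ := hperm n ω
    set i0 : ℕ := ((σ ⟨0, hn0⟩ : Fin n) : ℕ) with hi0def
    set i1 : ℕ := ((σ ⟨1, h1n⟩ : Fin n) : ℕ) with hi1def
    have hq0 : q n 0 ω = X i0 ω := by
      have h := hσ ⟨0, hn0⟩
      rw [hi0def]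
      simpa using h
    have hq1 : q n 1 ω = X i1 ω := by
      have h := hσ ⟨1, h1n⟩
      rw [hi1def]
      simpa using h
    have hi0n : i0 < n := (σ ⟨0, hn0⟩).isLt
    have hi1n : i1 < n := (σ ⟨1, h1n⟩).isLt
    have hi01 : i0 ≠ i1 := by
      intro h
      have h2 : σ ⟨0, hn0⟩ = σ ⟨1, h1n⟩ := Fin.ext h
      have h3 := σ.injective h2
      have h4 : (0:ℕ) = 1 := congrArg Fin.val h3
      omega
    have hqle : q n 0 ω ≤ q n 1 ω :=
      hmono n ω (Set.mem_Iio.2 hn0) (Set.mem_Iio.2 h1n) (by norm_num)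
    rw [hB]
    by_cases hposall : ∀ i, i < n → 0 < X i ω
    · by_cases hq1t : q n 1 ω ≤ t
      · refine Or.inr ?_
        rw [hB2]
        refine Or.inl ?_
        refine Set.mem_biUnion (Finset.mem_range.2 hi1n) ?_
        refine Set.mem_biUnion (Finset.mem_erase.2 ⟨hi01, Finset.mem_range.2 hi0n⟩) ?_
        rw [hW]
        show (X i1 ω, X i0 ω) ∈ Sprod
        rw [hSprod]
        refine ⟨hposall i1 hi1n, ?_, ?_, ?_⟩
        · rw [← hq1]; exact hq1t
        · show (1 - δ) * X i1 ω < X i0 ω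
          rw [← hq0, ← hq1]; exact hω
        · show X i0 ω ≤ X i1 ω
          rw [← hq0, ← hq1]; exact hqle
      · push_neg at hq1t
        have hsec : ∀ k, k < n → k ≠ i0 → t < X k ω := by
          intro k hk hki
          set m : Fin n := σ.symm ⟨k, hk⟩ with hm
          have hXk : q n (m:ℕ) ω = X k ω := by
            have h5 := hσ m
            rw [hm, Equiv.apply_symm_apply] at h5
            exact h5
          have hm0 : (m:ℕ) ≠ 0 := by
            intro h
            apply hki
            have h6 : m = ⟨0, hn0⟩ := Fin.ext h
            have h7 : σ m = ⟨k, hk⟩ := by rw [hm]; exact σ.apply_symm_apply _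
            rw [h6] at h7
            rw [hi0def, h7]
          have h1m : (1:ℕ) ≤ (m:ℕ) := Nat.one_le_iff_ne_zero.2 hm0
          have h8 := hmono n ω (Set.mem_Iio.2 h1n) (Set.mem_Iio.2 m.isLt) h1m
          simp only [hXk] at h8
          exact lt_of_lt_of_le hq1t h8
        refine Or.inl ?_
        rw [hB1]
        by_cases hi0t : t < X i0 ω
        · refine Or.inl ?_
          rw [hA0]
          refine Set.mem_iInter₂.2 fun i hi => ?_
          rw [Set.mem_preimage, Set.mem_Ioi]
          by_cases h : i = i0
          · rw [h]; exact hi0t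
          · exact hsec i (Finset.mem_range.1 hi) h
        · push_neg at hi0t
          refine Or.inr ?_
          refine Set.mem_biUnion (Finset.mem_range.2 hi0n) ?_
          simp only [hAs]
          refine Set.mem_iInter₂.2 fun i hi => ?_
          rw [Set.mem_preimage]
          by_cases h : i = i0
          · rw [if_pos h, h, Set.mem_Iic]; exact hi0t
          · rw [if_neg h, Set.mem_Ioi]
            exact hsec i (Finset.mem_range.1 hi) h
    · push_neg at hposall
      obtain ⟨i, hin, hile⟩ := hposall
      refine Or.inr ?_
      rw [hB2]
      refine Or.inr ?_
      rw [hNn]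
      refine Set.mem_biUnion (Finset.mem_range.2 hin) ?_
      rw [Set.mem_preimage, Set.mem_Iic]
      exact hile
  have hn2R : (2:ℝ) ≤ (n:ℝ) := by exact_mod_cast hn2
  have hB1prob : ℙ B1 ≤ ENNReal.ofReal (η / 3) := by
    have hr1 : r ≤ 1 := prob_le_one
    have step1 : ℙ B1 ≤ r ^ n + (n : ENNReal) * (Pm * r ^ (n - 1)) := by
      rw [hB1]
      refine le_trans (measure_union_le _ _) ?_
      refine add_le_add (le_of_eq hA0prob) ?_
      refine le_trans (measure_biUnion_finset_le _ _) ?_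
      rw [Finset.sum_congr rfl hAsprob, Finset.sum_const, Finset.card_range, nsmul_eq_mul]
    have step2 : r ^ n ≤ r ^ (n - 1) := by
      calc r ^ n = r ^ (n - 1) * r ^ 1 := by rw [← pow_add]; congr 1; omega
      _ ≤ r ^ (n - 1) * 1 := mul_le_mul_right (by simpa using hr1) _
      _ = r ^ (n - 1) := mul_one _
    have step3 : ℙ B1 ≤ (1 + (n:ENNReal) * Pm) * r ^ (n - 1) := by
      rw [add_mul, one_mul]
      refine le_trans step1 (add_le_add step2 (le_of_eq (mul_assoc _ _ _).symm))
    have hofreal : (1 + (n:ENNReal) * Pm) * r ^ (n - 1)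
        = ENNReal.ofReal ((1 + (n:ℝ) * p) * (1 - p) ^ (n - 1)) := by
      rw [hPmval, hrval, ← ENNReal.ofReal_pow (by linarith : (0:ℝ) ≤ 1 - p)]
      have hnp : (n:ENNReal) * ENNReal.ofReal p = ENNReal.ofReal ((n:ℝ) * p) := by
        rw [ENNReal.ofReal_mul (Nat.cast_nonneg n), ENNReal.ofReal_natCast]
      rw [hnp]
      have h1 : (1:ENNReal) + ENNReal.ofReal ((n:ℝ) * p) = ENNReal.ofReal (1 + (n:ℝ) * p) := by
        rw [ENNReal.ofReal_add zero_le_one (mul_nonneg (Nat.cast_nonneg n) hp0),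
          ENNReal.ofReal_one]
      rw [h1, ← ENNReal.ofReal_mul (by positivity : (0:ℝ) ≤ 1 + (n:ℝ) * p)]
    have hreal : (1 + (n:ℝ) * p) * (1 - p) ^ (n - 1) ≤ η / 3 := by
      have h1 : (n:ℝ) * p ≤ 2 * c := by
        have h2 := mul_le_mul_of_nonneg_left hphigh (le_of_lt hnR)
        calc (n:ℝ) * p ≤ (n:ℝ) * (2 * c / n) := h2
        _ = 2 * c := by field_simp
      have ha : (0:ℝ) ≤ 1 - p := by linarith
      have h2 : (1 - p) ^ (n - 1) ≤ Real.exp (-c / 2) := by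
        have hb : 1 - p ≤ Real.exp (-(c / n)) := by
          have h3 := Real.add_one_le_exp (-(c / (n:ℝ)))
          have h4 : c / (n:ℝ) ≤ p := hplow
          linarith
        have h3 : (1 - p) ^ (n - 1) ≤ Real.exp (-(c / n)) ^ (n - 1) :=
          pow_le_pow_left₀ ha hb (n - 1)
        have h4 : Real.exp (-(c / (n:ℝ))) ^ (n - 1) = Real.exp (((n - 1 : ℕ):ℝ) * (-(c / n))) := by
          rw [Real.exp_nat_mul]
        rw [h4] at h3
        refine le_trans h3 (Real.exp_le_exp.2 ?_)
        have h5 : ((n - 1 : ℕ):ℝ) = (n:ℝ) - 1 := by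
          rw [Nat.cast_sub (by omega : 1 ≤ n)]
          norm_num
        rw [h5]
        have h6 : (n:ℝ) / 2 ≤ (n:ℝ) - 1 := by linarith
        have h7 : ((n:ℝ) / 2) * (c / n) ≤ ((n:ℝ) - 1) * (c / n) :=
          mul_le_mul_of_nonneg_right h6 (by positivity)
        have h8 : ((n:ℝ) / 2) * (c / n) = c / 2 := by
          field_simp
        have h9 : ((n:ℝ) - 1) * (-(c / n)) = -(((n:ℝ) - 1) * (c / n)) := by ring
        rw [h9]
        linarith
      have h9 : (0:ℝ) ≤ 1 + (n:ℝ) * p := by positivity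
      calc (1 + (n:ℝ) * p) * (1 - p) ^ (n - 1) ≤ (1 + 2 * c) * Real.exp (-c / 2) :=
        mul_le_mul (by linarith) h2 (pow_nonneg ha _) (by linarith)
      _ ≤ η / 3 := hc
    rw [hofreal] at step3
    exact le_trans step3 (ENNReal.ofReal_le_ofReal hreal)
  have hB2prob : ℙ B2 ≤ ENNReal.ofReal (η / 3) := by
    rw [hB2]
    refine le_trans (measure_union_le _ _) ?_
    rw [hNnprob, add_zero]
    refine le_trans (measure_biUnion_finset_le _ _) ?_
    have hinner : ∀ j ∈ Finset.range n, ℙ (⋃ i ∈ (Finset.range n).erase j, W i j)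
        ≤ (n:ENNReal) * ENNReal.ofReal (ε * p * p) := by
      intro j hj
      refine le_trans (measure_biUnion_finset_le _ _) ?_
      have h1 : ∀ i ∈ (Finset.range n).erase j, ℙ (W i j) ≤ ENNReal.ofReal (ε * p * p) :=
        fun i hi => hWprob i j (Finset.ne_of_mem_erase hi)
      refine le_trans (Finset.sum_le_sum h1) ?_
      rw [Finset.sum_const, nsmul_eq_mul]
      refine mul_le_mul_left ?_ _
      have h2 : ((Finset.range n).erase j).card ≤ n :=
        le_trans (Finset.card_le_card (Finset.erase_subset _ _)) (le_of_eq (Finset.card_range n))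
      exact_mod_cast Nat.cast_le.2 h2
    refine le_trans (Finset.sum_le_sum hinner) ?_
    rw [Finset.sum_const, Finset.card_range, nsmul_eq_mul]
    have heq : ((n:ENNReal)) * ((n:ENNReal) * ENNReal.ofReal (ε * p * p))
        = ENNReal.ofReal ((n:ℝ) * ((n:ℝ) * (ε * p * p))) := by
      rw [ENNReal.ofReal_mul (Nat.cast_nonneg n), ENNReal.ofReal_mul (Nat.cast_nonneg n),
        ENNReal.ofReal_natCast]
    rw [heq]
    apply ENNReal.ofReal_le_ofReal
    have ha : ε * p ≤ ε * (2 * c / n) := mul_le_mul_of_nonneg_left hphigh hε0.le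
    have hb : ε * p * p ≤ ε * (2 * c / n) * p := mul_le_mul_of_nonneg_right ha hp0
    have hcq : ε * (2 * c / n) * p ≤ ε * (2 * c / n) * (2 * c / n) :=
      mul_le_mul_of_nonneg_left hphigh (mul_nonneg hε0.le (by positivity))
    have h1 : ε * p * p ≤ ε * (2 * c / n) * (2 * c / n) := le_trans hb hcq
    have h2 : (n:ℝ) * ((n:ℝ) * (ε * (2 * c / n) * (2 * c / n))) = 4 * c ^ 2 * ε := by
      field_simp
      ring
    calc (n:ℝ) * ((n:ℝ) * (ε * p * p))
        ≤ (n:ℝ) * ((n:ℝ) * (ε * (2 * c / n) * (2 * c / n))) :=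
          mul_le_mul_of_nonneg_left (mul_le_mul_of_nonneg_left h1 (Nat.cast_nonneg n))
            (Nat.cast_nonneg n)
    _ = 4 * c ^ 2 * ε := h2
    _ ≤ η / 3 := hε2
  have hBprob : ℙ B ≤ ENNReal.ofReal η := by
    calc ℙ B ≤ ℙ B1 + ℙ B2 := measure_union_le _ _
    _ ≤ ENNReal.ofReal (η / 3) + ENNReal.ofReal (η / 3) :=
        add_le_add hB1prob hB2prob
    _ = ENNReal.ofReal (η / 3 + η / 3) := (ENNReal.ofReal_add (by positivity) (by positivity)).symm
    _ ≤ ENNReal.ofReal η := ENNReal.ofReal_le_ofReal (by linarith)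
  calc ENNReal.ofReal (1 - η) = 1 - ENNReal.ofReal η := by
        rw [← ENNReal.ofReal_one, ← ENNReal.ofReal_sub _ hη.le]
  _ ≤ 1 - ℙ B := tsub_le_tsub_left hBprob 1
  _ = ℙ Bᶜ := (prob_compl_eq_one_sub hBmeas).symm
  _ ≤ ℙ {ω | q n 0 ω ≤ (1 - δ) * q n 1 ω} :=
      measure_mono (Set.compl_subset_comm.2 hincl)
end

section
/- Lemma 3.5. Assume conditions (a), (b), and (c). Then (1/n)·∑_{j=1}^n q_1/q_j³ → 0 in probability as n → ∞. -/
open MeasureTheory ProbabilityTheory Filter Set Asymptotics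

open scoped ENNReal Classical

section AuxLemmas

lemma telescope_g {a b : ℕ} (hab : a ≤ b) (g : ℕ → ℝ) :
    ∑ j ∈ Finset.Ico a b, (g j - g (j+1)) = g a - g b := by
  induction b, hab using Nat.le_induction with
  | base => simp
  | succ b hab ih =>
      rw [Finset.sum_Ico_succ_top hab, ih]
      ring

lemma term_le_telescope {j : ℕ} (hj : 1 ≤ j) :
    1 / (((j:ℝ)+1) * Real.sqrt ((j:ℝ)+1)) ≤
      2 * (1 / Real.sqrt (j:ℝ) - 1 / Real.sqrt ((j:ℝ)+1)) := by
  have hj1 : (1:ℝ) ≤ (j:ℝ) := by exact_mod_cast hj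
  set s := Real.sqrt (j:ℝ) with hs
  set t := Real.sqrt ((j:ℝ)+1) with ht
  have hs1 : 1 ≤ s := by
    rw [hs, show (1:ℝ) = Real.sqrt 1 by simp]
    exact Real.sqrt_le_sqrt hj1
  have hs0 : 0 < s := lt_of_lt_of_le one_pos hs1
  have hst : s ≤ t := Real.sqrt_le_sqrt (by linarith)
  have ht0 : 0 < t := lt_of_lt_of_le hs0 hst
  have hs2 : s^2 = (j:ℝ) := Real.sq_sqrt (by linarith)
  have ht2 : t^2 = (j:ℝ)+1 := Real.sq_sqrt (by linarith)
  have hdiff : (t - s) * (t + s) = 1 := by nlinarith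
  have hrw : 1 / s - 1 / t = (t - s) / (s * t) := by
    field_simp
  have h1 : s * t * (t + s) ≤ 2 * (t ^ 2 * t) := by nlinarith
  have h2 : 1 * (s * t) ≤ 2 * (t - s) * (t ^ 2 * t) := by
    have h3 : (1 * (s * t)) * (t + s) ≤ (2 * (t - s) * (t ^ 2 * t)) * (t + s) := by
      calc (1 * (s * t)) * (t + s) = s * t * (t + s) := by ring
      _ ≤ 2 * (t ^ 2 * t) := h1
      _ = 2 * (t ^ 2 * t) * ((t - s) * (t + s)) := by rw [hdiff]; ring
      _ = (2 * (t - s) * (t ^ 2 * t)) * (t + s) := by ring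
    exact le_of_mul_le_mul_right h3 (by positivity)
  have : ((j:ℝ)+1) * t = t ^ 2 * t := by rw [ht2]
  rw [this, hrw, mul_div_assoc' 2 _ (s*t), div_le_div_iff₀ (by positivity) (by positivity)]
  calc 1 * (s * t) ≤ 2 * (t - s) * (t ^ 2 * t) := h2
  _ = 2 * (t - s) * (t ^ 2 * t) := rfl

lemma tail_sum_le {a b : ℕ} (ha : 1 ≤ a) :
    ∑ j ∈ Finset.Ico a b, 1 / (((j:ℝ)+1) * Real.sqrt ((j:ℝ)+1)) ≤ 2 / Real.sqrt a := by
  rcases le_or_gt a b with hab | hab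
  · have key : ∑ j ∈ Finset.Ico a b, 1 / (((j:ℝ)+1) * Real.sqrt ((j:ℝ)+1)) ≤
        ∑ j ∈ Finset.Ico a b, (2 * (1 / Real.sqrt (j:ℝ) - 1 / Real.sqrt ((j:ℝ)+1))) := by
      apply Finset.sum_le_sum
      intro j hj
      have : 1 ≤ j := le_trans ha (Finset.mem_Ico.mp hj).1
      exact term_le_telescope this
    have tele : ∑ j ∈ Finset.Ico a b, (2 * (1 / Real.sqrt (j:ℝ) - 1 / Real.sqrt ((j:ℝ)+1)))
        = 2 * (1 / Real.sqrt (a:ℝ) - 1 / Real.sqrt (b:ℝ)) := by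
      rw [← Finset.mul_sum]
      congr 1
      have := telescope_g hab (fun j => 1 / Real.sqrt (j:ℝ))
      simpa using this
    rw [tele] at key
    refine key.trans ?_
    have hb : 0 ≤ 1 / Real.sqrt (b:ℝ) := by positivity
    rw [div_eq_mul_one_div 2 (Real.sqrt (a:ℝ))]
    nlinarith
  · rw [Finset.Ico_eq_empty (by omega)]
    simp
    positivity

lemma pow_self_le_fact_exp (k : ℕ) : (k:ℝ)^k ≤ (k.factorial : ℝ) * Real.exp 1 ^ k := by
  have h1 : (k:ℝ)^k / (k.factorial : ℝ) ≤ Real.exp k := by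
    calc (k:ℝ)^k / (k.factorial : ℝ) ≤ ∑ i ∈ Finset.range (k+1), (k:ℝ)^i / (i.factorial : ℝ) := by
          exact Finset.single_le_sum (f := fun i => (k:ℝ)^i / (i.factorial : ℝ))
            (fun i _ => by positivity) (Finset.self_mem_range_succ k)
    _ ≤ Real.exp k := Real.sum_le_exp_of_nonneg (by positivity) (k+1)
  have h2 : Real.exp (k:ℝ) = Real.exp 1 ^ k := by
    rw [← Real.exp_nat_mul]; norm_num
  rw [div_le_iff₀ (by positivity : (0:ℝ) < (k.factorial:ℝ))] at h1
  rw [h2] at h1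
  linarith

lemma geom_series_le {s : ℝ} (h0 : 0 ≤ s) (h1 : s < 1) (n : ℕ) :
    ∑ j ∈ Finset.range n, s^j ≤ 1/(1-s) := by
  rw [geom_sum_eq (by intro h; rw [h] at h1; exact lt_irrefl 1 h1) n]
  rw [show (s^n-1)/(s-1) = (1-s^n)/(1-s) by rw [← neg_div_neg_eq]; ring_nf]
  have h2 : (0:ℝ) ≤ s^n := pow_nonneg h0 n
  gcongr
  · linarith

lemma det_bound (n : ℕ) (q : ℕ → ℝ) (c η δ ζ : ℝ)
    (hc : 0 < c) (hη : 0 < η) (hδ : 0 < δ) (hζ : 0 < ζ) (hζδ : ζ ≤ δ) (hn : 0 < n)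
    (hqpos : ∀ j < n, 0 < q j) (hq0le : ∀ j < n, q 0 ≤ q j) (hq0ζ : q 0 ≤ ζ)
    (hii : ∀ j < n, q j ≤ δ → c*((j:ℝ)+1) < 4*(n:ℝ)*η*(q j)^2) :
    ∑ j ∈ Finset.range n, q 0/(q j)^3 ≤ (n:ℝ)*(ζ/δ^3 + 20*η/c) := by
  have hq00 : 0 < q 0 := hqpos 0 hn
  set M : ℝ := 4*(n:ℝ)*η/c with hMdef
  have hn1 : (1:ℝ) ≤ (n:ℝ) := by exact_mod_cast hn
  have hM0 : 0 < M := by positivity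
  set J : ℝ := M * (q 0)^2 with hJdef
  have hJ1 : 1 < J := by
    have h00 := hii 0 hn (le_trans hq0ζ hζδ)
    rw [hJdef, hMdef, div_mul_eq_mul_div, lt_div_iff₀ hc]
    push_cast at h00 ⊢
    nlinarith
  have hJ0 : 0 < J := lt_trans one_pos hJ1
  set j₀ : ℕ := ⌈J - 1⌉₊ with hj₀def
  have hj₀1 : 1 ≤ j₀ := Nat.one_le_iff_ne_zero.mpr (by
    rw [hj₀def, ← Nat.pos_iff_ne_zero, Nat.ceil_pos]; linarith)
  have hj₀ge : J - 1 ≤ (j₀:ℝ) := Nat.le_ceil _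
  have hj₀half : J / 2 ≤ (j₀:ℝ) := by
    rcases le_or_gt J 2 with h | h
    · have : (1:ℝ) ≤ (j₀:ℝ) := by exact_mod_cast hj₀1
      linarith
    · linarith
  -- per-term bound
  have hterm : ∀ j ∈ Finset.range n, q 0/(q j)^3 ≤
      ζ/δ^3 + min (1/(q 0)^2)
        (q 0 * (M*Real.sqrt M) / ((((j:ℝ))+1)*Real.sqrt (((j:ℝ))+1))) := by
    intro j hj
    rw [Finset.mem_range] at hj
    have hqj : 0 < q j := hqpos j hj
    have hq0j : q 0 ≤ q j := hq0le j hj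
    rcases le_or_gt (q j) δ with hle | hgt
    · have hmin : q 0/(q j)^3 ≤ min (1/(q 0)^2)
          (q 0 * (M*Real.sqrt M) / ((((j:ℝ))+1)*Real.sqrt (((j:ℝ))+1))) := by
        apply le_min
        · calc q 0/(q j)^3 ≤ q 0/(q 0)^3 :=
            div_le_div_of_nonneg_left hq00.le (by positivity) (pow_le_pow_left₀ hq00.le hq0j 3)
          _ = 1/(q 0)^2 := by field_simp
        · have hj2 : ((j:ℝ)+1)/M ≤ (q j)^2 := by
            have h := hii j hj hle
            rw [div_le_iff₀ hM0, hMdef, mul_div_assoc']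
            rw [le_div_iff₀ hc]
            nlinarith
          have hjM0 : 0 < ((j:ℝ)+1)/M := by positivity
          have hqju : Real.sqrt (((j:ℝ)+1)/M) ≤ q j := by
            rw [show q j = Real.sqrt ((q j)^2) from (Real.sqrt_sq hqj.le).symm]
            exact Real.sqrt_le_sqrt hj2
          have hcube : (((j:ℝ)+1)/M) * Real.sqrt (((j:ℝ)+1)/M) ≤ (q j)^3 := by
            have : (q j)^3 = (q j)^2 * q j := by ring
            rw [this]
            exact mul_le_mul hj2 hqju (Real.sqrt_nonneg _) (by positivity)
          calc q 0/(q j)^3 ≤ q 0/((((j:ℝ)+1)/M) * Real.sqrt (((j:ℝ)+1)/M)) :=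
                div_le_div_of_nonneg_left hq00.le
                  (mul_pos hjM0 (Real.sqrt_pos.mpr hjM0)) hcube
          _ = q 0 * (M*Real.sqrt M) / ((((j:ℝ))+1)*Real.sqrt (((j:ℝ))+1)) := by
                rw [Real.sqrt_div (by positivity : (0:ℝ) ≤ (j:ℝ)+1) M]
                have hsM : (0:ℝ) < Real.sqrt M := Real.sqrt_pos.mpr hM0
                have hsj : (0:ℝ) < Real.sqrt ((j:ℝ)+1) := Real.sqrt_pos.mpr (by positivity)
                field_simp
      have : (0:ℝ) ≤ ζ/δ^3 := by positivity
      linarith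
    · have h1 : q 0/(q j)^3 ≤ ζ/δ^3 := by
        calc q 0/(q j)^3 ≤ ζ/(q j)^3 :=
              div_le_div_of_nonneg_right hq0ζ (by positivity)
        _ ≤ ζ/δ^3 :=
              div_le_div_of_nonneg_left hζ.le (by positivity) (pow_le_pow_left₀ hδ.le hgt.le 3)
      have h2 : (0:ℝ) ≤ min (1/(q 0)^2)
          (q 0 * (M*Real.sqrt M) / ((((j:ℝ))+1)*Real.sqrt (((j:ℝ))+1))) := by
        apply le_min <;> positivity
      linarith
  have hsum := Finset.sum_le_sum hterm
  rw [Finset.sum_add_distrib, Finset.sum_const, Finset.card_range] at hsum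
  -- bound the sum of minima
  set F : ℕ → ℝ := fun j => min (1/(q 0)^2)
      (q 0 * (M*Real.sqrt M) / ((((j:ℝ))+1)*Real.sqrt (((j:ℝ))+1))) with hFdef
  have hFsum : ∑ j ∈ Finset.range n, F j ≤ 5*M := by
    rw [← Finset.sum_filter_add_sum_filter_not (Finset.range n) (fun j : ℕ => ((j:ℝ)+1 ≤ J))]
    have part1 : ∑ j ∈ Finset.filter (fun j : ℕ => ((j:ℝ)+1 ≤ J)) (Finset.range n), F j ≤ 2*M := by
      calc ∑ j ∈ Finset.filter (fun j : ℕ => ((j:ℝ)+1 ≤ J)) (Finset.range n), F j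
          ≤ ∑ _j ∈ Finset.filter (fun j : ℕ => ((j:ℝ)+1 ≤ J)) (Finset.range n), 1/(q 0)^2 := by
            apply Finset.sum_le_sum
            intro j _
            exact min_le_left _ _
      _ = (Finset.filter (fun j : ℕ => ((j:ℝ)+1 ≤ J)) (Finset.range n)).card * (1/(q 0)^2) := by
            rw [Finset.sum_const, nsmul_eq_mul]
      _ ≤ (J+1) * (1/(q 0)^2) := by
            gcongr
            have hsub : Finset.filter (fun j : ℕ => ((j:ℝ)+1 ≤ J)) (Finset.range n) ⊆
                Finset.range (⌊J⌋₊ + 1) := by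
              intro j hj
              rw [Finset.mem_filter] at hj
              rw [Finset.mem_range, Nat.lt_succ_iff, Nat.le_floor_iff hJ0.le]
              have := hj.2
              linarith
            calc ((Finset.filter (fun j : ℕ => ((j:ℝ)+1 ≤ J)) (Finset.range n)).card : ℝ)
                ≤ ((⌊J⌋₊ + 1 : ℕ) : ℝ) := by
                  have hcc := Finset.card_le_card hsub
                  rw [Finset.card_range] at hcc
                  exact_mod_cast hcc
            _ ≤ J + 1 := by
                push_cast
                have := Nat.floor_le hJ0.le
                linarith
      _ ≤ 2*J * (1/(q 0)^2) := by
            have h9 : (0:ℝ) ≤ 1/(q 0)^2 := by positivity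
            nlinarith
      _ = 2*M := by rw [hJdef]; field_simp
    have part2 : ∑ j ∈ Finset.filter (fun j : ℕ => ¬((j:ℝ)+1 ≤ J)) (Finset.range n), F j ≤ 3*M := by
      have hsub : Finset.filter (fun j : ℕ => ¬((j:ℝ)+1 ≤ J)) (Finset.range n) ⊆ Finset.Ico j₀ n := by
        intro j hj
        rw [Finset.mem_filter] at hj
        rw [Finset.mem_Ico]
        refine ⟨?_, Finset.mem_range.mp hj.1⟩
        have h2 := hj.2
        push_neg at h2
        rw [hj₀def]
        exact Nat.ceil_le.mpr (by linarith)
      calc ∑ j ∈ Finset.filter (fun j : ℕ => ¬((j:ℝ)+1 ≤ J)) (Finset.range n), F j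
          ≤ ∑ j ∈ Finset.Ico j₀ n, F j := by
            apply Finset.sum_le_sum_of_subset_of_nonneg hsub
            intro j _ _
            exact le_min (by positivity) (by positivity)
      _ ≤ ∑ j ∈ Finset.Ico j₀ n,
            q 0 * (M*Real.sqrt M) * (1 / ((((j:ℝ))+1)*Real.sqrt (((j:ℝ))+1))) := by
            apply Finset.sum_le_sum
            intro j _
            rw [mul_one_div]
            exact min_le_right _ _
      _ = q 0 * (M*Real.sqrt M) *
            ∑ j ∈ Finset.Ico j₀ n, 1 / ((((j:ℝ))+1)*Real.sqrt (((j:ℝ))+1)) := by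
            rw [Finset.mul_sum]
      _ ≤ q 0 * (M*Real.sqrt M) * (2 / Real.sqrt j₀) := by
            have hnn : (0:ℝ) ≤ q 0 * (M*Real.sqrt M) := by positivity
            exact mul_le_mul_of_nonneg_left (tail_sum_le hj₀1) hnn
      _ ≤ 3*M := by
            have hq0M : q 0 * Real.sqrt M = Real.sqrt J := by
              rw [hJdef, Real.sqrt_mul hM0.le, Real.sqrt_sq hq00.le]; ring
            have hsJ : 0 < Real.sqrt J := Real.sqrt_pos.mpr hJ0
            have hsj₀ : Real.sqrt J / Real.sqrt 2 ≤ Real.sqrt (j₀:ℝ) := by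
              rw [← Real.sqrt_div hJ0.le]
              exact Real.sqrt_le_sqrt hj₀half
            have hsj₀0 : 0 < Real.sqrt (j₀:ℝ) := by
              have : (0:ℝ) < (j₀:ℝ) := by exact_mod_cast hj₀1
              exact Real.sqrt_pos.mpr this
            have hs2 : 0 < Real.sqrt 2 := by positivity
            have key : q 0 * (M*Real.sqrt M) * (2 / Real.sqrt j₀)
                = 2 * M * (Real.sqrt J / Real.sqrt (j₀:ℝ)) := by
              field_simp
              rw [← hq0M]
            rw [key]
            have hfrac : Real.sqrt J / Real.sqrt (j₀:ℝ) ≤ Real.sqrt 2 := by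
              rw [div_le_iff₀ hsj₀0]
              calc Real.sqrt J = Real.sqrt 2 * (Real.sqrt J / Real.sqrt 2) := by
                    field_simp
              _ ≤ Real.sqrt 2 * Real.sqrt (j₀:ℝ) := by gcongr
            have hsqrt2 : Real.sqrt 2 ≤ 1.5 := by
              rw [show (1.5:ℝ) = Real.sqrt (1.5^2) from (Real.sqrt_sq (by norm_num)).symm]
              apply Real.sqrt_le_sqrt; norm_num
            calc 2 * M * (Real.sqrt J / Real.sqrt (j₀:ℝ)) ≤ 2 * M * 1.5 := by
                  gcongr
                  exact le_trans hfrac hsqrt2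
            _ = 3*M := by ring
    linarith
  have hfinal : (n:ℝ) * (ζ/δ^3) + ∑ j ∈ Finset.range n, F j ≤ (n:ℝ)*(ζ/δ^3 + 20*η/c) := by
    have h5 : 5*M = (n:ℝ)*(20*η/c) := by rw [hMdef]; field_simp; ring
    have := hFsum
    nlinarith
  calc ∑ j ∈ Finset.range n, q 0/(q j)^3 ≤ (n:ℝ) * (ζ/δ^3) + ∑ j ∈ Finset.range n, F j := by
        rw [hFdef]; rw [nsmul_eq_mul] at hsum; exact hsum
  _ ≤ (n:ℝ)*(ζ/δ^3 + 20*η/c) := hfinal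

lemma meas_D_le (μ : Measure ℝ) (t : ℝ≥0∞) :
    μ {y : ℝ | ∃ x, y < x ∧ μ (Set.Iio x) ≤ t} ≤ t := by
  set D := {y : ℝ | ∃ x, y < x ∧ μ (Set.Iio x) ≤ t} with hDdef
  have hD : D = ⋃ r : {r : ℚ // μ (Set.Iio (r:ℝ)) ≤ t}, Set.Iio ((r:ℚ):ℝ) := by
    ext y
    simp only [hDdef, mem_setOf_eq, mem_iUnion, mem_Iio]
    constructor
    · rintro ⟨x, hyx, hx⟩
      obtain ⟨r, hr1, hr2⟩ := exists_rat_btwn hyx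
      exact ⟨⟨r, le_trans (measure_mono (Iio_subset_Iio hr2.le)) hx⟩, hr1⟩
    · rintro ⟨r, hr⟩
      exact ⟨(r:ℝ), hr, r.2⟩
  have hdir : Directed (· ⊆ ·)
      (fun r : {r : ℚ // μ (Set.Iio (r:ℝ)) ≤ t} => Set.Iio ((r:ℚ):ℝ)) := by
    intro r s
    rcases le_total (r:ℚ) (s:ℚ) with h | h
    · exact ⟨s, Iio_subset_Iio (by exact_mod_cast h), subset_rfl⟩
    · exact ⟨r, subset_rfl, Iio_subset_Iio (by exact_mod_cast h)⟩
  rw [hD, hdir.measure_iUnion]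
  exact iSup_le fun r => r.2

lemma count_event_le {Ω : Type*} [MeasureSpace Ω] [IsProbabilityMeasure (ℙ : Measure Ω)]
    (X : ℕ → Ω → ℝ) (hXindep : iIndepFun X ℙ)
    (D : Set ℝ) (hD : MeasurableSet D) (n k : ℕ) (p : ℝ≥0∞)
    (hp : ∀ i, ℙ (X i ⁻¹' D) ≤ p) :
    ℙ {ω | k ≤ (Finset.filter (fun i => X i ω ∈ D) (Finset.range n)).card}
      ≤ (n.choose k) * p^k := by
  have hsub : {ω | k ≤ (Finset.filter (fun i => X i ω ∈ D) (Finset.range n)).card}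
      ⊆ ⋃ S ∈ (Finset.range n).powersetCard k, ⋂ i ∈ S, X i ⁻¹' D := by
    intro ω hω
    obtain ⟨S, hS1, hS2⟩ := Finset.exists_subset_card_eq hω
    simp only [mem_iUnion, mem_iInter]
    refine ⟨S, ?_, ?_⟩
    · rw [Finset.mem_powersetCard]
      exact ⟨hS1.trans (Finset.filter_subset _ _), hS2⟩
    · intro i hi
      exact (Finset.mem_filter.mp (hS1 hi)).2
  calc ℙ {ω | k ≤ (Finset.filter (fun i => X i ω ∈ D) (Finset.range n)).card}
      ≤ ℙ (⋃ S ∈ (Finset.range n).powersetCard k, ⋂ i ∈ S, X i ⁻¹' D) := measure_mono hsub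
  _ ≤ ∑ S ∈ (Finset.range n).powersetCard k, ℙ (⋂ i ∈ S, X i ⁻¹' D) :=
      measure_biUnion_finset_le _ _
  _ ≤ ∑ _S ∈ (Finset.range n).powersetCard k, p^k := by
      apply Finset.sum_le_sum
      intro S hS
      have heq : ℙ (⋂ i ∈ S, X i ⁻¹' D) = ∏ i ∈ S, ℙ (X i ⁻¹' D) :=
        hXindep.meas_biInter (fun i _ => ⟨D, hD, rfl⟩)
      rw [heq]
      calc ∏ i ∈ S, ℙ (X i ⁻¹' D) ≤ ∏ _i ∈ S, p := Finset.prod_le_prod' (fun i _ => hp i)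
      _ = p ^ S.card := Finset.prod_const p
      _ = p ^ k := by rw [(Finset.mem_powersetCard.mp hS).2]
  _ = (n.choose k) * p^k := by
      rw [Finset.sum_const, Finset.card_powersetCard, Finset.card_range, nsmul_eq_mul]

end AuxLemmas
set_option maxHeartbeats 1000000 in
/-- Lemma 3.5: under conditions (a), (b), (c), for the increasing order statistics
`q n 0 ≤ … ≤ q n (n-1)` of `n` i.i.d. samples from the distribution function `G`
of a strictly positive, bounded random variable,
`(1/n) ∑_{j=1}^n q_1/q_j³ → 0` in probability as `n → ∞`. -/
theorem average_ratio_cubes_tendsto_zero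
    {Ω : Type*} [MeasureSpace Ω] [IsProbabilityMeasure (ℙ : Measure Ω)]
    (μ : Measure ℝ) [IsProbabilityMeasure μ]
    (G : ℝ → ℝ) (hG : ∀ x, G x = (μ (Set.Iic x)).toReal)
    (hpos : μ (Set.Iic 0) = 0)
    -- boundedness of the sampled random variable
    (hbdd : ∃ B : ℝ, μ (Set.Iic B) = 1)
    -- condition (a)
    (condA : ∀ x y : ℕ → ℝ, (∀ k, 0 < x k) → (∀ k, 0 < y k) →
      Tendsto x atTop (nhds 0) → Tendsto y atTop (nhds 0) →
      Tendsto (fun k => x k / y k) atTop (nhds 1) →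
      Tendsto (fun k => G (x k) / G (y k)) atTop (nhds 1))
    -- condition (b)
    (condB : ∀ x y : ℕ → ℝ, (∀ k, 0 < x k) → (∀ k, 0 < y k) →
      Tendsto x atTop (nhds 0) → Tendsto y atTop (nhds 0) →
      (fun k => x k) =O[atTop] y →
      (fun k => G (x k)) =O[atTop] fun k => G (y k))
    -- condition (c)
    (condC : (fun x => G x) =o[nhdsWithin 0 (Set.Ioi 0)] fun x => x ^ 2 / Real.log (1 / x))
    (X : ℕ → Ω → ℝ)
    (hXmeas : ∀ i, Measurable (X i))
    (hXindep : iIndepFun X ℙ)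
    (hXlaw : ∀ i, Measure.map (X i) ℙ = μ)
    (q : ℕ → ℕ → Ω → ℝ)
    (hperm : ∀ n ω, ∃ σ : Equiv.Perm (Fin n), ∀ j : Fin n, q n (j : ℕ) ω = X ((σ j : Fin n) : ℕ) ω)
    (hmono : ∀ n ω, MonotoneOn (fun j => q n j ω) (Set.Iio n)) :
    ∀ ε > (0:ℝ), Tendsto
      (fun n : ℕ => ℙ {ω | ε ≤ |(1 / (n:ℝ)) * ∑ j ∈ Finset.range n, q n 0 ω / (q n j ω) ^ 3|})
      atTop (nhds 0) := by
  intro ε hε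
  have hμfin : ∀ s : Set ℝ, μ s ≠ ∞ := fun s => (measure_lt_top μ s).ne
  -- G is positive on positive reals (uses condition (a))
  have hGpos : ∀ x : ℝ, 0 < x → μ (Set.Iic x) ≠ 0 := by
    intro x hx h0
    have hxk : ∀ k : ℕ, 0 < x/((k:ℝ)+1) := fun k => by positivity
    have hseq : Tendsto (fun k : ℕ => x/((k:ℝ)+1)) atTop (nhds 0) := by
      have h2 := tendsto_one_div_add_atTop_nhds_zero_nat.const_mul x
      simp only [mul_zero] at h2
      refine h2.congr (fun k => by rw [mul_one_div])
    have hone : Tendsto (fun k : ℕ => (x/((k:ℝ)+1))/(x/((k:ℝ)+1))) atTop (nhds 1) := by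
      have : (fun k : ℕ => (x/((k:ℝ)+1))/(x/((k:ℝ)+1))) = fun _ => (1:ℝ) := by
        funext k; rw [div_self (ne_of_gt (hxk k))]
      rw [this]; exact tendsto_const_nhds
    have hcond := condA _ _ hxk hxk hseq hseq hone
    have hzero : ∀ k : ℕ, G (x/((k:ℝ)+1)) = 0 := by
      intro k
      rw [hG]
      have hle : μ (Set.Iic (x/((k:ℝ)+1))) ≤ μ (Set.Iic x) := by
        apply measure_mono
        apply Set.Iic_subset_Iic.mpr
        apply div_le_self hx.le
        have : (0:ℝ) ≤ (k:ℝ) := Nat.cast_nonneg k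
        linarith
      rw [h0, le_zero_iff] at hle
      rw [hle]
      simp
    have : (fun k : ℕ => G (x/((k:ℝ)+1)) / G (x/((k:ℝ)+1))) = fun _ => (0:ℝ) := by
      funext k; rw [hzero k]; simp
    rw [this] at hcond
    exact zero_ne_one (tendsto_nhds_unique tendsto_const_nhds hcond)
  rw [ENNReal.tendsto_nhds_zero]
  intro θ hθ
  -- a positive real below θ
  set t : ℝ≥0∞ := min θ 1 with htdef
  have ht0 : t ≠ 0 := (lt_min hθ zero_lt_one).ne'
  have httop : t ≠ ∞ := ne_top_of_le_ne_top (by norm_num) (min_le_right _ _)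
  set θ' : ℝ := t.toReal with hθ'def
  have hθ'0 : 0 < θ' := ENNReal.toReal_pos ht0 httop
  have hθ'1 : θ' ≤ 1 := by
    have h1 : t ≤ 1 := min_le_right _ _
    calc θ' ≤ (1:ℝ≥0∞).toReal := ENNReal.toReal_mono (by norm_num) h1
    _ = 1 := by norm_num
  have hofθ' : ENNReal.ofReal θ' ≤ θ := by
    rw [hθ'def, ENNReal.ofReal_toReal httop]
    exact min_le_left _ _
  -- constants
  set e1 : ℝ := Real.exp 1 with he1def
  have he2 : (2:ℝ) ≤ e1 := by
    have := Real.add_one_le_exp 1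
    rw [he1def]; linarith
  have he0 : (0:ℝ) < e1 := by linarith
  set c : ℝ := θ'/(8*e1) with hcdef
  have hc : 0 < c := by positivity
  have hce : c * e1 = θ'/8 := by rw [hcdef]; field_simp
  have hce8 : c * e1 ≤ 1/8 := by rw [hce]; linarith
  set η : ℝ := ε*c/50 with hηdef
  have hη0 : 0 < η := by positivity
  -- extract δ₁ from condition (c)
  have hcondC := condC.def hη0
  rw [eventually_nhdsWithin_iff, Metric.eventually_nhds_iff] at hcondC
  obtain ⟨u, hu0, hu⟩ := hcondC
  set δ₁ : ℝ := min (u/2) (Real.exp (-1)) with hδ₁def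
  have hδ₁0 : 0 < δ₁ := lt_min (by linarith) (Real.exp_pos _)
  have hδ₁e : δ₁ ≤ Real.exp (-1) := min_le_right _ _
  have hGbound : ∀ x : ℝ, 0 < x → x ≤ δ₁ → G x ≤ η * x^2 := by
    intro x hx hxδ
    have hdist : dist x 0 < u := by
      rw [Real.dist_eq, sub_zero, abs_of_pos hx]
      calc x ≤ δ₁ := hxδ
      _ ≤ u/2 := min_le_left _ _
      _ < u := by linarith
    have hb := hu hdist (Set.mem_Ioi.mpr hx)
    have hlog : 1 ≤ Real.log (1/x) := by
      have hxe : x ≤ Real.exp (-1) := le_trans hxδ hδ₁e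
      have hinv : Real.exp 1 ≤ 1/x := by
        rw [le_div_iff₀ hx]
        calc Real.exp 1 * x ≤ Real.exp 1 * Real.exp (-1) := by
              nlinarith [Real.exp_pos 1]
        _ = 1 := by rw [← Real.exp_add]; norm_num
      calc (1:ℝ) = Real.log (Real.exp 1) := (Real.log_exp 1).symm
      _ ≤ Real.log (1/x) := Real.log_le_log (Real.exp_pos 1) hinv
    have hGx : G x = ‖G x‖ := by
      rw [Real.norm_of_nonneg]
      rw [hG]; exact ENNReal.toReal_nonneg
    have hnorm2 : ‖x^2 / Real.log (1/x)‖ = x^2 / Real.log (1/x) := by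
      rw [Real.norm_of_nonneg]
      positivity
    rw [hGx]
    calc ‖G x‖ ≤ η * ‖x^2 / Real.log (1/x)‖ := hb
    _ = η * (x^2 / Real.log (1/x)) := by rw [hnorm2]
    _ ≤ η * x^2 := by
        apply mul_le_mul_of_nonneg_left _ hη0.le
        exact div_le_self (by positivity) hlog
  set δ : ℝ := δ₁/2 with hδdef
  have hδ0 : 0 < δ := by positivity
  set ζ : ℝ := min δ (ε*δ^3/4) with hζdef
  have hζ0 : 0 < ζ := lt_min hδ0 (by positivity)
  have hζδ : ζ ≤ δ := min_le_left _ _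
  -- the minimum escapes ζ with vanishing probability
  set r : ℝ≥0∞ := μ (Set.Ioi ζ) with hrdef
  have hr1 : r < 1 := by
    have hsplit : μ (Set.Iic ζ) + μ (Set.Ioi ζ) = 1 := by
      rw [← measure_union (Set.Iic_disjoint_Ioi le_rfl) measurableSet_Ioi]
      rw [Set.Iic_union_Ioi]
      exact measure_univ
    have hrle : r ≤ 1 := prob_le_one
    rcases lt_or_eq_of_le hrle with h | h
    · exact h
    · exfalso
      apply hGpos ζ hζ0
      rw [← hrdef, h] at hsplit
      have h1 : μ (Set.Iic ζ) + 1 = 0 + 1 := by rw [hsplit, zero_add]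
      exact WithTop.add_right_cancel ENNReal.one_ne_top h1
  have hrtend := ENNReal.tendsto_pow_atTop_nhds_zero_of_lt_one hr1
  have hev1 : ∀ᶠ n in atTop, r^n ≤ ENNReal.ofReal (θ'/2) :=
    (ENNReal.tendsto_nhds_zero.mp hrtend) _ (by
      apply ENNReal.ofReal_pos.mpr; linarith)
  filter_upwards [hev1, eventually_ge_atTop 1] with n hrn hn1
  have hn0 : 0 < n := hn1
  have hnR : (0:ℝ) < (n:ℝ) := by exact_mod_cast hn0
  -- events
  set tj : ℕ → ℝ := fun j => c*((j:ℝ)+1)/(n:ℝ) with htjdef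
  have htj0 : ∀ j, 0 ≤ tj j := fun j => by positivity
  set D : ℕ → Set ℝ := fun j =>
    {y : ℝ | ∃ x, y < x ∧ μ (Set.Iio x) ≤ ENNReal.ofReal (tj j)} with hDdef
  have hDmeas : ∀ j, MeasurableSet (D j) := by
    intro j
    have : D j = ⋃ x ∈ {x : ℝ | μ (Set.Iio x) ≤ ENNReal.ofReal (tj j)}, Set.Iio x := by
      ext y
      simp only [hDdef, mem_setOf_eq, mem_iUnion, mem_Iio]
      tauto
    rw [this]
    exact (isOpen_biUnion (fun x _ => isOpen_Iio)).measurableSet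
  set W : ℕ → Set Ω := fun j =>
    {ω | (j+1) ≤ (Finset.filter (fun i => X i ω ∈ D j) (Finset.range n)).card} with hWdef
  set Mev : Set Ω := ⋂ i ∈ Finset.range n, X i ⁻¹' (Set.Ioi ζ) with hMevdef
  set Zev : Set Ω := ⋃ i ∈ Finset.range n, X i ⁻¹' (Set.Iic 0) with hZevdef
  -- the deterministic containment
  have hmain : {ω | ε ≤ |(1/(n:ℝ)) * ∑ j ∈ Finset.range n, q n 0 ω / (q n j ω)^3|}
      ⊆ ((⋃ j ∈ Finset.range n, W j) ∪ Mev) ∪ Zev := by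
    intro ω hω
    by_contra hnot
    simp only [Set.mem_union, not_or] at hnot
    obtain ⟨⟨hWno, hMno⟩, hZno⟩ := hnot
    have hXpos : ∀ i < n, 0 < X i ω := by
      intro i hi
      by_contra hle
      push_neg at hle
      apply hZno
      rw [hZevdef]
      simp only [mem_iUnion]
      exact ⟨i, Finset.mem_range.mpr hi, hle⟩
    obtain ⟨σ, hσ⟩ := hperm n ω
    have hqpos : ∀ j < n, 0 < q n j ω := by
      intro j hj
      rw [hσ ⟨j, hj⟩]
      exact hXpos _ (Fin.is_lt _)
    have hq0le : ∀ j < n, q n 0 ω ≤ q n j ω :=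
      fun j hj => hmono n ω (Set.mem_Iio.mpr hn0) (Set.mem_Iio.mpr hj) (Nat.zero_le j)
    have hq0ζ : q n 0 ω ≤ ζ := by
      have : ∃ i ∈ Finset.range n, X i ω ≤ ζ := by
        by_contra hcon
        push_neg at hcon
        apply hMno
        rw [hMevdef]
        simp only [mem_iInter, mem_preimage, mem_Ioi]
        exact fun i hi => hcon i hi
      obtain ⟨i, hi, hXiζ⟩ := this
      have hi' : i < n := Finset.mem_range.mp hi
      set jf : Fin n := σ.symm ⟨i, hi'⟩ with hjfdef
      have hqj : q n (jf : ℕ) ω = X i ω := by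
        have := hσ jf
        rw [this, hjfdef]
        simp
      calc q n 0 ω ≤ q n (jf : ℕ) ω := hq0le _ (Fin.is_lt _)
      _ = X i ω := hqj
      _ ≤ ζ := hXiζ
    have hii : ∀ j < n, q n j ω ≤ δ → c*((j:ℝ)+1) < 4*(n:ℝ)*η*(q n j ω)^2 := by
      intro j hj hqδ
      by_contra hlecon
      push_neg at hlecon
      apply hWno
      simp only [mem_iUnion]
      refine ⟨j, Finset.mem_range.mpr hj, ?_⟩
      rw [hWdef]
      simp only [mem_setOf_eq]
      -- the witness point
      set x : ℝ := 2 * q n j ω with hxdef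
      have hqj0 : 0 < q n j ω := hqpos j hj
      have hxgt : q n j ω < x := by rw [hxdef]; linarith
      have hx0 : 0 < x := lt_trans hqj0 hxgt
      have hxδ₁ : x ≤ δ₁ := by
        rw [hxdef, hδdef] at *
        linarith
      have hxb : μ (Set.Iio x) ≤ ENNReal.ofReal (tj j) := by
        have h1 : (μ (Set.Iio x)).toReal ≤ G x := by
          rw [hG]
          exact ENNReal.toReal_mono (hμfin _) (measure_mono Set.Iio_subset_Iic_self)
        have h2 : G x ≤ η * x^2 := hGbound x hx0 hxδ₁
        have h3 : η * x^2 ≤ tj j := by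
          rw [htjdef, le_div_iff₀ hnR]
          calc η * x^2 * (n:ℝ) = 4*(n:ℝ)*η*(q n j ω)^2 := by rw [hxdef]; ring
          _ ≤ c*((j:ℝ)+1) := hlecon
        calc μ (Set.Iio x) = ENNReal.ofReal ((μ (Set.Iio x)).toReal) :=
              (ENNReal.ofReal_toReal (hμfin _)).symm
        _ ≤ ENNReal.ofReal (tj j) := ENNReal.ofReal_le_ofReal (by linarith)
      -- injection of j+1 indices into the filter
      set f : ℕ → ℕ := fun i => if h : i < n then ((σ ⟨i, h⟩ : Fin n) : ℕ) else 0 with hfdef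
      have hmaps : ∀ i ∈ Finset.range (j+1),
          f i ∈ Finset.filter (fun i => X i ω ∈ D j) (Finset.range n) := by
        intro i hi
        have hij : i ≤ j := Nat.lt_succ_iff.mp (Finset.mem_range.mp hi)
        have hin : i < n := lt_of_le_of_lt hij hj
        rw [Finset.mem_filter]
        constructor
        · rw [hfdef]
          simp only [hin, dif_pos]
          exact Finset.mem_range.mpr (Fin.is_lt _)
        · have hXfi : X (f i) ω = q n i ω := by
            rw [hfdef]
            simp only [hin, dif_pos]
            exact (hσ ⟨i, hin⟩).symm
          rw [hXfi]
          rw [hDdef]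
          simp only [mem_setOf_eq]
          refine ⟨x, ?_, hxb⟩
          calc q n i ω ≤ q n j ω :=
                hmono n ω (Set.mem_Iio.mpr hin) (Set.mem_Iio.mpr hj) hij
          _ < x := hxgt
      have hinj : Set.InjOn f ↑(Finset.range (j+1)) := by
        intro a ha b hb hab
        have haj : a < n := lt_of_le_of_lt (Nat.lt_succ_iff.mp (by
          simpa using ha)) hj
        have hbj : b < n := lt_of_le_of_lt (Nat.lt_succ_iff.mp (by
          simpa using hb)) hj
        rw [hfdef] at hab
        simp only [haj, hbj, dif_pos] at hab
        have h6 := σ.injective (Fin.ext hab)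
        simpa using h6
      calc j + 1 = (Finset.range (j+1)).card := (Finset.card_range _).symm
      _ ≤ (Finset.filter (fun i => X i ω ∈ D j) (Finset.range n)).card :=
            Finset.card_le_card_of_injOn f hmaps hinj
    -- apply the deterministic bound
    have hdet : ∑ j ∈ Finset.range n, q n 0 ω/(q n j ω)^3 ≤ (n:ℝ)*(ζ/δ^3 + 20*η/c) :=
      det_bound n (fun j => q n j ω) c η δ ζ hc hη0 hδ0 hζ0 hζδ hn0
        hqpos hq0le hq0ζ hii
    have hsumnn : 0 ≤ ∑ j ∈ Finset.range n, q n 0 ω / (q n j ω)^3 := by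
      apply Finset.sum_nonneg
      intro j hj
      have := hqpos j (Finset.mem_range.mp hj)
      have := hqpos 0 hn0
      positivity
    have habs : |(1/(n:ℝ)) * ∑ j ∈ Finset.range n, q n 0 ω / (q n j ω)^3|
        = (1/(n:ℝ)) * ∑ j ∈ Finset.range n, q n 0 ω / (q n j ω)^3 := by
      exact abs_of_nonneg (mul_nonneg (by positivity) hsumnn)
    rw [Set.mem_setOf_eq, habs] at hω
    have hbound : (1/(n:ℝ)) * ∑ j ∈ Finset.range n, q n 0 ω / (q n j ω)^3
        ≤ ζ/δ^3 + 20*η/c := by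
      calc (1/(n:ℝ)) * ∑ j ∈ Finset.range n, q n 0 ω / (q n j ω)^3
          ≤ (1/(n:ℝ)) * ((n:ℝ)*(ζ/δ^3 + 20*η/c)) :=
            mul_le_mul_of_nonneg_left hdet (by positivity)
      _ = ζ/δ^3 + 20*η/c := by field_simp
    have hζε : ζ/δ^3 ≤ ε/4 := by
      have h1 : ζ ≤ ε*δ^3/4 := min_le_right _ _
      rw [div_le_div_iff₀ (by positivity) (by norm_num)]
      nlinarith [pow_pos hδ0 3]
    have hηε : 20*η/c = 2*ε/5 := by
      rw [hηdef]; field_simp; ring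
    rw [hηε] at hbound
    linarith
  -- measure bounds
  have hZ0 : ℙ Zev = 0 := by
    rw [hZevdef]
    apply (measure_biUnion_null_iff (Finset.countable_toSet _)).mpr
    intro i _
    rw [← Measure.map_apply (hXmeas i) measurableSet_Iic, hXlaw i]
    exact hpos
  have hM : ℙ Mev = r^n := by
    rw [hMevdef]
    rw [hXindep.meas_biInter (fun i _ => ⟨Set.Ioi ζ, measurableSet_Ioi, rfl⟩)]
    have : ∀ i ∈ Finset.range n, ℙ (X i ⁻¹' (Set.Ioi ζ)) = r := by
      intro i _
      rw [← Measure.map_apply (hXmeas i) measurableSet_Ioi, hXlaw i]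
    rw [Finset.prod_congr rfl this, Finset.prod_const, Finset.card_range]
  have hWsum : ℙ (⋃ j ∈ Finset.range n, W j) ≤ ENNReal.ofReal (θ'/4) := by
    calc ℙ (⋃ j ∈ Finset.range n, W j) ≤ ∑ j ∈ Finset.range n, ℙ (W j) :=
          measure_biUnion_finset_le _ _
    _ ≤ ∑ j ∈ Finset.range n, ENNReal.ofReal ((c*e1)^(j+1)) := by
        apply Finset.sum_le_sum
        intro j _
        have hWj : ℙ (W j) ≤ (n.choose (j+1)) * (ENNReal.ofReal (tj j))^(j+1) := by
          rw [hWdef]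
          apply count_event_le X hXindep (D j) (hDmeas j) n (j+1) (ENNReal.ofReal (tj j))
          intro i
          rw [← Measure.map_apply (hXmeas i) (hDmeas j), hXlaw i]
          exact meas_D_le μ _
        refine hWj.trans ?_
        rw [← ENNReal.ofReal_pow (htj0 j), ← ENNReal.ofReal_natCast,
          ← ENNReal.ofReal_mul (Nat.cast_nonneg _)]
        apply ENNReal.ofReal_le_ofReal
        -- real binomial bound
        set k : ℕ := j + 1 with hkdef
        have hk0 : (0:ℝ) < (k:ℝ) := by rw [hkdef]; push_cast; linarith [Nat.cast_nonneg (α := ℝ) j]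
        have hchoose : (n.choose k : ℝ) ≤ (n:ℝ)^k / (k.factorial : ℝ) :=
          Nat.choose_le_pow_div k n
        have htjeq : tj j = c * (k:ℝ) / (n:ℝ) := by
          rw [htjdef, hkdef]; push_cast; ring
        calc (n.choose k : ℝ) * (tj j)^k ≤ ((n:ℝ)^k / (k.factorial : ℝ)) * (tj j)^k := by
              apply mul_le_mul_of_nonneg_right hchoose
              exact pow_nonneg (htj0 j) k
        _ = (c*(k:ℝ))^k / (k.factorial : ℝ) := by
              have hnk : ((n:ℝ))^k ≠ 0 := by positivity
              rw [htjeq, div_pow]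
              field_simp
        _ = c^k * ((k:ℝ)^k / (k.factorial : ℝ)) := by rw [mul_pow]; ring
        _ ≤ c^k * e1^k := by
              apply mul_le_mul_of_nonneg_left _ (pow_nonneg hc.le k)
              rw [div_le_iff₀ (by positivity : (0:ℝ) < (k.factorial:ℝ))]
              calc (k:ℝ)^k ≤ (k.factorial : ℝ) * Real.exp 1 ^ k := pow_self_le_fact_exp k
              _ = e1^k * (k.factorial:ℝ) := by rw [he1def]; ring
        _ = (c*e1)^k := by rw [mul_pow]
    _ = ENNReal.ofReal (∑ j ∈ Finset.range n, (c*e1)^(j+1)) := by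
        rw [ENNReal.ofReal_sum_of_nonneg]
        intro j _
        positivity
    _ ≤ ENNReal.ofReal (θ'/4) := by
        apply ENNReal.ofReal_le_ofReal
        have hgeom : ∑ j ∈ Finset.range n, (c*e1)^(j+1) = (c*e1) * ∑ j ∈ Finset.range n, (c*e1)^j := by
          rw [Finset.mul_sum]
          apply Finset.sum_congr rfl
          intro j _
          rw [pow_succ]; ring
        rw [hgeom]
        have hs := geom_series_le (by positivity : (0:ℝ) ≤ c*e1) (by linarith : c*e1 < 1) n
        have h18 : 1/(1-(c*e1)) ≤ 2 := by
          rw [div_le_iff₀ (by linarith)]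
          linarith
        calc (c*e1) * ∑ j ∈ Finset.range n, (c*e1)^j ≤ (c*e1) * (1/(1-(c*e1))) := by
              apply mul_le_mul_of_nonneg_left hs (by positivity)
        _ ≤ (c*e1) * 2 := by
              apply mul_le_mul_of_nonneg_left h18 (by positivity)
        _ = θ'/4 := by rw [hce]; ring
  calc ℙ {ω | ε ≤ |(1/(n:ℝ)) * ∑ j ∈ Finset.range n, q n 0 ω / (q n j ω)^3|}
      ≤ ℙ (((⋃ j ∈ Finset.range n, W j) ∪ Mev) ∪ Zev) := measure_mono hmain
  _ ≤ ℙ ((⋃ j ∈ Finset.range n, W j) ∪ Mev) + ℙ Zev := measure_union_le _ _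
  _ = ℙ ((⋃ j ∈ Finset.range n, W j) ∪ Mev) := by rw [hZ0, add_zero]
  _ ≤ ℙ (⋃ j ∈ Finset.range n, W j) + ℙ Mev := measure_union_le _ _
  _ ≤ ENNReal.ofReal (θ'/4) + ENNReal.ofReal (θ'/2) := by
      apply add_le_add hWsum
      rw [hM]
      exact hrn
  _ = ENNReal.ofReal (θ'/4 + θ'/2) := (ENNReal.ofReal_add (by linarith) (by linarith)).symm
  _ ≤ ENNReal.ofReal θ' := ENNReal.ofReal_le_ofReal (by linarith)
  _ ≤ θ := hofθ'
end

section
/- Existence and uniqueness of the critical point u_n. Let α > 0 and let r_1 ≥ r_2 ≥ … ≥ r_n > 0 be real numbers with (α/n)∑_{j=1}^n r_j < 1. Then the equation (α/n)∑_{j=1}^n r_j/(1 + r_j u)² = 1/(u−1)² has exactly one solution u in the open interval (−r_1^{-1}, 0). -/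
open Finset Set

/-- Existence and uniqueness of the critical point `u_n`:
for `α > 0` and positive nonincreasing `r_1 ≥ r_2 ≥ … ≥ r_n > 0` with
`(α/n)∑ r_j < 1`, the equation `(α/n)∑ r_j/(1 + r_j u)² = 1/(u−1)²`
has exactly one solution in `(−r_1⁻¹, 0)`. -/
theorem critical_point_exists_unique
    (α : ℝ) (hα : 0 < α) (n : ℕ) (hn : 0 < n)
    (r : ℕ → ℝ) (hrpos : ∀ j < n, 0 < r j)
    (hrmono : ∀ i j : ℕ, i ≤ j → j < n → r j ≤ r i)
    (hsum : (α / n) * ∑ j ∈ Finset.range n, r j < 1) :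
    ∃! u : ℝ, u ∈ Set.Ioo (-(r 0)⁻¹) 0 ∧
      (α / n) * ∑ j ∈ Finset.range n, r j / (1 + r j * u) ^ 2 = 1 / (u - 1) ^ 2 := by
  have hr0 : 0 < r 0 := hrpos 0 hn
  have hn' : (0:ℝ) < n := Nat.cast_pos.mpr hn
  have hαn : 0 < α / n := div_pos hα hn'
  -- positivity of denominators on the (closure of the) interval
  have hden : ∀ u : ℝ, -(r 0)⁻¹ < u → u ≤ 0 → ∀ j < n, 0 < 1 + r j * u := by
    intro u hu1 hu2 j hj
    have hrj : r j ≤ r 0 := hrmono 0 j (Nat.zero_le j) hj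
    have h1 : r 0 * u ≤ r j * u := mul_le_mul_of_nonpos_right hrj hu2
    have h2 : -1 < r 0 * u := by
      have := (mul_lt_mul_iff_right₀ hr0).mpr hu1
      rwa [mul_neg, mul_inv_cancel₀ hr0.ne'] at this
    linarith
  set F : ℝ → ℝ := fun u =>
    (α / n) * ∑ j ∈ Finset.range n, r j / (1 + r j * u) ^ 2 - 1 / (u - 1) ^ 2 with hF
  -- strict antitonicity
  have hmono : ∀ u v : ℝ, -(r 0)⁻¹ < u → u < v → v ≤ 0 → F v < F u := by
    intro u v hu huv hv
    have hu0 : u ≤ 0 := by linarith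
    have hv1 : -(r 0)⁻¹ < v := by linarith
    have hL : ∑ j ∈ Finset.range n, r j / (1 + r j * v) ^ 2
        < ∑ j ∈ Finset.range n, r j / (1 + r j * u) ^ 2 := by
      apply Finset.sum_lt_sum_of_nonempty (nonempty_range_iff.mpr hn.ne')
      intro j hj
      rw [Finset.mem_range] at hj
      have hrj := hrpos j hj
      have ha := hden u hu hu0 j hj
      have hb := hden v hv1 hv j hj
      have hab : 1 + r j * u < 1 + r j * v := by nlinarith
      have hsq : (1 + r j * u) ^ 2 < (1 + r j * v) ^ 2 :=
        pow_lt_pow_left₀ hab ha.le (by norm_num)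
      exact div_lt_div_of_pos_left hrj (by positivity) hsq
    have hR : 1 / (u - 1) ^ 2 < 1 / (v - 1) ^ 2 := by
      have hpos : (0:ℝ) < (v - 1) ^ 2 := by nlinarith
      have hsq : (v - 1) ^ 2 < (u - 1) ^ 2 := by nlinarith
      exact one_div_lt_one_div_of_lt hpos hsq
    have := (mul_lt_mul_iff_right₀ hαn).mpr hL
    simp only [hF]
    linarith
  -- the left test point
  set t : ℝ := min 1 (Real.sqrt (α * r 0 / n)) / 2 with ht
  have hsqrt : 0 < Real.sqrt (α * r 0 / n) :=
    Real.sqrt_pos.mpr (by positivity)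
  have ht0 : 0 < t := by
    have := lt_min one_pos hsqrt
    positivity
  have ht1 : t < 1 := by
    have : min 1 (Real.sqrt (α * r 0 / n)) ≤ 1 := min_le_left _ _
    simp only [ht]; linarith
  have ht2 : t ^ 2 ≤ α * r 0 / n := by
    have h1 : t ≤ Real.sqrt (α * r 0 / n) := by
      have := min_le_right 1 (Real.sqrt (α * r 0 / n))
      simp only [ht]; linarith
    calc t ^ 2 ≤ (Real.sqrt (α * r 0 / n)) ^ 2 := by
          exact pow_le_pow_left₀ ht0.le h1 2
      _ = α * r 0 / n := Real.sq_sqrt (by positivity)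
  set u₁ : ℝ := (t - 1) / r 0 with hu₁def
  have hu₁mem : -(r 0)⁻¹ < u₁ ∧ u₁ < 0 := by
    constructor
    · show -(r 0)⁻¹ < (t - 1) / r 0
      rw [lt_div_iff₀ hr0, neg_mul, inv_mul_cancel₀ hr0.ne']
      linarith
    · show (t - 1) / r 0 < 0
      exact div_neg_of_neg_of_pos (by linarith) hr0
  have hkey : 1 + r 0 * u₁ = t := by
    rw [hu₁def]; field_simp; ring
  -- F u₁ > 0
  have hFu₁ : 0 < F u₁ := by
    have hLHS : 1 ≤ (α / n) * ∑ j ∈ Finset.range n, r j / (1 + r j * u₁) ^ 2 := by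
      have hterm : α * r 0 / n / t ^ 2 ≤ (α / n) * (r 0 / (1 + r 0 * u₁) ^ 2) := by
        rw [hkey]; ring_nf; rfl
      have hrest : ∀ j ∈ Finset.range n, 0 ≤ r j / (1 + r j * u₁) ^ 2 := by
        intro j hj
        rw [Finset.mem_range] at hj
        have := hden u₁ hu₁mem.1 hu₁mem.2.le j hj
        have := hrpos j hj
        positivity
      have h0mem : 0 ∈ Finset.range n := Finset.mem_range.mpr hn
      have hsum_ge : r 0 / (1 + r 0 * u₁) ^ 2
          ≤ ∑ j ∈ Finset.range n, r j / (1 + r j * u₁) ^ 2 :=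
        Finset.single_le_sum hrest h0mem
      have h1 : 1 ≤ α * r 0 / n / t ^ 2 := by
        rw [le_div_iff₀ (by positivity)]
        linarith
      calc (1:ℝ) ≤ α * r 0 / n / t ^ 2 := h1
        _ ≤ (α / n) * (r 0 / (1 + r 0 * u₁) ^ 2) := hterm
        _ ≤ (α / n) * ∑ j ∈ Finset.range n, r j / (1 + r j * u₁) ^ 2 := by
            apply mul_le_mul_of_nonneg_left hsum_ge hαn.le
    have hRHS : 1 / (u₁ - 1) ^ 2 < 1 := by
      rw [div_lt_one (by nlinarith [hu₁mem.2])]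
      nlinarith [hu₁mem.2]
    simp only [hF]
    linarith
  -- F 0 < 0
  have hF0 : F 0 < 0 := by
    have : ∑ j ∈ Finset.range n, r j / (1 + r j * 0) ^ 2 = ∑ j ∈ Finset.range n, r j := by
      apply Finset.sum_congr rfl
      intro j hj; norm_num
    simp only [hF, this]
    norm_num
    linarith
  -- continuity on [u₁, 0]
  have hcont : ContinuousOn F (Icc u₁ 0) := by
    apply ContinuousOn.sub
    · apply ContinuousOn.mul continuousOn_const
      apply continuousOn_finset_sum
      intro j hj
      rw [Finset.mem_range] at hj
      apply ContinuousOn.div continuousOn_const (by fun_prop)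
      intro x hx
      exact (pow_ne_zero 2 (hden x (lt_of_lt_of_le hu₁mem.1 hx.1) hx.2 j hj).ne')
    · apply ContinuousOn.div continuousOn_const (by fun_prop)
      intro x hx
      have hx2 : x ≤ 0 := hx.2
      have hlt : x - 1 < 0 := by linarith
      exact pow_ne_zero 2 (ne_of_lt hlt)
  -- IVT
  have hivt : (0:ℝ) ∈ F '' Icc u₁ 0 := by
    apply intermediate_value_Icc' hu₁mem.2.le hcont
    exact ⟨hF0.le, hFu₁.le⟩
  obtain ⟨c, hc, hFc⟩ := hivt
  have hc1 : u₁ < c := by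
    rcases eq_or_lt_of_le hc.1 with h | h
    · exfalso; rw [← h] at hFc; linarith
    · exact h
  have hc2 : c < 0 := by
    rcases eq_or_lt_of_le hc.2 with h | h
    · exfalso; rw [h] at hFc; linarith
    · exact h
  refine ⟨c, ⟨⟨lt_trans hu₁mem.1 hc1, hc2⟩, ?_⟩, ?_⟩
  · have : F c = 0 := hFc
    simp only [hF] at this
    linarith
  · rintro y ⟨⟨hy1, hy2⟩, hy3⟩
    have hFy : F y = 0 := by simp only [hF]; linarith
    by_contra hne
    rcases lt_or_gt_of_ne hne with h | h
    · have := hmono y c hy1 h hc2.le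
      rw [hFy, hFc] at this; exact lt_irrefl 0 this
    · have := hmono c y (lt_trans hu₁mem.1 hc1) h hy2.le
      rw [hFy, hFc] at this; exact lt_irrefl 0 this
end

section
/- Lemma 4.3. Assume P(p = 0) = 0. Fix 0 < r̄ < b/(1−b) and δ ∈ (0,1), and define σ_1'(z,c) = (α/n)∑_{j=2}^n r_j/(1 + r_j z) + 1/(z−1) + (c−1)/z for complex z. Then z·σ_1'(z,c) → c + α as n → ∞ and z → ∞ through the region {z : |arg(r̄^{-1} + z)| ≤ π(1−δ)}, uniformly in c ∈ (0,1): almost surely, for every ε > 0 there exist N and R such that for all n ≥ N, all c ∈ (0,1), and all z in the region with |z| ≥ R, |z·σ_1'(z,c) − (c + α)| < ε. -/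
open MeasureTheory ProbabilityTheory Filter Set Complex

/-- `r = p/(1-p)`. -/
noncomputable def rOf (p : ℝ) : ℝ := p / (1 - p)

/-- `σ₁'(z,c) = (α/n) ∑_{j=2}^n r_j/(1 + r_j z) + 1/(z−1) + (c−1)/z`
(indices `j ∈ {1, …, n-1}` in 0-based notation). -/
noncomputable def sigma1Deriv (α : ℝ) (n : ℕ) (r : ℕ → ℝ) (z : ℂ) (c : ℝ) : ℂ :=
  ((α : ℂ) / n) * ∑ j ∈ Finset.Ico 1 n, (r j : ℂ) / (1 + (r j : ℂ) * z)
    + 1 / (z - 1) + ((c : ℂ) - 1) / z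

lemma sector_bound (φ : ℝ) (hφπ : φ < Real.pi) (t : ℝ) (ht : 0 ≤ t)
    (w : ℂ) (hw : |Complex.arg w| ≤ φ) :
    Real.sin φ * t ≤ ‖t + w‖ ∧
      Real.sin φ * ‖w‖ ≤ ‖t + w‖ := by
  have hs1 : Real.sin φ ≤ 1 := Real.sin_le_one φ
  by_cases hw0 : w = 0
  · subst hw0
    simp only [norm_zero, mul_zero, add_zero, Complex.norm_real, Real.norm_eq_abs, _root_.abs_of_nonneg ht]
    exact ⟨by nlinarith, ht⟩
  · set a := ‖w‖ with ha
    have ha0 : 0 < a := norm_pos_iff.mpr hw0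
    have hcos : Real.cos φ * a ≤ w.re := by
      have h1 : Real.cos (Complex.arg w) = w.re / a := Complex.cos_arg hw0
      have h2 := Real.cos_le_cos_of_nonneg_of_le_pi (abs_nonneg (Complex.arg w)) hφπ.le hw
      rw [Real.cos_abs] at h2
      have h3 : w.re = Real.cos (Complex.arg w) * a := by
        rw [h1]; field_simp
      nlinarith
    have hsq : ‖(t:ℂ) + w‖ ^ 2 = (t + w.re)^2 + w.im^2 := by
      rw [Complex.sq_norm, Complex.normSq_apply]
      simp [Complex.add_re, Complex.add_im]
      ring
    have hasq : a^2 = w.re^2 + w.im^2 := by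
      rw [ha, Complex.sq_norm, Complex.normSq_apply]; ring
    have hpyth : Real.sin φ ^2 + Real.cos φ ^2 = 1 := Real.sin_sq_add_cos_sq φ
    have habs : (0:ℝ) ≤ ‖(t:ℂ) + w‖ := norm_nonneg _
    have hprod : 0 ≤ 2*t*(w.re - Real.cos φ * a) :=
      mul_nonneg (by linarith) (by linarith)
    constructor
    · refine le_of_pow_le_pow_left₀ two_ne_zero habs ?_
      rw [hsq]
      have hid : (t + w.re)^2 + w.im^2 - (Real.sin φ * t)^2 =
          (t*Real.cos φ + a)^2 + 2*t*(w.re - Real.cos φ * a)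
            + ((w.re^2 + w.im^2) - a^2) + (Real.sin φ^2 + Real.cos φ^2 - 1)*(-(t^2)) := by
        ring
      nlinarith [sq_nonneg (t*Real.cos φ + a)]
    · refine le_of_pow_le_pow_left₀ two_ne_zero habs ?_
      rw [hsq]
      have hid : (t + w.re)^2 + w.im^2 - (Real.sin φ * a)^2 =
          (a*Real.cos φ + t)^2 + 2*t*(w.re - Real.cos φ * a)
            + ((w.re^2 + w.im^2) - a^2) + (Real.sin φ^2 + Real.cos φ^2 - 1)*(-(a^2)) := by
        ring
      nlinarith [sq_nonneg (a*Real.cos φ + t)]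

lemma denom_bound (φ rbar : ℝ) (hφ0 : 0 < φ) (hφπ : φ < Real.pi) (hrbar : 0 < rbar)
    (z : ℂ) (harg : |Complex.arg ((rbar⁻¹ : ℝ) + z)| ≤ φ) (hz : 2/rbar ≤ ‖z‖)
    (r : ℝ) (hr : 0 ≤ r) (t₁ : ℝ) (ht₁ : 0 < t₁) (ht₁' : t₁ ≤ rbar/2) :
    ((1 : ℂ) + (r:ℂ)*z ≠ 0) ∧
    (r < t₁ → 1/‖1 + (r:ℂ)*z‖ ≤ 2/Real.sin φ) ∧
    (t₁ ≤ r → 1/‖1 + (r:ℂ)*z‖ ≤ (2/(Real.sin φ * t₁) + 2/rbar)/‖z‖) := by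
  have hs : 0 < Real.sin φ := Real.sin_pos_of_pos_of_lt_pi hφ0 hφπ
  have hz0 : 0 < ‖z‖ := lt_of_lt_of_le (by positivity) hz
  have hzr : (rbar⁻¹ : ℝ) ≤ ‖z‖ / 2 := by
    rw [inv_eq_one_div, div_le_div_iff₀ hrbar (by norm_num : (0:ℝ) < 2)]
    rw [div_le_iff₀ hrbar] at hz
    linarith
  have habsw : ‖(rbar⁻¹ : ℝ) + z‖ ≥ ‖z‖ / 2 := by
    have h1 : ‖z‖ - ‖((rbar⁻¹:ℝ):ℂ)‖ ≤ ‖((rbar⁻¹:ℝ):ℂ) + z‖ := by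
      have h := norm_add_le (((rbar⁻¹:ℝ):ℂ) + z) (-((rbar⁻¹:ℝ):ℂ))
      have e : ((rbar⁻¹:ℝ):ℂ) + z + -((rbar⁻¹:ℝ):ℂ) = z := by ring
      rw [e, norm_neg] at h
      linarith
    have h2 : ‖((rbar⁻¹:ℝ):ℂ)‖ = rbar⁻¹ := by
      rw [Complex.norm_real, Real.norm_eq_abs, _root_.abs_of_nonneg (by positivity)]
    rw [h2] at h1
    linarith
  have hcase1 : r ≤ rbar →
      Real.sin φ * (1 - r/rbar) ≤ ‖1 + (r:ℂ)*z‖ ∧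
      Real.sin φ * (r * ‖((rbar⁻¹:ℝ):ℂ) + z‖) ≤ ‖1 + (r:ℂ)*z‖ := by
    intro hrle
    have hdecomp : (1 : ℂ) + (r:ℂ)*z = ((1 - r/rbar : ℝ) : ℂ) + ((r:ℝ):ℂ) * (((rbar⁻¹:ℝ):ℂ) + z) := by
      push_cast
      have : (rbar:ℂ) ≠ 0 := by exact_mod_cast hrbar.ne'
      field_simp
      ring
    have hargw : |Complex.arg (((r:ℝ):ℂ) * (((rbar⁻¹:ℝ):ℂ) + z))| ≤ φ := by
      rcases eq_or_lt_of_le hr with h0 | h0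
      · simp [← h0, Complex.arg_zero, hφ0.le]
      · rw [Complex.arg_real_mul _ h0]
        exact harg
    have ht0 : 0 ≤ 1 - r/rbar := by
      rw [sub_nonneg, div_le_one hrbar]; exact hrle
    have := sector_bound φ hφπ (1 - r/rbar) ht0 _ hargw
    rw [← hdecomp] at this
    constructor
    · exact this.1
    · have habsmul : ‖((r:ℝ):ℂ) * (((rbar⁻¹:ℝ):ℂ) + z)‖
          = r * ‖((rbar⁻¹:ℝ):ℂ) + z‖ := by
        rw [norm_mul, Complex.norm_real, Real.norm_eq_abs, _root_.abs_of_nonneg hr]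
      rw [habsmul] at this
      exact this.2
  have hcase2 : rbar < r → rbar * ‖z‖ / 2 ≤ ‖1 + (r:ℂ)*z‖ := by
    intro hrgt
    have h1 : ‖(r:ℂ)*z‖ - 1 ≤ ‖1 + (r:ℂ)*z‖ := by
      have h := norm_add_le (1 + (r:ℂ)*z) (-1)
      have e : (1:ℂ) + (r:ℂ)*z + -1 = (r:ℂ)*z := by ring
      rw [e, norm_neg, norm_one] at h
      linarith
    have h2 : ‖(r:ℂ)*z‖ = r * ‖z‖ := by
      rw [norm_mul, Complex.norm_real, Real.norm_eq_abs, _root_.abs_of_nonneg hr]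
    have h3 : rbar * ‖z‖ ≤ r * ‖z‖ :=
      mul_le_mul_of_nonneg_right hrgt.le hz0.le
    have h4 : (1:ℝ) ≤ rbar * ‖z‖ / 2 := by
      rw [div_le_iff₀ hrbar] at hz
      nlinarith
    nlinarith [h1, h2]
  have hne : (1 : ℂ) + (r:ℂ)*z ≠ 0 := by
    rcases eq_or_lt_of_le hr with h0 | h0
    · rw [← h0]; simp
    · rcases le_or_gt r rbar with hrle | hrgt
      · have h := (hcase1 hrle).2
        have : 0 < Real.sin φ * (r * ‖((rbar⁻¹:ℝ):ℂ) + z‖) := by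
          apply mul_pos hs (mul_pos h0 (lt_of_lt_of_le (by positivity) habsw))
        intro hcontra
        rw [hcontra, norm_zero] at h
        nlinarith
      · have h := hcase2 hrgt
        intro hcontra
        rw [hcontra, norm_zero] at h
        nlinarith [mul_pos hrbar hz0]
  refine ⟨hne, ?_, ?_⟩
  · intro hrlt
    have h := (hcase1 (by linarith)).1
    have hlb : Real.sin φ / 2 ≤ ‖1 + (r:ℂ)*z‖ := by
      have : r/rbar ≤ 1/2 := by
        rw [div_le_div_iff₀ hrbar (by norm_num)]
        linarith
      nlinarith
    rw [div_le_div_iff₀ (lt_of_lt_of_le (by positivity) hlb) hs]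
    nlinarith
  · intro hrge
    rcases le_or_gt r rbar with hrle | hrgt
    · have h := (hcase1 hrle).2
      have hlb : Real.sin φ * t₁ * (‖z‖ / 2) ≤ ‖1 + (r:ℂ)*z‖ := by
        have h1 : Real.sin φ * t₁ * (‖z‖ / 2) ≤
            Real.sin φ * (r * ‖((rbar⁻¹:ℝ):ℂ) + z‖) := by
          have : t₁ * (‖z‖ / 2) ≤ r * ‖((rbar⁻¹:ℝ):ℂ) + z‖ := by
            calc t₁ * (‖z‖ / 2) ≤ r * (‖z‖ / 2) :=
                  mul_le_mul_of_nonneg_right hrge (by positivity)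
              _ ≤ r * ‖((rbar⁻¹:ℝ):ℂ) + z‖ :=
                  mul_le_mul_of_nonneg_left habsw hr
          nlinarith [this, hs]
        linarith
      have hpos : 0 < Real.sin φ * t₁ * (‖z‖ / 2) := by positivity
      have h2 : 1/‖1 + (r:ℂ)*z‖ ≤ 1/(Real.sin φ * t₁ * (‖z‖ / 2)) :=
        one_div_le_one_div_of_le hpos hlb
      calc 1/‖1 + (r:ℂ)*z‖ ≤ 1/(Real.sin φ * t₁ * (‖z‖ / 2)) := h2
        _ = (2/(Real.sin φ * t₁))/‖z‖ := by
            field_simp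
        _ ≤ (2/(Real.sin φ * t₁) + 2/rbar)/‖z‖ := by
            gcongr
            try exact le_add_of_nonneg_right (by positivity)
    · have h := hcase2 hrgt
      have hpos : 0 < rbar * ‖z‖ / 2 := by positivity
      have h2 : 1/‖1 + (r:ℂ)*z‖ ≤ 1/(rbar * ‖z‖ / 2) :=
        one_div_le_one_div_of_le hpos h
      calc 1/‖1 + (r:ℂ)*z‖ ≤ 1/(rbar * ‖z‖ / 2) := h2
        _ = (2/rbar)/‖z‖ := by field_simp
        _ ≤ (2/(Real.sin φ * t₁) + 2/rbar)/‖z‖ := by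
            gcongr
            try exact le_add_of_nonneg_left (by positivity)

lemma sigma_identity (α : ℝ) (n : ℕ) (hn : 1 ≤ n) (r : ℕ → ℝ) (z : ℂ) (c : ℝ)
    (hz0 : z ≠ 0) (hz1 : z - 1 ≠ 0)
    (hden : ∀ j ∈ Finset.Ico 1 n, (1:ℂ) + (r j : ℂ) * z ≠ 0) :
    z * sigma1Deriv α n r z c - ((c:ℂ) + α) =
      -(((α:ℂ)/n) * ∑ j ∈ Finset.Ico 1 n, 1/(1 + (r j :ℂ)*z)) - (α:ℂ)/n + 1/(z-1) := by
  have hns : (n:ℂ) ≠ 0 := by exact_mod_cast Nat.pos_of_ne_zero (by omega) |>.ne'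
  have hS : z * (((α:ℂ)/n) * ∑ j ∈ Finset.Ico 1 n, (r j : ℂ) / (1 + (r j : ℂ) * z))
      = ((α:ℂ)/n) * (((n:ℂ) - 1) - ∑ j ∈ Finset.Ico 1 n, 1/(1 + (r j :ℂ)*z)) := by
    rw [mul_left_comm, Finset.mul_sum]
    congr 1
    have hcongr : ∀ j ∈ Finset.Ico 1 n,
        z * ((r j : ℂ) / (1 + (r j : ℂ) * z)) = 1 - 1/(1 + (r j :ℂ)*z) := by
      intro j hj
      rw [eq_sub_iff_add_eq, mul_div_assoc', ← add_div, div_eq_one_iff_eq (hden j hj)]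
      ring
    rw [Finset.sum_congr rfl hcongr, Finset.sum_sub_distrib, Finset.sum_const,
      Nat.card_Ico, nsmul_eq_mul, mul_one]
    congr 1
    push_cast [Nat.cast_sub hn]
    ring
  unfold sigma1Deriv
  rw [mul_add, mul_add, hS]
  have h2 : z * (1/(z-1)) = 1 + 1/(z-1) := by
    field_simp
    ring
  have h3 : z * (((c:ℂ) - 1) / z) = (c:ℂ) - 1 := by
    field_simp
  rw [h2, h3]
  field_simp
  simp only [mul_comm z]
  ring

lemma perm_sum (n : ℕ) (g : ℝ → ℝ) (pv Pv : ℕ → ℝ) (σ : Equiv.Perm (Fin n))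
    (h : ∀ j : Fin n, pv (j : ℕ) = Pv ((σ j : Fin n) : ℕ)) :
    ∑ j ∈ Finset.range n, g (pv j) = ∑ i ∈ Finset.range n, g (Pv i) := by
  rw [← Fin.sum_univ_eq_sum_range (fun j => g (pv j)) n,
    ← Fin.sum_univ_eq_sum_range (fun i => g (Pv i)) n]
  rw [Finset.sum_congr rfl (fun j _ => by rw [h j])]
  exact Equiv.sum_comp σ (fun i => g (Pv (i : ℕ)))

lemma aux_div (A εv x : ℝ) (hε : 0 < εv) (hx : 0 < x) (h : 8*A/εv + 1 ≤ x) :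
    A/x ≤ εv/8 := by
  have h1 : 8*A/εv ≤ x - 1 := by linarith
  rw [div_le_iff₀ hε] at h1
  rw [div_le_div_iff₀ hx (by norm_num : (0:ℝ) < 8)]
  nlinarith

set_option maxHeartbeats 1000000 in
lemma rOf_mono {u p : ℝ} (hu0 : 0 ≤ u) (hu1 : u < 1) (hp1 : p < 1) (hup : u ≤ p) :
    rOf u ≤ rOf p := by
  unfold rOf
  rw [div_le_div_iff₀ (by linarith) (by linarith)]
  nlinarith

set_option maxHeartbeats 2000000 in
/-- Lemma 4.3: assume `P(p = 0) = 0`; fix `0 < r̄ < b/(1−b)` and `δ ∈ (0,1)`.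
Then `z σ₁'(z,c) → c + α` as `n → ∞` and `z → ∞` through the region
`{z : |arg(r̄⁻¹ + z)| ≤ π(1−δ)}`, uniformly in `c ∈ (0,1)`: almost surely,
for every `ε > 0` there are `N` and `R` such that for all `n ≥ N`, all
`c ∈ (0,1)` and all `z` in the region with `|z| ≥ R`,
`|z σ₁'(z,c) − (c + α)| < ε`. -/
theorem z_sigma_deriv_uniform_limit
    {Ω : Type*} [MeasureSpace Ω] [IsProbabilityMeasure (ℙ : Measure Ω)]
    (b : ℝ) (hb : b ∈ Set.Ioo (0:ℝ) 1)
    (μF : Measure ℝ) [IsProbabilityMeasure μF]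
    (hsupp : μF (Set.Icc 0 b) = 1)
    (hbmin : ∀ b' < b, μF (Set.Iic b') < 1)
    (hzero : μF {0} = 0)
    (α : ℝ) (hα : 0 < α)
    -- i.i.d. samples from F
    (P : ℕ → Ω → ℝ)
    (hPmeas : ∀ i, Measurable (P i))
    (hPindep : iIndepFun P ℙ)
    (hPlaw : ∀ i, Measure.map (P i) ℙ = μF)
    -- pord n j : decreasing order statistics of P 0, …, P (n-1)
    (pord : ℕ → ℕ → Ω → ℝ)
    (hperm : ∀ n ω, ∃ σ : Equiv.Perm (Fin n), ∀ j : Fin n, pord n (j : ℕ) ω = P ((σ j : Fin n) : ℕ) ω)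
    (hanti : ∀ n ω, AntitoneOn (fun j => pord n j ω) (Set.Iio n))
    (rbar : ℝ) (hrbar : 0 < rbar) (hrbar' : rbar < b / (1 - b))
    (δ : ℝ) (hδ : δ ∈ Set.Ioo (0:ℝ) 1) :
    ∀ᵐ ω ∂ℙ, ∀ ε > (0:ℝ), ∃ N : ℕ, ∃ R : ℝ, ∀ n ≥ N, ∀ c ∈ Set.Ioo (0:ℝ) 1, ∀ z : ℂ,
      |Complex.arg ((rbar⁻¹ : ℝ) + z)| ≤ Real.pi * (1 - δ) → R ≤ ‖z‖ →
      ‖z * sigma1Deriv α n (fun j => rOf (pord n j ω)) z c - ((c : ℂ) + α)‖ < ε := by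
  obtain ⟨hb0, hb1⟩ := hb
  obtain ⟨hδ0, hδ1⟩ := hδ
  -- the indicator functions
  set u : ℕ → ℝ := fun k => 1/(k+1 : ℝ) with hu
  have hupos : ∀ k : ℕ, 0 < u k := fun k => by positivity
  set f : ℕ → ℝ → ℝ := fun k => (Set.Iic (u k)).indicator (fun _ => (1:ℝ)) with hf
  have hfmeas : ∀ k, Measurable (f k) :=
    fun k => measurable_const.indicator measurableSet_Iic
  have hfnonneg : ∀ k x, 0 ≤ f k x := by
    intro k x
    simp only [hf, Set.indicator]
    split <;> norm_num
  have hfone : ∀ k x, x ≤ u k → f k x = 1 := by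
    intro k x hx
    simp only [hf, Set.indicator, Set.mem_Iic]
    rw [if_pos hx]
  -- SLLN events
  have hX : ∀ k i, (fun ω => f k (P i ω)) = (P i ⁻¹' Set.Iic (u k)).indicator (fun _ => (1:ℝ)) := by
    intro k i
    ext ω
    simp only [hf, Set.indicator_apply, Set.mem_preimage]
    rfl
  have hSLLN : ∀ k : ℕ, ∀ᵐ ω ∂ℙ,
      Filter.Tendsto (fun n : ℕ => (∑ i ∈ Finset.range n, f k (P i ω)) / n) Filter.atTop
        (nhds ((μF (Set.Iic (u k))).toReal)) := by
    intro k
    have hint : Integrable (fun ω => f k (P 0 ω)) ℙ := by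
      rw [hX k 0]
      exact (integrable_const (1:ℝ)).indicator ((hPmeas 0) measurableSet_Iic)
    have hindep : Pairwise (Function.onFun (IndepFun · · ℙ) (fun i ω => f k (P i ω))) := by
      intro i j hij
      exact (hPindep.indepFun hij).comp (hfmeas k) (hfmeas k)
    have hident : ∀ i, IdentDistrib (fun ω => f k (P i ω)) (fun ω => f k (P 0 ω)) ℙ ℙ := by
      intro i
      have hid : IdentDistrib (P i) (P 0) ℙ ℙ :=
        ⟨(hPmeas i).aemeasurable, (hPmeas 0).aemeasurable, by rw [hPlaw i, hPlaw 0]⟩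
      exact hid.comp (hfmeas k)
    have h := strong_law_ae_real (fun i ω => f k (P i ω)) hint hindep hident
    have hEeq : (ℙ[fun ω => f k (P 0 ω)]) = (μF (Set.Iic (u k))).toReal := by
      rw [hX k 0, integral_indicator_const (1:ℝ) ((hPmeas 0) measurableSet_Iic),
        smul_eq_mul, mul_one, ← hPlaw 0,
        Measure.map_apply (hPmeas 0) measurableSet_Iic]
      rfl
    rw [hEeq] at h
    exact h
  -- a.s. all samples are in [0, b]
  have hrange : ∀ᵐ ω ∂ℙ, ∀ i, P i ω ∈ Set.Icc 0 b := by
    rw [MeasureTheory.ae_all_iff]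
    intro i
    have : ℙ {ω | P i ω ∈ Set.Icc 0 b}ᶜ = 0 := by
      have h1 : {ω | P i ω ∈ Set.Icc 0 b}ᶜ = P i ⁻¹' (Set.Icc 0 b)ᶜ := by
        ext ω; simp [Set.mem_preimage]
      rw [h1, ← Measure.map_apply (hPmeas i) (measurableSet_Icc.compl), hPlaw i,
        measure_compl measurableSet_Icc (measure_ne_top _ _), hsupp, measure_univ]
      simp
    rw [MeasureTheory.ae_iff]
    exact this
  have hSLLNall : ∀ᵐ ω ∂ℙ, ∀ k : ℕ,
      Filter.Tendsto (fun n : ℕ => (∑ i ∈ Finset.range n, f k (P i ω)) / n) Filter.atTop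
        (nhds ((μF (Set.Iic (u k))).toReal)) := by
    rw [MeasureTheory.ae_all_iff]
    exact hSLLN
  filter_upwards [hrange, hSLLNall] with ω hω hSL
  -- fixed good ω
  intro ε hε
  set φ : ℝ := Real.pi * (1 - δ) with hφ
  have hφ0 : 0 < φ := by
    have := Real.pi_pos
    apply mul_pos this (by linarith)
  have hφπ : φ < Real.pi := by
    have := Real.pi_pos
    nlinarith
  set s : ℝ := Real.sin φ with hsdef
  have hs : 0 < s := Real.sin_pos_of_pos_of_lt_pi hφ0 hφπ
  have hs1 : s ≤ 1 := Real.sin_le_one φ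
  set ε₂ : ℝ := ε * s / (16 * α) with hε₂
  have hε₂pos : 0 < ε₂ := by positivity
  -- choose k
  have hmeas0 : Tendsto (fun k : ℕ => μF (Set.Iic (u k))) atTop (nhds 0) := by
    have hInter : (⋂ k : ℕ, Set.Iic (u k)) = Set.Iic 0 := by
      ext x
      simp only [Set.mem_iInter, Set.mem_Iic]
      constructor
      · intro h
        by_contra hx
        push_neg at hx
        obtain ⟨k, hk⟩ := exists_nat_one_div_lt hx
        exact absurd (h k) (by rw [hu]; push_cast; simp only [not_le]; exact hk)
      · intro h k
        exact le_trans h (hupos k).le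
    have hzero' : μF (Set.Iic 0) = 0 := by
      have h1 : Set.Iic (0:ℝ) ⊆ (Set.Icc 0 b)ᶜ ∪ {0} := by
        intro x hx
        rcases eq_or_lt_of_le (Set.mem_Iic.mp hx) with h | h
        · right; simp [h]
        · left; simp [Set.mem_Icc]; intro h'; linarith
      have h2 : μF ((Set.Icc 0 b)ᶜ) = 0 := by
        rw [measure_compl measurableSet_Icc (measure_ne_top _ _), hsupp, measure_univ]
        simp
      refine le_antisymm ?_ zero_le
      calc μF (Set.Iic 0) ≤ μF ((Set.Icc 0 b)ᶜ ∪ {0}) := measure_mono h1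
        _ ≤ μF ((Set.Icc 0 b)ᶜ) + μF {0} := measure_union_le _ _
        _ = 0 := by rw [h2, hzero, add_zero]
    have h := tendsto_measure_iInter_atTop (μ := μF) (s := fun k => Set.Iic (u k))
      (fun k => measurableSet_Iic.nullMeasurableSet)
      (fun i j hij => Set.Iic_subset_Iic.mpr (by
        rw [hu]
        apply div_le_div_of_nonneg_left (by norm_num) (by positivity)
        push_cast
        linarith [(Nat.cast_le (α := ℝ)).mpr hij]))
      ⟨0, measure_ne_top _ _⟩
    rw [hInter, hzero'] at h
    exact h
  have hev1 : ∀ᶠ k : ℕ in atTop, (μF (Set.Iic (u k))).toReal < ε₂ := by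
    have h := hmeas0.eventually_lt_const (ENNReal.ofReal_pos.mpr hε₂pos)
    filter_upwards [h] with k hk
    exact ENNReal.toReal_lt_of_lt_ofReal hk
  have hev2 : ∀ᶠ k : ℕ in atTop, u k ≤ rbar/4 ∧ u k ≤ 1/2 := by
    have h : Tendsto u atTop (nhds 0) := tendsto_one_div_add_atTop_nhds_zero_nat
    have h1 := h.eventually_le_const (show (0:ℝ) < rbar/4 by positivity)
    have h2 := h.eventually_le_const (show (0:ℝ) < 1/2 by norm_num)
    filter_upwards [h1, h2] with k hk1 hk2
    exact ⟨hk1, hk2⟩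
  obtain ⟨k, hk1, hk2, hk3⟩ := (hev1.and hev2).exists
  set t₁ : ℝ := rOf (u k) with ht₁def
  have hu1 : u k < 1 := by linarith
  have ht₁pos : 0 < t₁ := by
    rw [ht₁def]
    unfold rOf
    apply div_pos (hupos k)
    linarith
  have ht₁le : t₁ ≤ rbar/2 := by
    rw [ht₁def]
    unfold rOf
    rw [div_le_iff₀ (by linarith)]
    nlinarith [hupos k]
  set C₁ : ℝ := 2/(s * t₁) + 2/rbar with hC₁
  have hC₁pos : 0 < C₁ := by positivity
  -- choose N
  obtain ⟨N₂, hN₂⟩ := exists_nat_gt (8*α/ε)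
  have hN₂pos : 0 < N₂ := by
    rcases Nat.eq_zero_or_pos N₂ with h | h
    · exfalso
      rw [h] at hN₂
      have hp : (0:ℝ) < 8*α/ε := by positivity
      simp only [Nat.cast_zero] at hN₂
      linarith
    · exact h
  obtain ⟨N₁, hN₁⟩ := (Filter.eventually_atTop.mp
    ((hSL k).eventually_lt_const hk1))
  refine ⟨max N₁ N₂, max 2 (max (2/rbar) (max (1 + 8/ε) (8*(α*C₁)/ε + 1))), ?_⟩
  intro n hn c hc z harg hR
  have hn1 : 1 ≤ n := le_trans hN₂pos (le_trans (le_max_right N₁ N₂) hn)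
  have hnpos : (0:ℝ) < n := by exact_mod_cast hn1
  have hz2 : (2:ℝ) ≤ ‖z‖ := le_trans (le_max_left _ _) hR
  have hzrbar : 2/rbar ≤ ‖z‖ :=
    le_trans (le_trans (le_max_left _ _) (le_max_right _ _)) hR
  have hzeps : 1 + 8/ε ≤ ‖z‖ :=
    le_trans (le_trans (le_trans (le_max_left _ _) (le_max_right _ _)) (le_max_right _ _)) hR
  have hzC : 8*(α*C₁)/ε + 1 ≤ ‖z‖ :=
    le_trans (le_trans (le_trans (le_max_right _ _) (le_max_right _ _)) (le_max_right _ _)) hR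
  have hzabs : 0 < ‖z‖ := by linarith
  have hz0 : z ≠ 0 := by
    intro h; rw [h, norm_zero] at hzabs; exact lt_irrefl _ hzabs
  have hz1 : z - 1 ≠ 0 := by
    intro h
    have : z = 1 := by linear_combination h
    rw [this, norm_one] at hz2
    linarith
  -- order statistics are in [0, b]
  obtain ⟨σ, hσ⟩ := hperm n ω
  have hpord : ∀ j, j < n → pord n j ω ∈ Set.Icc 0 b := by
    intro j hj
    have := hσ ⟨j, hj⟩
    simp only [Fin.val_mk] at this
    rw [this]
    exact hω _
  set r : ℕ → ℝ := fun j => rOf (pord n j ω) with hr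
  have hrnonneg : ∀ j ∈ Finset.Ico 1 n, 0 ≤ r j := by
    intro j hj
    obtain ⟨hp0, hpb⟩ := hpord j (Finset.mem_Ico.mp hj).2
    rw [hr]
    unfold rOf
    apply div_nonneg hp0
    linarith
  have hdb : ∀ j ∈ Finset.Ico 1 n,
      ((1 : ℂ) + (r j:ℂ)*z ≠ 0) ∧
      (r j < t₁ → 1/‖1 + (r j:ℂ)*z‖ ≤ 2/s) ∧
      (t₁ ≤ r j → 1/‖1 + (r j:ℂ)*z‖ ≤ C₁/‖z‖) := by
    intro j hj
    exact denom_bound φ rbar hφ0 hφπ hrbar z harg hzrbar (r j) (hrnonneg j hj) t₁ ht₁pos ht₁le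
  -- the identity
  have hid := sigma_identity α n hn1 r z c hz0 hz1 (fun j hj => (hdb j hj).1)
  rw [hid]
  -- per-term bound
  have hterm : ∀ j ∈ Finset.Ico 1 n,
      1/‖1 + (r j:ℂ)*z‖ ≤ (2/s) * f k (pord n j ω) + C₁/‖z‖ := by
    intro j hj
    rcases lt_or_ge (r j) t₁ with hlt | hge
    · have h1 := ((hdb j hj).2).1 hlt
      have h2 : pord n j ω ≤ u k := by
        by_contra hcon
        push_neg at hcon
        have hp1 : pord n j ω < 1 := by
          have := (hpord j (Finset.mem_Ico.mp hj).2).2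
          linarith
        have := rOf_mono (hupos k).le hu1 hp1 hcon.le
        rw [hr] at hlt
        simp only at hlt
        linarith [this, hlt]
      rw [hfone k _ h2]
      have : (0:ℝ) ≤ C₁/‖z‖ := by positivity
      linarith
    · have h1 := ((hdb j hj).2).2 hge
      have h2 : (0:ℝ) ≤ (2/s) * f k (pord n j ω) :=
        mul_nonneg (by positivity) (hfnonneg k _)
      linarith
  -- sum bound
  have hsum : ∑ j ∈ Finset.Ico 1 n, 1/‖1 + (r j:ℂ)*z‖
      ≤ (2/s) * (∑ i ∈ Finset.range n, f k (P i ω)) + n * (C₁/‖z‖) := by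
    calc ∑ j ∈ Finset.Ico 1 n, 1/‖1 + (r j:ℂ)*z‖
        ≤ ∑ j ∈ Finset.Ico 1 n, ((2/s) * f k (pord n j ω) + C₁/‖z‖) :=
          Finset.sum_le_sum hterm
      _ = (∑ j ∈ Finset.Ico 1 n, (2/s) * f k (pord n j ω)) + (n-1) * (C₁/‖z‖) := by
          rw [Finset.sum_add_distrib, Finset.sum_const, Nat.card_Ico, nsmul_eq_mul]
          congr 2
          push_cast [Nat.cast_sub hn1]
          ring
      _ ≤ (∑ j ∈ Finset.range n, (2/s) * f k (pord n j ω)) + n * (C₁/‖z‖) := by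
          apply add_le_add
          · apply Finset.sum_le_sum_of_subset_of_nonneg
            · intro x hx
              simp only [Finset.mem_Ico] at hx
              exact Finset.mem_range.mpr hx.2
            · intro i _ _
              exact mul_nonneg (by positivity) (hfnonneg k _)
          · apply mul_le_mul_of_nonneg_right _ (by positivity)
            push_cast
            linarith
      _ = (2/s) * (∑ i ∈ Finset.range n, f k (P i ω)) + n * (C₁/‖z‖) := by
          congr 1
          rw [Finset.mul_sum]
          exact perm_sum n (fun x => (2/s) * f k x) (fun j => pord n j ω) (fun i => P i ω) σ hσ
  -- SLLN bound at n
  have hSn : (∑ i ∈ Finset.range n, f k (P i ω)) < ε₂ * n := by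
    have h := hN₁ n (le_trans (le_max_left N₁ N₂) hn)
    rw [div_lt_iff₀ hnpos] at h
    exact h
  -- put everything together
  have habs1 : ‖-(((α:ℂ)/n) * ∑ j ∈ Finset.Ico 1 n, 1/(1 + (r j :ℂ)*z))
      - (α:ℂ)/n + 1/(z-1)‖
      ≤ (α/n) * (∑ j ∈ Finset.Ico 1 n, 1/‖1 + (r j:ℂ)*z‖) + α/n
        + 1/(‖z‖ - 1) := by
    have hT : ‖∑ j ∈ Finset.Ico 1 n, 1/(1 + (r j :ℂ)*z)‖
        ≤ ∑ j ∈ Finset.Ico 1 n, 1/‖1 + (r j:ℂ)*z‖ := by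
      refine le_trans (norm_sum_le _ _) ?_
      apply Finset.sum_le_sum
      intro j hj
      rw [norm_div, norm_one]
    have han : ‖(α:ℂ)/n‖ = α/n := by
      rw [norm_div, Complex.norm_real, Real.norm_eq_abs, Complex.norm_natCast, _root_.abs_of_nonneg hα.le]
    have hz1abs : ‖z‖ - 1 ≤ ‖z - 1‖ := by
      have h := norm_add_le (z - 1) 1
      simp only [sub_add_cancel, norm_one] at h
      linarith
    have hz1pos : 0 < ‖z‖ - 1 := by linarith
    calc ‖-(((α:ℂ)/n) * ∑ j ∈ Finset.Ico 1 n, 1/(1 + (r j :ℂ)*z))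
          - (α:ℂ)/n + 1/(z-1)‖
        ≤ ‖-(((α:ℂ)/n) * ∑ j ∈ Finset.Ico 1 n, 1/(1 + (r j :ℂ)*z))
          - (α:ℂ)/n‖ + ‖1/(z-1)‖ := norm_add_le _ _
      _ ≤ ‖-(((α:ℂ)/n) * ∑ j ∈ Finset.Ico 1 n, 1/(1 + (r j :ℂ)*z))‖
          + ‖(α:ℂ)/n‖ + ‖1/(z-1)‖ := by
          have := norm_sub_le (-(((α:ℂ)/n) * ∑ j ∈ Finset.Ico 1 n, 1/(1 + (r j :ℂ)*z))) ((α:ℂ)/n)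
          linarith
      _ ≤ (α/n) * (∑ j ∈ Finset.Ico 1 n, 1/‖1 + (r j:ℂ)*z‖) + α/n
          + 1/(‖z‖ - 1) := by
          apply add_le_add (add_le_add ?_ ?_) ?_
          · rw [norm_neg, norm_mul, han]
            exact mul_le_mul_of_nonneg_left hT (by positivity)
          · rw [han]
          · rw [norm_div, norm_one]
            exact one_div_le_one_div_of_le hz1pos hz1abs
  refine lt_of_le_of_lt habs1 ?_
  -- final numeric estimate
  have hb1' : (α/n) * (∑ j ∈ Finset.Ico 1 n, 1/‖1 + (r j:ℂ)*z‖)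
      ≤ (α/n) * ((2/s) * (ε₂ * n) + n * (C₁/‖z‖)) := by
    apply mul_le_mul_of_nonneg_left _ (by positivity)
    refine le_trans hsum ?_
    apply add_le_add_left
    apply mul_le_mul_of_nonneg_left hSn.le (by positivity)
  have heq1 : (α/n) * ((2/s) * (ε₂ * n) + n * (C₁/‖z‖))
      = 2*α*ε₂/s + α*C₁/‖z‖ := by
    field_simp
  have hb2 : 2*α*ε₂/s = ε/8 := by
    rw [hε₂]
    field_simp
    ring
  have hb3 : α*C₁/‖z‖ ≤ ε/8 := aux_div (α*C₁) ε (‖z‖) hε hzabs hzC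
  have hb4 : α/n ≤ ε/8 := by
    have h1 : (N₂:ℝ) ≤ n := by
      exact_mod_cast le_trans (le_max_right N₁ N₂) hn
    have h2 : 8*α/ε < N₂ := hN₂
    rw [div_lt_iff₀ hε] at h2
    rw [div_le_div_iff₀ hnpos (by norm_num : (0:ℝ) < 8)]
    nlinarith
  have hb5 : 1/(‖z‖ - 1) ≤ ε/8 := by
    have h1 : 8/ε ≤ ‖z‖ - 1 := by linarith
    have h2 : 0 < (8:ℝ)/ε := by positivity
    rw [div_le_div_iff₀ (by linarith) (by norm_num : (0:ℝ) < 8)]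
    rw [div_le_iff₀ hε] at h1
    nlinarith
  calc (α/n) * (∑ j ∈ Finset.Ico 1 n, 1/‖1 + (r j:ℂ)*z‖) + α/n
      + 1/(‖z‖ - 1)
      ≤ (2*α*ε₂/s + α*C₁/‖z‖) + α/n + 1/(‖z‖ - 1) := by
        rw [← heq1]
        linarith [hb1']
    _ ≤ ε/8 + ε/8 + ε/8 + ε/8 := by
        rw [hb2]
        linarith [hb3, hb4, hb5]
    _ < ε := by linarith
end
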